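/- arXiv:1807.05893 — 5 statements merged into one kernel-verified Lean document; each statement's English description precedes it below -/
import Mathlib

section
/- For all integers a ≥ 1, c ≥ 0 and j ≥ 0, the graph G^4_{a,c,j} has a+c+j+4 vertices and its matching number equals 2 + ⌊(j+1)/2⌋. -/
open SimpleGraph Finset

/-- The Wiener index of a graph: the sum of distances over all unordered pairs
of distinct vertices (computed as half the sum over ordered pairs). -/
noncomputable def wienerIndex {V : Type*} [Fintype V] (G : SimpleGraph V) : ℕ :=
  (∑ u : V, ∑ v : V, G.dist u v) / 2

/-- The matching number of a graph: maximum number of edges of a matching. -/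
noncomputable def matchingNumber {V : Type*} [Fintype V] (G : SimpleGraph V) : ℕ :=
  sSup {k : ℕ | ∃ M : G.Subgraph, M.IsMatching ∧ M.edgeSet.ncard = k}

/-- A graph is unicyclic if it is connected and has as many edges as vertices. -/
def IsUnicyclic {V : Type*} [Fintype V] (G : SimpleGraph V) : Prop :=
  G.Connected ∧ G.edgeSet.ncard = Fintype.card V

/-- `G3Graph a j` : a triangle on vertices `0,1,2`, a path with `j` edges attached to
vertex `2` (vertices `2,3,…,j+2`), and `a` pendant vertices attached to vertex `j+2`. -/
def G3Graph (a j : ℕ) : SimpleGraph (Fin (a + j + 3)) :=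
  SimpleGraph.fromRel (fun u v =>
    (u.val = 0 ∧ v.val = 1) ∨ (u.val = 0 ∧ v.val = 2) ∨ (u.val = 1 ∧ v.val = 2) ∨
    (2 ≤ u.val ∧ u.val ≤ j + 1 ∧ v.val = u.val + 1) ∨
    (u.val = j + 2 ∧ j + 3 ≤ v.val))

/-- `G3Graph4 a b c j` : a triangle on vertices `0,1,2`, a path with `j` edges attached to
vertex `2` ending in a star with `a` leaves, `b` pendant vertices attached to vertex `0`,
and `c` pendant vertices attached to vertex `1`. -/
def G3Graph4 (a b c j : ℕ) : SimpleGraph (Fin (a + b + c + j + 3)) :=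
  SimpleGraph.fromRel (fun u v =>
    (u.val = 0 ∧ v.val = 1) ∨ (u.val = 0 ∧ v.val = 2) ∨ (u.val = 1 ∧ v.val = 2) ∨
    (2 ≤ u.val ∧ u.val ≤ j + 1 ∧ v.val = u.val + 1) ∨
    (u.val = j + 2 ∧ j + 3 ≤ v.val ∧ v.val < j + 3 + a) ∨
    (u.val = 0 ∧ j + 3 + a ≤ v.val ∧ v.val < j + 3 + a + b) ∨
    (u.val = 1 ∧ j + 3 + a + b ≤ v.val))

/-- `G4Graph a c j` : a 4-cycle on vertices `0,1,2,3`, a path with `j` edges attached to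
vertex `3` (vertices `3,4,…,j+3`), `a` pendant vertices attached to the far endpoint `j+3`
of the path, and `c` pendant vertices attached to vertex `1` (opposite to `3`). -/
def G4Graph (a c j : ℕ) : SimpleGraph (Fin (a + c + j + 4)) :=
  SimpleGraph.fromRel (fun u v =>
    (u.val = 0 ∧ v.val = 1) ∨ (u.val = 1 ∧ v.val = 2) ∨ (u.val = 2 ∧ v.val = 3) ∨
    (u.val = 0 ∧ v.val = 3) ∨
    (3 ≤ u.val ∧ u.val ≤ j + 2 ∧ v.val = u.val + 1) ∨
    (u.val = j + 3 ∧ j + 4 ≤ v.val ∧ v.val < j + 4 + a) ∨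
    (u.val = 1 ∧ j + 4 + a ≤ v.val))

/-!
The matching number is pinned down by a matching and a vertex cover of equal size, since every
edge of a matching contains a cover vertex and distinct matching edges are disjoint.  Here the
matching pairs `2i` with `2i + 1` for `i < 2 + ⌈j/2⌉`: two edges of the 4-cycle, then every
other path edge; for odd `j` the last pair joins `j + 3` to a pendant vertex, which needs
`a ≥ 1`.  The cover consists of the vertices `1` and `3` and every other path vertex counted down
from `j + 3`.
-/

namespace SimpleGraph

variable {V : Type*} {G : SimpleGraph V}

theorem Subgraph.IsMatching.ncard_edgeSet_le_ncard [Finite V] {M : G.Subgraph}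
    (hM : M.IsMatching) {C : Set V} (hC : G.IsVertexCover C) : M.edgeSet.ncard ≤ C.ncard := by
  classical
  let partner (v : V) : V := if h : ∃ w, M.Adj v w then h.choose else v
  have partner_eq {v w : V} (hvw : M.Adj v w) : partner v = w := by
    have hv : ∃ w, M.Adj v w := ⟨w, hvw⟩
    simpa only [partner, dif_pos hv] using hM.eq_of_adj_left hv.choose_spec hvw
  have hsub : M.edgeSet ⊆ (fun v ↦ s(v, partner v)) '' C := by
    intro e he
    induction e using Sym2.ind with
    | _ v w =>
      rcases hC (M.adj_sub he) with hv | hw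
      · exact ⟨v, hv, by simp only [partner_eq he]⟩
      · exact ⟨w, hw, by simp only [partner_eq he.symm, Sym2.eq_swap]⟩
  exact (Set.ncard_le_ncard hsub).trans (Set.ncard_image_le C.toFinite)

theorem exists_isMatching_ncard_edgeSet_eq {ι : Type*} [Finite ι] (u w : ι → V)
    (hadj : ∀ i, G.Adj (u i) (w i))
    (hdisj : Pairwise fun i i' ↦ Disjoint ({u i, w i} : Set V) {u i', w i'}) :
    ∃ M : G.Subgraph, M.IsMatching ∧ M.edgeSet.ncard = Nat.card ι := by
  refine ⟨⨆ i, G.subgraphOfAdj (hadj i),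
    Subgraph.IsMatching.iSup (fun i ↦ .subgraphOfAdj _) (by simpa using hdisj), ?_⟩
  have hinj : Function.Injective fun i ↦ s(u i, w i) := by
    intro i i' h
    by_contra hne
    have hu : u i ∈ ({u i', w i'} : Set V) := by
      rcases Sym2.eq_iff.mp h with ⟨h, -⟩ | ⟨h, -⟩ <;> simp [h]
    exact Set.disjoint_left.mp (hdisj hne) (by simp) hu
  rw [← Set.ncard_range_of_injective hinj, Subgraph.edgeSet_iSup, Set.range_eq_iUnion]
  simp only [edgeSet_subgraphOfAdj]

theorem matchingNumber_eq_of_isVertexCover [Fintype V] {M : G.Subgraph} {C : Set V} {k : ℕ}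
    (hM : M.IsMatching) (hMk : M.edgeSet.ncard = k) (hC : G.IsVertexCover C)
    (hCk : C.ncard ≤ k) : matchingNumber G = k := by
  have hbdd : ∀ n ∈ {n : ℕ | ∃ M : G.Subgraph, M.IsMatching ∧ M.edgeSet.ncard = n}, n ≤ k := by
    rintro _ ⟨M', hM', rfl⟩
    exact (hM'.ncard_edgeSet_le_ncard hC).trans hCk
  exact le_antisymm (csSup_le ⟨k, M, hM, hMk⟩ hbdd) (le_csSup ⟨k, hbdd⟩ ⟨M, hM, hMk⟩)

end SimpleGraph

namespace G4Graph

variable {a c j : ℕ}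

theorem adj_two_mul (ha : 1 ≤ a) {i : ℕ} (hi : i < 2 + (j + 1) / 2) :
    (G4Graph a c j).Adj ⟨2 * i, by omega⟩ ⟨2 * i + 1, by omega⟩ := by
  simp only [G4Graph, fromRel_adj, ne_eq, Fin.ext_iff, and_true]
  omega

theorem exists_isMatching (ha : 1 ≤ a) :
    ∃ M : (G4Graph a c j).Subgraph, M.IsMatching ∧ M.edgeSet.ncard = 2 + (j + 1) / 2 := by
  have h := exists_isMatching_ncard_edgeSet_eq (G := G4Graph a c j)
    (fun i : Fin (2 + (j + 1) / 2) ↦ ⟨2 * i, by omega⟩) (fun i ↦ ⟨2 * i + 1, by omega⟩)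
    (fun i ↦ adj_two_mul ha i.isLt) ?_
  · simpa using h
  intro i i' hne
  simp only [Set.disjoint_insert_left, Set.disjoint_insert_right, Set.disjoint_singleton,
    Set.mem_insert_iff, Set.mem_singleton_iff, ne_eq, Fin.ext_iff] at hne ⊢
  omega

def cover (a c j : ℕ) : Set (Fin (a + c + j + 4)) :=
  {x | x.val = 1 ∨ x.val = 3 ∨ (4 ≤ x.val ∧ x.val ≤ j + 3 ∧ (j + 3 - x.val) % 2 = 0)}

theorem isVertexCover_cover : (G4Graph a c j).IsVertexCover (cover a c j) := by
  intro u v huv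
  rw [G4Graph, fromRel_adj] at huv
  simp only [cover, Set.mem_ofPred_eq]
  omega

theorem ncard_cover_le : (cover a c j).ncard ≤ 2 + (j + 1) / 2 := by
  let index (x : Fin (a + c + j + 4)) : ℕ :=
    if x.val = 1 then 0 else if x.val = 3 then 1 else (j + 3 - x.val) / 2 + 2
  calc (cover a c j).ncard ≤ (↑(Finset.range (2 + (j + 1) / 2)) : Set ℕ).ncard := by
        refine Set.ncard_le_ncard_of_injOn index ?_ ?_
        · intro x hx
          simp only [cover, Set.mem_ofPred_eq] at hx
          simp only [index, Finset.coe_range, Set.mem_Iio]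
          split_ifs <;> omega
        · intro x hx y hy hxy
          simp only [cover, Set.mem_ofPred_eq] at hx hy
          simp only [index] at hxy
          apply Fin.ext
          split_ifs at hxy <;> omega
    _ = 2 + (j + 1) / 2 := by rw [Set.ncard_coe_finset, Finset.card_range]

end G4Graph

theorem stmt9 (a c j : ℕ) (ha : 1 ≤ a) :
    Fintype.card (Fin (a + c + j + 4)) = a + c + j + 4 ∧
    matchingNumber (G4Graph a c j) = 2 + (j + 1) / 2 := by
  obtain ⟨M, hM, hcard⟩ := G4Graph.exists_isMatching (c := c) ha
  exact ⟨Fintype.card_fin _, matchingNumber_eq_of_isVertexCover hM hcard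
    G4Graph.isVertexCover_cover G4Graph.ncard_cover_le⟩
end

section
/- Let m ≥ 3 and let n ≥ 2m+2 be even. Then W(G^4_{n/2−m, n/2−m, 2m−4}) − W(G^4_{n/2−m+1, n/2−m, 2m−5}) = (1/4)(n−2m)(n+2m−4), and this quantity is strictly positive. -/
open SimpleGraph Finset

-- auxiliary development
set_option maxHeartbeats 1600000
set_option maxHeartbeats 1600000

def cD (x y : ℕ) : ℕ :=
  if x = y then 0
  else if x = 0 then (if y = 1 then 1 else if y = 2 then 2 else y - 2)
  else if y = 0 then (if x = 1 then 1 else if x = 2 then 2 else x - 2)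
  else if x = 1 then y - 1
  else if y = 1 then x - 1
  else if x ≤ y then y - x else x - y

def rr (a j x : ℕ) : ℕ := if x ≤ j+3 then x else if x < j+4+a then j+3 else 1
def eps (j x : ℕ) : ℕ := if x ≤ j+3 then 0 else 1
def fd (a j x y : ℕ) : ℕ :=
  if x = y then 0 else cD (rr a j x) (rr a j y) + eps j x + eps j y

lemma cD_self (x : ℕ) : cD x x = 0 := by unfold cD; simp

lemma cD_symm (x y : ℕ) : cD x y = cD y x := by
  unfold cD; split_ifs <;> first | omega | simp_all

lemma cD_eq_zero {x y : ℕ} : cD x y = 0 ↔ x = y := by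
  unfold cD; split_ifs <;> first | omega | simp_all

lemma fd_self (a j x : ℕ) : fd a j x x = 0 := by unfold fd; simp

lemma fd_symm (a j x y : ℕ) : fd a j x y = fd a j y x := by
  unfold fd; rw [cD_symm]; split_ifs <;> omega

lemma fd_core {a j x y : ℕ} (hx : x ≤ j+3) (hy : y ≤ j+3) : fd a j x y = cD x y := by
  unfold fd rr eps
  rcases eq_or_ne x y with h | h
  · simp [h, cD_self]
  · simp [h, hx, hy]

lemma fd_eq_zero {a j x y : ℕ} (h : fd a j x y = 0) : x = y := by
  unfold fd rr eps at h
  split_ifs at h <;>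
    first
    | assumption
    | omega
    | (exact cD_eq_zero.1 (by omega))

/-- distance from an A-leaf: one more than from its hub `j+3` -/
lemma fd_leafA {a j x z : ℕ} (h1 : j+4 ≤ x) (h2 : x < j+4+a) (h3 : x ≠ z) :
    fd a j x z = 1 + fd a j (j+3) z := by
  unfold fd rr eps
  split_ifs <;> (try subst_vars) <;> (try simp only [cD_self]) <;> omega

/-- distance from a C-leaf: one more than from its hub `1` -/
lemma fd_leafC {a j x z : ℕ} (h1 : j+4+a ≤ x) (h3 : x ≠ z) :
    fd a j x z = 1 + fd a j 1 z := by
  unfold fd rr eps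
  split_ifs <;> (try subst_vars) <;> (try simp only [cD_self]) <;> omega

lemma fd_coreleafA {a j x z : ℕ} (hx : x ≤ j+3) (h1 : j+4 ≤ z) (h2 : z < j+4+a) :
    fd a j x z = cD x (j+3) + 1 := by
  unfold fd rr eps
  split_ifs <;> (try subst_vars) <;> (try simp only [cD_self]) <;>
    first | contradiction | omega

lemma fd_coreleafC {a j x z : ℕ} (hx : x ≤ j+3) (h1 : j+4+a ≤ z) :
    fd a j x z = cD x 1 + 1 := by
  unfold fd rr eps
  split_ifs <;> (try subst_vars) <;> (try simp only [cD_self]) <;>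
    first | contradiction | omega

def CoreAdj (j x y : ℕ) : Prop :=
  (x = 0 ∧ y = 1) ∨ (x = 1 ∧ y = 2) ∨ (x = 2 ∧ y = 3) ∨ (x = 0 ∧ y = 3) ∨
  (3 ≤ x ∧ x ≤ j + 2 ∧ y = x + 1)

def GRel (a j : ℕ) (x y : ℕ) : Prop :=
  (x = 0 ∧ y = 1) ∨ (x = 1 ∧ y = 2) ∨ (x = 2 ∧ y = 3) ∨ (x = 0 ∧ y = 3) ∨
  (3 ≤ x ∧ x ≤ j + 2 ∧ y = x + 1) ∨
  (x = j + 3 ∧ j + 4 ≤ y ∧ y < j + 4 + a) ∨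
  (x = 1 ∧ j + 4 + a ≤ y)

lemma relOfCore {a j x y : ℕ} (h : CoreAdj j x y) : GRel a j x y := by
  unfold CoreAdj at h; unfold GRel; tauto

lemma coreAdj_le {j x y : ℕ} (h : CoreAdj j x y) : x ≤ j + 3 ∧ y ≤ j + 3 ∧ x ≠ y := by
  unfold CoreAdj at h; omega

lemma coreStep {j x y : ℕ} (h : CoreAdj j x y) (z : ℕ) :
    cD x z ≤ cD y z + 1 ∧ cD y z ≤ cD x z + 1 := by
  unfold CoreAdj at h
  unfold cD
  split_ifs <;> first | contradiction | omega

lemma coreB {j x w : ℕ} (hne : x ≠ w) (hx : x ≤ j + 3) (hw : w ≤ j + 3) :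
    ∃ y, y ≤ j + 3 ∧ x ≠ y ∧ (CoreAdj j x y ∨ CoreAdj j y x) ∧ cD y w + 1 = cD x w := by
  rcases Nat.lt_or_ge x 4 with h4 | h4
  · rcases Nat.lt_or_ge w 4 with hw4 | hw4
    · interval_cases x <;> interval_cases w <;>
        first
          | exact absurd rfl hne
          | exact ⟨0, by omega, by omega, Or.inr (by unfold CoreAdj; omega), by decide⟩
          | exact ⟨1, by omega, by omega, Or.inl (by unfold CoreAdj; omega), by decide⟩
          | exact ⟨1, by omega, by omega, Or.inr (by unfold CoreAdj; omega), by decide⟩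
          | exact ⟨2, by omega, by omega, Or.inl (by unfold CoreAdj; omega), by decide⟩
          | exact ⟨2, by omega, by omega, Or.inr (by unfold CoreAdj; omega), by decide⟩
          | exact ⟨3, by omega, by omega, Or.inl (by unfold CoreAdj; omega), by decide⟩
    · rcases (by omega : x = 0 ∨ x = 1 ∨ x = 2 ∨ x = 3) with hx0 | hx0 | hx0 | hx0 <;>
        subst hx0
      · exact ⟨3, by omega, by omega, Or.inl (by unfold CoreAdj; omega),
          by unfold cD; split_ifs <;> first | contradiction | omega⟩
      · exact ⟨2, by omega, by omega, Or.inl (by unfold CoreAdj; omega),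
          by unfold cD; split_ifs <;> first | contradiction | omega⟩
      · exact ⟨3, by omega, by omega, Or.inl (by unfold CoreAdj; omega),
          by unfold cD; split_ifs <;> first | contradiction | omega⟩
      · exact ⟨4, by omega, by omega, Or.inl (by unfold CoreAdj; omega),
          by unfold cD; split_ifs <;> first | contradiction | omega⟩
  · rcases Nat.lt_or_ge w x with hlt | hge
    · exact ⟨x - 1, by omega, by omega, Or.inr (by unfold CoreAdj; omega),
        by unfold cD; split_ifs <;> first | contradiction | omega⟩
    · exact ⟨x + 1, by omega, by omega, Or.inl (by unfold CoreAdj; omega),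
        by unfold cD; split_ifs <;> first | contradiction | omega⟩

lemma stepA {a j x y : ℕ} (h : GRel a j x y) (z : ℕ) :
    fd a j x z ≤ fd a j y z + 1 ∧ fd a j y z ≤ fd a j x z + 1 := by
  have hcore : CoreAdj j x y ∨ (x = j + 3 ∧ j + 4 ≤ y ∧ y < j + 4 + a) ∨
      (x = 1 ∧ j + 4 + a ≤ y) := by unfold GRel at h; unfold CoreAdj; tauto
  rcases hcore with hca | ⟨hx, hy1, hy2⟩ | ⟨hx, hy1⟩
  · obtain ⟨hx, hy, -⟩ := coreAdj_le hca
    rcases (by omega : z ≤ j + 3 ∨ (j + 4 ≤ z ∧ z < j + 4 + a) ∨ j + 4 + a ≤ z)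
      with hz | ⟨hz1, hz2⟩ | hz
    · rw [fd_core hx hz, fd_core hy hz]; exact coreStep hca z
    · rw [fd_coreleafA hx hz1 hz2, fd_coreleafA hy hz1 hz2]
      have := coreStep hca (j + 3); omega
    · rw [fd_coreleafC hx hz, fd_coreleafC hy hz]
      have := coreStep hca 1; omega
  · -- x = j+3, y an A-leaf
    rcases eq_or_ne z y with rfl | hzy
    · have h1 : fd a j x z = 1 := by
        subst hx; rw [fd_coreleafA (le_refl _) hy1 hy2, cD_self]
      rw [fd_self]; omega
    · have h1 : fd a j y z = 1 + fd a j x z := by subst hx; exact fd_leafA hy1 hy2 (by omega)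
      omega
  · -- x = 1, y a C-leaf
    rcases eq_or_ne z y with rfl | hzy
    · have h1 : fd a j x z = 1 := by
        subst hx; rw [fd_coreleafC (by omega) hy1, cD_self]
      rw [fd_self]; omega
    · have h1 : fd a j y z = 1 + fd a j x z := by subst hx; exact fd_leafC hy1 (by omega)
      omega

lemma stepB {a c j x z : ℕ} (hne : x ≠ z) (hz : z < a+c+j+4) :
    ∃ y, y < a+c+j+4 ∧ x ≠ y ∧ (GRel a j x y ∨ GRel a j y x) ∧
      fd a j y z + 1 = fd a j x z := by
  rcases (by omega : x ≤ j + 3 ∨ (j + 4 ≤ x ∧ x < j + 4 + a) ∨ j + 4 + a ≤ x)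
    with hx | ⟨hx1, hx2⟩ | hx
  · rcases (by omega : z ≤ j + 3 ∨ (j + 4 ≤ z ∧ z < j + 4 + a) ∨ j + 4 + a ≤ z)
      with hzc | ⟨hz1, hz2⟩ | hzc
    · obtain ⟨y, hy1, hy2, hy3, hy4⟩ := coreB hne hx hzc
      exact ⟨y, by omega, hy2,
        by rcases hy3 with h | h; exacts [Or.inl (relOfCore h), Or.inr (relOfCore h)],
        by rw [fd_core hy1 hzc, fd_core hx hzc]; exact hy4⟩
    · rcases eq_or_ne x (j+3) with rfl | hxj
      · exact ⟨z, hz, hne, Or.inl (by unfold GRel; omega),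
          by rw [fd_self, fd_coreleafA (by omega) hz1 hz2, cD_self]⟩
      · obtain ⟨y, hy1, hy2, hy3, hy4⟩ := coreB hxj hx (by omega)
        exact ⟨y, by omega, hy2,
          by rcases hy3 with h | h; exacts [Or.inl (relOfCore h), Or.inr (relOfCore h)],
          by rw [fd_coreleafA hy1 hz1 hz2, fd_coreleafA hx hz1 hz2]; omega⟩
    · rcases eq_or_ne x 1 with rfl | hx1
      · exact ⟨z, hz, hne, Or.inl (by unfold GRel; omega),
          by rw [fd_self, fd_coreleafC (by omega) hzc, cD_self]⟩
      · obtain ⟨y, hy1, hy2, hy3, hy4⟩ := coreB hx1 hx (by omega)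
        exact ⟨y, by omega, hy2,
          by rcases hy3 with h | h; exacts [Or.inl (relOfCore h), Or.inr (relOfCore h)],
          by rw [fd_coreleafC hy1 hzc, fd_coreleafC hx hzc]; omega⟩
  · exact ⟨j + 3, by omega, by omega, Or.inr (by unfold GRel; omega),
      by rw [fd_leafA hx1 hx2 hne]; omega⟩
  · exact ⟨1, by omega, by omega, Or.inr (by unfold GRel; omega),
      by rw [fd_leafC hx hne]; omega⟩



lemma g4_adj {a c j : ℕ} (u v : Fin (a+c+j+4)) :
    (G4Graph a c j).Adj u v ↔ u ≠ v ∧ (GRel a j u.val v.val ∨ GRel a j v.val u.val) := by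
  unfold G4Graph GRel
  rw [SimpleGraph.fromRel_adj]

lemma walk_le_fd {a c j : ℕ} :
    ∀ (k : ℕ) (u v : Fin (a+c+j+4)), fd a j u.val v.val = k →
      ∃ p : (G4Graph a c j).Walk u v, p.length ≤ k := by
  intro k
  induction k with
  | zero =>
    intro u v h
    have huv : u = v := Fin.ext (fd_eq_zero h)
    subst huv
    exact ⟨SimpleGraph.Walk.nil, by simp⟩
  | succ k ih =>
    intro u v h
    have hne : u.val ≠ v.val := by
      intro he
      rw [Fin.ext he, fd_self] at h
      omega
    obtain ⟨y, hyN, hxy, hrel, hstep⟩ := stepB hne v.isLt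
    have hadj : (G4Graph a c j).Adj u ⟨y, hyN⟩ :=
      (g4_adj u ⟨y, hyN⟩).2 ⟨fun hh => hxy (congrArg Fin.val hh), hrel⟩
    obtain ⟨p, hp⟩ := ih ⟨y, hyN⟩ v (show fd a j y v.val = k by omega)
    exact ⟨SimpleGraph.Walk.cons hadj p, by simp [SimpleGraph.Walk.length_cons]; omega⟩

lemma fd_le_walk {a c j : ℕ} (u v : Fin (a+c+j+4)) (p : (G4Graph a c j).Walk u v) :
    fd a j u.val v.val ≤ p.length := by
  induction p with
  | nil => rw [fd_self]; omega
  | @cons x y z hadj q ih =>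
    rw [SimpleGraph.Walk.length_cons]
    obtain ⟨hne, hrel | hrel⟩ := (g4_adj _ _).1 hadj
    · have := (stepA hrel z.val).1
      omega
    · have := (stepA hrel z.val).2
      omega

theorem dist_eq_fd {a c j : ℕ} (u v : Fin (a+c+j+4)) :
    (G4Graph a c j).dist u v = fd a j u.val v.val := by
  obtain ⟨p, hp⟩ := walk_le_fd (fd a j u.val v.val) u v rfl
  have h1 : (G4Graph a c j).dist u v ≤ fd a j u.val v.val :=
    le_trans (SimpleGraph.dist_le p) hp
  have hr : (G4Graph a c j).Reachable u v := ⟨p⟩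
  obtain ⟨q, hq⟩ := hr.exists_walk_length_eq_dist
  have h2 : fd a j u.val v.val ≤ (G4Graph a c j).dist u v := hq ▸ fd_le_walk u v q
  omega

/-! ### Summation -/

def g1 (j : ℕ) : ℕ := ∑ x ∈ Finset.range (j+4), cD x 1
def g2 (j : ℕ) : ℕ := ∑ x ∈ Finset.range (j+4), cD x (j+3)
def T0 (j : ℕ) : ℕ := ∑ x ∈ Finset.range (j+4), ∑ y ∈ Finset.range (j+4), cD x y

lemma cD_cons1 (j : ℕ) : cD (j+4) 1 = j + 3 := by
  unfold cD; split_ifs <;> first | contradiction | omega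

lemma cD_shift {j x : ℕ} (hx : x ≤ j + 3) : cD x (j+4) = cD x (j+3) + 1 := by
  unfold cD; split_ifs <;> first | contradiction | omega

lemma g1_succ (j : ℕ) : g1 (j+1) = g1 j + (j+3) := by
  unfold g1
  rw [show j+1+4 = (j+4)+1 from rfl, Finset.sum_range_succ, cD_cons1]

lemma two_g1 (j : ℕ) : 2 * g1 j = (j+2)*(j+3) + 2 := by
  induction j with
  | zero => decide
  | succ j ih => rw [g1_succ]; ring_nf; ring_nf at ih; omega

lemma sum_shift (j : ℕ) : ∑ x ∈ Finset.range (j+4), cD x (j+4) = g2 j + (j+4) := by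
  have : ∀ x ∈ Finset.range (j+4), cD x (j+4) = cD x (j+3) + 1 := by
    intro x hx
    exact cD_shift (by have := Finset.mem_range.1 hx; omega)
  rw [Finset.sum_congr rfl this, Finset.sum_add_distrib, Finset.sum_const, Finset.card_range,
    smul_eq_mul, mul_one]
  unfold g2; omega

lemma g2_succ (j : ℕ) : g2 (j+1) = g2 j + (j+4) := by
  unfold g2
  rw [show j+1+4 = (j+4)+1 from rfl, show j+1+3 = j+4 from rfl, Finset.sum_range_succ,
    cD_self]
  have := sum_shift j
  unfold g2 at this
  omega

lemma two_g2 (j : ℕ) : 2 * g2 j = (j+1)*(j+2) + 4*j + 6 := by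
  induction j with
  | zero => decide
  | succ j ih => rw [g2_succ]; ring_nf; ring_nf at ih; omega

lemma T0_succ (j : ℕ) : T0 (j+1) = T0 j + 2*(g2 j + (j+4)) := by
  have hsplit : T0 (j+1)
      = (∑ x ∈ Finset.range (j+4), ∑ y ∈ Finset.range (j+4+1), cD x y)
        + ∑ y ∈ Finset.range (j+4+1), cD (j+4) y := by
    unfold T0
    rw [show j+1+4 = (j+4)+1 from rfl, Finset.sum_range_succ]
  have hrow : ∑ y ∈ Finset.range (j+4+1), cD (j+4) y = g2 j + (j+4) := by
    rw [Finset.sum_range_succ, cD_self]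
    have h : ∀ y ∈ Finset.range (j+4), cD (j+4) y = cD y (j+4) := fun y _ => cD_symm _ _
    rw [Finset.sum_congr rfl h, sum_shift]
    omega
  have hmain : (∑ x ∈ Finset.range (j+4), ∑ y ∈ Finset.range (j+4+1), cD x y)
      = T0 j + (g2 j + (j+4)) := by
    have h1 : ∀ x ∈ Finset.range (j+4),
        ∑ y ∈ Finset.range (j+4+1), cD x y
          = (∑ y ∈ Finset.range (j+4), cD x y) + cD x (j+4) :=
      fun x _ => Finset.sum_range_succ _ _
    rw [Finset.sum_congr rfl h1, Finset.sum_add_distrib, sum_shift]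
    unfold T0
    omega
  omega

lemma six_T0 (j : ℕ) : 6 * T0 j = 2*j^3 + 24*j^2 + 70*j + 96 := by
  induction j with
  | zero => decide
  | succ j ih =>
    have h1 := T0_succ j
    have h2 := two_g2 j
    zify at h1 h2 ih ⊢
    linear_combination 6*h1 + ih + 6*h2

lemma even_T0 (j : ℕ) : Even (T0 j) := by
  induction j with
  | zero => decide
  | succ j ih =>
    rw [T0_succ]
    exact ih.add (even_two_mul _)

lemma cD_j31 (j : ℕ) : cD (j+3) 1 = j + 2 := by
  unfold cD; split_ifs <;> first | contradiction | omega

lemma sumg2' (j : ℕ) : ∑ y ∈ Finset.range (j+4), (cD y (j+3) + 1) = g2 j + (j+4) := by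
  rw [Finset.sum_add_distrib, Finset.sum_const, Finset.card_range, smul_eq_mul, mul_one]
  rfl

lemma sumg1' (j : ℕ) : ∑ y ∈ Finset.range (j+4), (cD y 1 + 1) = g1 j + (j+4) := by
  rw [Finset.sum_add_distrib, Finset.sum_const, Finset.card_range, smul_eq_mul, mul_one]
  rfl

lemma split3 (p q r : ℕ) (f : ℕ → ℕ) :
    ∑ x ∈ Finset.range (p+q+r), f x
      = (∑ x ∈ Finset.range p, f x) + (∑ i ∈ Finset.range q, f (p+i))
        + ∑ i ∈ Finset.range r, f (p+q+i) := by
  rw [Finset.sum_range_add, Finset.sum_range_add]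

lemma offdiag_sum (n : ℕ) (F : ℕ → ℕ → ℕ) (h0 : ∀ i, i < n → F i i = 0)
    (h2 : ∀ i k, i < n → k < n → i ≠ k → F i k = 2) :
    (∑ i ∈ Finset.range n, ∑ k ∈ Finset.range n, F i k) + 2*n = 2*(n*n) := by
  induction n with
  | zero => simp
  | succ n ih =>
    have hrow : ∀ i ∈ Finset.range n, F i n = 2 := fun i hi =>
      h2 i n (by have := Finset.mem_range.1 hi; omega) (by omega)
        (by have := Finset.mem_range.1 hi; omega)
    have hcol : ∀ k ∈ Finset.range n, F n k = 2 := fun k hk =>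
      h2 n k (by omega) (by have := Finset.mem_range.1 hk; omega)
        (by have := Finset.mem_range.1 hk; omega)
    have hstep : (∑ i ∈ Finset.range (n+1), ∑ k ∈ Finset.range (n+1), F i k)
        = (∑ i ∈ Finset.range n, ∑ k ∈ Finset.range n, F i k) + 2*n + 2*n := by
      rw [Finset.sum_range_succ]
      have h1 : ∀ i ∈ Finset.range n,
          ∑ k ∈ Finset.range (n+1), F i k = (∑ k ∈ Finset.range n, F i k) + F i n :=
        fun i _ => Finset.sum_range_succ _ _
      rw [Finset.sum_congr rfl h1, Finset.sum_add_distrib, Finset.sum_congr rfl hrow,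
        Finset.sum_range_succ, Finset.sum_congr rfl hcol, Finset.sum_const,
        h0 n (by omega)]
      simp only [Finset.card_range, smul_eq_mul]
      omega
    have ihh := ih (fun i hi => h0 i (by omega)) (fun i k hi hk hne => h2 i k (by omega) (by omega) hne)
    rw [hstep]
    zify at ihh ⊢
    linear_combination ihh


lemma split_outer (p q r : ℕ) (f : ℕ → ℕ → ℕ) :
    (∑ x ∈ Finset.range (p+q+r), ∑ y ∈ Finset.range (p+q+r), f x y)
      = (∑ x ∈ Finset.range p, ∑ y ∈ Finset.range p, f x y)
        + (∑ x ∈ Finset.range p, ∑ i ∈ Finset.range q, f x (p+i))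
        + (∑ x ∈ Finset.range p, ∑ i ∈ Finset.range r, f x (p+q+i))
        + ((∑ i ∈ Finset.range q, ∑ y ∈ Finset.range p, f (p+i) y)
          + (∑ i ∈ Finset.range q, ∑ k ∈ Finset.range q, f (p+i) (p+k))
          + (∑ i ∈ Finset.range q, ∑ k ∈ Finset.range r, f (p+i) (p+q+k)))
        + ((∑ i ∈ Finset.range r, ∑ y ∈ Finset.range p, f (p+q+i) y)
          + (∑ i ∈ Finset.range r, ∑ k ∈ Finset.range q, f (p+q+i) (p+k))
          + (∑ i ∈ Finset.range r, ∑ k ∈ Finset.range r, f (p+q+i) (p+q+k))) := by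
  rw [split3 p q r (fun x => ∑ y ∈ Finset.range (p+q+r), f x y)]
  rw [Finset.sum_congr rfl (fun x _ => split3 p q r (f x)),
    Finset.sum_congr rfl (fun i _ => split3 p q r (f (p+i))),
    Finset.sum_congr rfl (fun i _ => split3 p q r (f (p+q+i))),
    Finset.sum_add_distrib, Finset.sum_add_distrib, Finset.sum_add_distrib,
    Finset.sum_add_distrib, Finset.sum_add_distrib, Finset.sum_add_distrib]

lemma six_SS (a c j : ℕ) :
    6 * (∑ x ∈ Finset.range (a+c+j+4), ∑ y ∈ Finset.range (a+c+j+4), fd a j x y)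
      = 2*j^3 + 24*j^2 + 70*j + 96
        + 84*a + 54*(a*j) + 6*(a*j^2) + 12*(a*a)
        + 84*c + 42*(c*j) + 6*(c*j^2) + 12*(c*c)
        + 48*(a*c) + 12*(a*c*j) := by
  have hN : a+c+j+4 = (j+4)+a+c := by omega
  rw [hN]
  have hsplit := split_outer (j+4) a c (fd a j)
  -- block values
  have e1 : (∑ x ∈ Finset.range (j+4), ∑ y ∈ Finset.range (j+4), fd a j x y) = T0 j := by
    unfold T0
    refine Finset.sum_congr rfl (fun x hx => Finset.sum_congr rfl (fun y hy => ?_))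
    exact fd_core (by have := Finset.mem_range.1 hx; omega) (by have := Finset.mem_range.1 hy; omega)
  have e2 : (∑ x ∈ Finset.range (j+4), ∑ i ∈ Finset.range a, fd a j x ((j+4)+i))
      = a * (g2 j + (j+4)) := by
    have h : ∀ x ∈ Finset.range (j+4),
        ∑ i ∈ Finset.range a, fd a j x ((j+4)+i) = a * (cD x (j+3) + 1) := by
      intro x hx
      have hx' : x ≤ j+3 := by have := Finset.mem_range.1 hx; omega
      have hh : ∀ i ∈ Finset.range a, fd a j x ((j+4)+i) = cD x (j+3) + 1 := fun i hi =>
        fd_coreleafA hx' (by omega) (by have := Finset.mem_range.1 hi; omega)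
      rw [Finset.sum_congr rfl hh, Finset.sum_const, Finset.card_range, smul_eq_mul]
    rw [Finset.sum_congr rfl h, ← Finset.mul_sum, sumg2' j]
  have e3 : (∑ x ∈ Finset.range (j+4), ∑ i ∈ Finset.range c, fd a j x ((j+4)+a+i))
      = c * (g1 j + (j+4)) := by
    have h : ∀ x ∈ Finset.range (j+4),
        ∑ i ∈ Finset.range c, fd a j x ((j+4)+a+i) = c * (cD x 1 + 1) := by
      intro x hx
      have hx' : x ≤ j+3 := by have := Finset.mem_range.1 hx; omega
      have hh : ∀ i ∈ Finset.range c, fd a j x ((j+4)+a+i) = cD x 1 + 1 := fun i hi =>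
        fd_coreleafC hx' (by omega)
      rw [Finset.sum_congr rfl hh, Finset.sum_const, Finset.card_range, smul_eq_mul]
    rw [Finset.sum_congr rfl h, ← Finset.mul_sum, sumg1' j]
  have e4 : (∑ i ∈ Finset.range a, ∑ y ∈ Finset.range (j+4), fd a j ((j+4)+i) y)
      = a * (g2 j + (j+4)) := by
    have h : ∀ i ∈ Finset.range a,
        ∑ y ∈ Finset.range (j+4), fd a j ((j+4)+i) y = g2 j + (j+4) := by
      intro i hi
      have hh : ∀ y ∈ Finset.range (j+4), fd a j ((j+4)+i) y = cD y (j+3) + 1 := by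
        intro y hy
        rw [fd_symm]
        exact fd_coreleafA (by have := Finset.mem_range.1 hy; omega) (by omega)
          (by have := Finset.mem_range.1 hi; omega)
      rw [Finset.sum_congr rfl hh, sumg2' j]
    rw [Finset.sum_congr rfl h, Finset.sum_const, Finset.card_range, smul_eq_mul]
  have e7 : (∑ i ∈ Finset.range c, ∑ y ∈ Finset.range (j+4), fd a j ((j+4)+a+i) y)
      = c * (g1 j + (j+4)) := by
    have h : ∀ i ∈ Finset.range c,
        ∑ y ∈ Finset.range (j+4), fd a j ((j+4)+a+i) y = g1 j + (j+4) := by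
      intro i hi
      have hh : ∀ y ∈ Finset.range (j+4), fd a j ((j+4)+a+i) y = cD y 1 + 1 := by
        intro y hy
        rw [fd_symm]
        exact fd_coreleafC (by have := Finset.mem_range.1 hy; omega) (by omega)
      rw [Finset.sum_congr rfl hh, sumg1' j]
    rw [Finset.sum_congr rfl h, Finset.sum_const, Finset.card_range, smul_eq_mul]
  have fdAC : ∀ i k : ℕ, i < a → fd a j ((j+4)+i) ((j+4)+a+k) = j+4 := by
    intro i k hi
    rw [fd_leafA (by omega) (by omega) (by omega),
      fd_coreleafC (by omega) (by omega), cD_j31]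
    omega
  have e6 : (∑ i ∈ Finset.range a, ∑ k ∈ Finset.range c, fd a j ((j+4)+i) ((j+4)+a+k))
      = a * (c * (j+4)) := by
    have h : ∀ i ∈ Finset.range a,
        ∑ k ∈ Finset.range c, fd a j ((j+4)+i) ((j+4)+a+k) = c * (j+4) := by
      intro i hi
      have hh : ∀ k ∈ Finset.range c, fd a j ((j+4)+i) ((j+4)+a+k) = j+4 := fun k _ =>
        fdAC i k (Finset.mem_range.1 hi)
      rw [Finset.sum_congr rfl hh, Finset.sum_const, Finset.card_range, smul_eq_mul]
    rw [Finset.sum_congr rfl h, Finset.sum_const, Finset.card_range, smul_eq_mul]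
  have e8 : (∑ i ∈ Finset.range c, ∑ k ∈ Finset.range a, fd a j ((j+4)+a+i) ((j+4)+k))
      = c * (a * (j+4)) := by
    have h : ∀ i ∈ Finset.range c,
        ∑ k ∈ Finset.range a, fd a j ((j+4)+a+i) ((j+4)+k) = a * (j+4) := by
      intro i hi
      have hh : ∀ k ∈ Finset.range a, fd a j ((j+4)+a+i) ((j+4)+k) = j+4 := by
        intro k hk
        rw [fd_symm]
        exact fdAC k i (Finset.mem_range.1 hk)
      rw [Finset.sum_congr rfl hh, Finset.sum_const, Finset.card_range, smul_eq_mul]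
    rw [Finset.sum_congr rfl h, Finset.sum_const, Finset.card_range, smul_eq_mul]
  have e5 : (∑ i ∈ Finset.range a, ∑ k ∈ Finset.range a, fd a j ((j+4)+i) ((j+4)+k)) + 2*a
      = 2*(a*a) := by
    refine offdiag_sum a _ (fun i _ => fd_self _ _ _) (fun i k hi hk hne => ?_)
    rw [fd_leafA (by omega) (by omega) (by omega),
      fd_coreleafA (le_refl _) (by omega) (by omega), cD_self]
  have e9 : (∑ i ∈ Finset.range c, ∑ k ∈ Finset.range c, fd a j ((j+4)+a+i) ((j+4)+a+k)) + 2*c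
      = 2*(c*c) := by
    refine offdiag_sum c _ (fun i _ => fd_self _ _ _) (fun i k hi hk hne => ?_)
    rw [fd_leafC (by omega) (by omega),
      fd_coreleafC (by omega) (by omega), cD_self]
  have hT0 := six_T0 j
  have hg1 := two_g1 j
  have hg2 := two_g2 j
  zify at hsplit e1 e2 e3 e4 e5 e6 e7 e8 e9 hT0 hg1 hg2 ⊢
  linear_combination 6*hsplit + 6*e1 + 6*e2 + 6*e3 + 6*e4 + 6*e5 + 6*e6 + 6*e7 + 6*e8 + 6*e9
    + hT0 + (6*(a:ℤ))*hg2 + (6*(c:ℤ))*hg1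

lemma even_double_sum (n : ℕ) (F : ℕ → ℕ → ℕ) (hsym : ∀ x y, F x y = F y x)
    (hdiag : ∀ x, F x x = 0) :
    Even (∑ x ∈ Finset.range n, ∑ y ∈ Finset.range n, F x y) := by
  induction n with
  | zero => simp
  | succ n ih =>
    rw [Finset.sum_range_succ,
      Finset.sum_congr rfl (fun x (_ : x ∈ Finset.range n) => Finset.sum_range_succ (F x) n),
      Finset.sum_add_distrib, Finset.sum_range_succ, hdiag]
    have h : ∑ x ∈ Finset.range n, F x n = ∑ y ∈ Finset.range n, F n y :=
      Finset.sum_congr rfl (fun x _ => hsym x n)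
    rw [h]
    obtain ⟨w, hw⟩ := ih
    exact ⟨w + ∑ y ∈ Finset.range n, F n y, by omega⟩


lemma twelve_wiener (a c j : ℕ) :
    12 * wienerIndex (G4Graph a c j)
      = 2*j^3 + 24*j^2 + 70*j + 96
        + 84*a + 54*(a*j) + 6*(a*j^2) + 12*(a*a)
        + 84*c + 42*(c*j) + 6*(c*j^2) + 12*(c*c)
        + 48*(a*c) + 12*(a*c*j) := by
  have hdist : (∑ u : Fin (a+c+j+4), ∑ v : Fin (a+c+j+4), (G4Graph a c j).dist u v)
      = ∑ x ∈ Finset.range (a+c+j+4), ∑ y ∈ Finset.range (a+c+j+4), fd a j x y := by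
    have h1 : ∀ u : Fin (a+c+j+4),
        ∑ v : Fin (a+c+j+4), (G4Graph a c j).dist u v
          = ∑ y ∈ Finset.range (a+c+j+4), fd a j u.val y := by
      intro u
      rw [Finset.sum_congr rfl (fun v _ => dist_eq_fd u v)]
      exact Fin.sum_univ_eq_sum_range (fun y => fd a j u.val y) (a+c+j+4)
    rw [Finset.sum_congr rfl (fun u _ => h1 u)]
    exact Fin.sum_univ_eq_sum_range (fun x => ∑ y ∈ Finset.range (a+c+j+4), fd a j x y) _
  have heven := even_double_sum (a+c+j+4) (fd a j) (fd_symm a j) (fd_self a j)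
  have hsix := six_SS a c j
  obtain ⟨w, hw⟩ := heven
  unfold wienerIndex
  rw [hdist, hw]
  rw [hw] at hsix
  have h2 : (w + w) / 2 = w := by omega
  rw [h2]
  linarith [hsix]


theorem stmt10 (n m : ℕ) (hm : 3 ≤ m) (hn : 2 * m + 2 ≤ n) (heven : Even n)
    (D : ℚ)
    (hD : D = (wienerIndex (G4Graph (n/2 - m) (n/2 - m) (2*m - 4)) : ℚ)
        - (wienerIndex (G4Graph (n/2 - m + 1) (n/2 - m) (2*m - 5)) : ℚ)) :
    D = (1/4) * ((n:ℚ) - 2*(m:ℚ)) * ((n:ℚ) + 2*(m:ℚ) - 4) ∧ 0 < D := by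
  obtain ⟨k, hk⟩ := heven
  obtain ⟨M, rfl⟩ : ∃ M, m = M + 3 := ⟨m - 3, by omega⟩
  obtain ⟨s, hs⟩ : ∃ s, k = M + 4 + s := ⟨k - (M+4), by omega⟩
  have ha1 : n / 2 - (M+3) = s + 1 := by omega
  have ha2 : 2 * (M+3) - 4 = 2*M + 2 := by omega
  have ha3 : n / 2 - (M+3) + 1 = s + 2 := by omega
  have ha4 : 2 * (M+3) - 5 = 2*M + 1 := by omega
  rw [ha1, ha2, ha4] at hD
  have h1Q := congrArg (Nat.cast : ℕ → ℚ) (twelve_wiener (s+1) (s+1) (2*M+2))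
  have h2Q := congrArg (Nat.cast : ℕ → ℚ) (twelve_wiener (s+1+1) (s+1) (2*M+1))
  push_cast at h1Q h2Q
  have hnQ : (n : ℚ) = 2*(M:ℚ) + 2*(s:ℚ) + 8 := by
    have hkk : n = 2*M + 2*s + 8 := by omega
    rw [hkk]; push_cast; ring
  have hval : D = (1/4) * ((n:ℚ) - 2*((M+3 : ℕ):ℚ)) * ((n:ℚ) + 2*((M+3 : ℕ):ℚ) - 4) := by
    rw [hD, hnQ]
    push_cast
    linear_combination (1/12)*h1Q - (1/12)*h2Q
  refine ⟨hval, ?_⟩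
  rw [hval, hnQ]
  push_cast
  have hM : (0:ℚ) ≤ (M:ℚ) := Nat.cast_nonneg M
  have hS : (0:ℚ) ≤ (s:ℚ) := Nat.cast_nonneg s
  nlinarith [mul_nonneg hM hS, sq_nonneg ((s:ℚ))]
end

section
/- Let m ≥ 3 and let n ≥ 2m+3 be odd. Then W(G^4_{(n+1)/2−m, (n−1)/2−m, 2m−4}) − W(G^4_{(n+1)/2−m, (n+1)/2−m, 2m−5}) = (1/4)(n−2m)(n+2m−4) + m − 13/4, and this quantity is strictly positive. -/
open SimpleGraph Finset

/-! ## Auxiliary development -/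


def WEps (j x : ℕ) : ℕ := if x ≤ j+3 then 0 else 1
def WBse (a j x : ℕ) : ℕ := if x ≤ j+3 then x else if x < j+4+a then j+3 else 1
def WDsp (x y : ℕ) : ℕ := if min x y = 0 ∧ 3 ≤ max x y then max x y - 2 else max x y - min x y
def Wdd (a j u v : ℕ) : ℕ := if u = v then 0 else WEps j u + WEps j v + WDsp (WBse a j u) (WBse a j v)
def WRel (a j u v : ℕ) : Prop := (u = 0 ∧ v = 1) ∨ (u = 1 ∧ v = 2) ∨ (u = 2 ∧ v = 3) ∨ (u = 0 ∧ v = 3) ∨ (3 ≤ u ∧ u ≤ j+2 ∧ v = u+1) ∨ (u = j+3 ∧ j+4 ≤ v ∧ v < j+4+a) ∨ (u = 1 ∧ j+4+a ≤ v)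

lemma WEps_spine {j x : ℕ} (h : x ≤ j+3) : WEps j x = 0 := if_pos h
lemma WEps_leaf {j x : ℕ} (h : ¬ x ≤ j+3) : WEps j x = 1 := if_neg h
lemma WBse_spine {a j x : ℕ} (h : x ≤ j+3) : WBse a j x = x := if_pos h
lemma WBse_A {a j x : ℕ} (h1 : ¬ x ≤ j+3) (h2 : x < j+4+a) : WBse a j x = j+3 := by
  unfold WBse; rw [if_neg h1, if_pos h2]
lemma WBse_C {a j x : ℕ} (h2 : j+4+a ≤ x) : WBse a j x = 1 := by
  unfold WBse; rw [if_neg (by omega), if_neg (by omega)]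
lemma WBse_le (a j x : ℕ) : WBse a j x ≤ j+3 := by unfold WBse; split_ifs <;> omega
lemma WDsp_self (x : ℕ) : WDsp x x = 0 := by unfold WDsp; split_ifs <;> omega
lemma Wdd_self (a j u : ℕ) : Wdd a j u u = 0 := if_pos rfl
lemma Wdd_of_ne {a j u v : ℕ} (h : u ≠ v) :
    Wdd a j u v = WEps j u + WEps j v + WDsp (WBse a j u) (WBse a j v) := if_neg h

lemma Wdd_symm (a j u v : ℕ) : Wdd a j u v = Wdd a j v u := by
  unfold Wdd WDsp; split_ifs <;> omega

lemma Wdd_eq_zero {a j u v : ℕ} (h : Wdd a j u v = 0) : u = v := by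
  unfold Wdd WEps WBse WDsp at h; split_ifs at h <;> omega

lemma Wdd_adj (a j u v : ℕ) (h : WRel a j u v ∨ WRel a j v u) : Wdd a j u v = 1 := by
  have hs : ∀ p q, WRel a j p q → Wdd a j p q = 1 := by
    intro p q hr
    unfold WRel at hr
    unfold Wdd WEps WBse WDsp
    rcases hr with ⟨h1,h2⟩|⟨h1,h2⟩|⟨h1,h2⟩|⟨h1,h2⟩|⟨h1,h2,h3⟩|⟨h1,h2,h3⟩|⟨h1,h2⟩ <;>
      split_ifs <;> omega
  rcases h with h|h
  · exact hs _ _ h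
  · rw [Wdd_symm]; exact hs _ _ h

lemma Dsp_lip (x y w : ℕ) (h : x = w+1 ∨ w = x+1 ∨ (x=0 ∧ w=3) ∨ (x=3 ∧ w=0)) :
    WDsp x y ≤ WDsp w y + 1 := by
  unfold WDsp; split_ifs <;> omega

lemma Wdd_spineL (a j : ℕ) {w : ℕ} (v : ℕ) (hw : w ≤ j+3) :
    Wdd a j w v = WEps j v + WDsp w (WBse a j v) := by
  by_cases hwv : w = v
  · subst hwv
    rw [Wdd_self, WEps_spine hw, WBse_spine hw, WDsp_self]
  · rw [Wdd_of_ne hwv, WEps_spine hw, WBse_spine hw]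
    omega

lemma Wdd_leafL (a j : ℕ) {u v : ℕ} (hu : ¬ u ≤ j+3) (huv : u ≠ v) :
    Wdd a j u v = 1 + WEps j v + WDsp (WBse a j u) (WBse a j v) := by
  rw [Wdd_of_ne huv, WEps_leaf hu]

lemma lip_nat (a j u v w : ℕ) (h : WRel a j u w ∨ WRel a j w u) :
    Wdd a j u v ≤ Wdd a j w v + 1 := by
  by_cases huv : u = v
  · subst huv; rw [Wdd_self]; omega
  by_cases hwv : w = v
  · subst hwv
    rw [Wdd_adj a j u w h, Wdd_self]
  have hlip : ∀ x y : ℕ, x ≤ j+3 → y ≤ j+3 →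
      (x = y+1 ∨ y = x+1 ∨ (x=0 ∧ y=3) ∨ (x=3 ∧ y=0)) →
      Wdd a j x v ≤ Wdd a j y v + 1 := by
    intro x y hx hy hxy
    rw [Wdd_spineL a j v hx, Wdd_spineL a j v hy]
    have := Dsp_lip x (WBse a j v) y hxy
    omega
  rcases h with (⟨h1,h2⟩|⟨h1,h2⟩|⟨h1,h2⟩|⟨h1,h2⟩|⟨h1,h2,h3⟩|⟨h1,h2,h3⟩|⟨h1,h2⟩) |
      (⟨h1,h2⟩|⟨h1,h2⟩|⟨h1,h2⟩|⟨h1,h2⟩|⟨h1,h2,h3⟩|⟨h1,h2,h3⟩|⟨h1,h2⟩)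
  · exact hlip u w (by omega) (by omega) (by omega)
  · exact hlip u w (by omega) (by omega) (by omega)
  · exact hlip u w (by omega) (by omega) (by omega)
  · exact hlip u w (by omega) (by omega) (by omega)
  · exact hlip u w (by omega) (by omega) (by omega)
  · -- u = j+3 spine, w is A-leaf
    rw [Wdd_spineL a j v (show u ≤ j+3 by omega), Wdd_leafL a j (show ¬ w ≤ j+3 by omega) hwv,
      WBse_A (show ¬ w ≤ j+3 by omega) h3]
    have h1' : u = j+3 := h1
    subst h1'; omega
  · -- u = 1 spine, w is C-leaf
    rw [Wdd_spineL a j v (show u ≤ j+3 by omega), Wdd_leafL a j (show ¬ w ≤ j+3 by omega) hwv,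
      WBse_C h2]
    have h1' : u = 1 := h1
    subst h1'; omega
  · exact hlip u w (by omega) (by omega) (by omega)
  · exact hlip u w (by omega) (by omega) (by omega)
  · exact hlip u w (by omega) (by omega) (by omega)
  · exact hlip u w (by omega) (by omega) (by omega)
  · exact hlip u w (by omega) (by omega) (by omega)
  · -- w = j+3, u is A-leaf
    rw [Wdd_spineL a j v (show w ≤ j+3 by omega), Wdd_leafL a j (show ¬ u ≤ j+3 by omega) huv,
      WBse_A (show ¬ u ≤ j+3 by omega) h3]
    have h1' : w = j+3 := h1
    subst h1'; omega
  · -- w = 1, u is C-leaf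
    rw [Wdd_spineL a j v (show w ≤ j+3 by omega), Wdd_leafL a j (show ¬ u ≤ j+3 by omega) huv,
      WBse_C h2]
    have h1' : w = 1 := h1
    subst h1'; omega

lemma Dsp_step (j x y : ℕ) (hx : x ≤ j+3) (hy : y ≤ j+3) (hxy : x ≠ y) :
    ∃ w, w ≤ j+3 ∧ (x = w+1 ∨ w = x+1 ∨ (x=0 ∧ w=3) ∨ (x=3 ∧ w=0)) ∧
      WDsp w y + 1 = WDsp x y := by
  by_cases h0 : x = 0
  · by_cases h3 : 3 ≤ y
    · exact ⟨3, by omega, by omega, by unfold WDsp; split_ifs <;> omega⟩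
    · exact ⟨1, by omega, by omega, by unfold WDsp; split_ifs <;> omega⟩
  by_cases h1 : x = 1
  · by_cases hy0 : y = 0
    · exact ⟨0, by omega, by omega, by unfold WDsp; split_ifs <;> omega⟩
    · exact ⟨2, by omega, by omega, by unfold WDsp; split_ifs <;> omega⟩
  by_cases h2 : x = 2
  · by_cases hy1 : y ≤ 1
    · exact ⟨1, by omega, by omega, by unfold WDsp; split_ifs <;> omega⟩
    · exact ⟨3, by omega, by omega, by unfold WDsp; split_ifs <;> omega⟩
  by_cases h3 : x = 3
  · by_cases hy0 : y = 0
    · exact ⟨0, by omega, by omega, by unfold WDsp; split_ifs <;> omega⟩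
    by_cases hy2 : y ≤ 2
    · exact ⟨2, by omega, by omega, by unfold WDsp; split_ifs <;> omega⟩
    · exact ⟨4, by omega, by omega, by unfold WDsp; split_ifs <;> omega⟩
  -- x ≥ 4
  by_cases hlt : y < x
  · exact ⟨x-1, by omega, by omega, by unfold WDsp; split_ifs <;> omega⟩
  · exact ⟨x+1, by omega, by omega, by unfold WDsp; split_ifs <;> omega⟩

lemma rel_consec (a j w : ℕ) (hw1 : w+1 ≤ j+3) : WRel a j w (w+1) := by
  unfold WRel
  rcases (by omega : w = 0 ∨ w = 1 ∨ w = 2 ∨ 3 ≤ w) with h|h|h|h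
  · exact Or.inl ⟨h, by omega⟩
  · exact Or.inr (Or.inl ⟨h, by omega⟩)
  · exact Or.inr (Or.inr (Or.inl ⟨h, by omega⟩))
  · exact Or.inr (Or.inr (Or.inr (Or.inr (Or.inl ⟨h, by omega, by omega⟩))))

lemma rel_spine (a j x w : ℕ) (hx : x ≤ j+3) (hw : w ≤ j+3)
    (h : x = w+1 ∨ w = x+1 ∨ (x=0 ∧ w=3) ∨ (x=3 ∧ w=0)) :
    WRel a j x w ∨ WRel a j w x := by
  rcases h with h | h | ⟨h1,h2⟩ | ⟨h1,h2⟩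
  · exact Or.inr (h ▸ rel_consec a j w (by omega))
  · exact Or.inl (h ▸ rel_consec a j x (by omega))
  · exact Or.inl (by unfold WRel; exact Or.inr (Or.inr (Or.inr (Or.inl ⟨h1, h2⟩))))
  · exact Or.inr (by unfold WRel; exact Or.inr (Or.inr (Or.inr (Or.inl ⟨h2, h1⟩))))

lemma step_nat (a c j u v : ℕ) (hu : u < a+c+j+4) (hv : v < a+c+j+4) (huv : u ≠ v) :
    ∃ w, w < a+c+j+4 ∧ w ≠ u ∧ (WRel a j u w ∨ WRel a j w u) ∧
      Wdd a j w v + 1 = Wdd a j u v := by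
  by_cases hus : u ≤ j+3
  · by_cases hY : WBse a j v = u
    · -- v is a leaf attached at u
      have hvleaf : ¬ v ≤ j+3 := by
        intro h; rw [WBse_spine h] at hY; exact huv hY.symm
      have hrel : WRel a j u v := by
        unfold WRel
        by_cases hA : v < j+4+a
        · have hb := WBse_A hvleaf hA
          exact Or.inr (Or.inr (Or.inr (Or.inr (Or.inr (Or.inl
            ⟨by omega, by omega, hA⟩)))))
        · have hb := WBse_C (a := a) (j := j) (x := v) (by omega)
          exact Or.inr (Or.inr (Or.inr (Or.inr (Or.inr (Or.inr
            ⟨by omega, by omega⟩)))))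
      refine ⟨v, hv, Ne.symm huv, Or.inl hrel, ?_⟩
      rw [Wdd_self, Wdd_adj a j u v (Or.inl hrel)]
    · -- route toward y := WBse a j v on spine
      obtain ⟨w, hw3, hadj, heq⟩ := Dsp_step j u (WBse a j v) hus (WBse_le a j v)
        (fun h => hY (h.symm))
      refine ⟨w, by omega, by omega, rel_spine a j u w hus hw3 hadj, ?_⟩
      rw [Wdd_spineL a j v hw3, Wdd_spineL a j v hus]
      omega
  · -- u is a leaf: w := WBse a j u
    by_cases hA : u < j+4+a
    · have hb := WBse_A hus hA
      have hrel : WRel a j (j+3) u := by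
        unfold WRel
        exact Or.inr (Or.inr (Or.inr (Or.inr (Or.inr (Or.inl ⟨rfl, by omega, hA⟩)))))
      refine ⟨j+3, by omega, by omega, Or.inr hrel, ?_⟩
      rw [Wdd_spineL a j v (le_refl (j+3)), Wdd_leafL a j hus huv, hb]
      omega
    · have hb := WBse_C (a := a) (j := j) (x := u) (by omega)
      have hrel : WRel a j 1 u := by
        unfold WRel
        exact Or.inr (Or.inr (Or.inr (Or.inr (Or.inr (Or.inr ⟨rfl, by omega⟩)))))
      refine ⟨1, by omega, by omega, Or.inr hrel, ?_⟩
      rw [Wdd_spineL a j v (show (1:ℕ) ≤ j+3 by omega), Wdd_leafL a j hus huv, hb]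
      omega

lemma G4_adj_iff (a c j : ℕ) (u v : Fin (a+c+j+4)) :
    (G4Graph a c j).Adj u v ↔ u ≠ v ∧ (WRel a j u.val v.val ∨ WRel a j v.val u.val) := by
  simp only [G4Graph, SimpleGraph.fromRel_adj, WRel]

lemma exists_walk (a c j : ℕ) : ∀ (k : ℕ) (u v : Fin (a+c+j+4)),
    Wdd a j u.val v.val = k → ∃ p : (G4Graph a c j).Walk u v, p.length ≤ k := by
  intro k
  induction k with
  | zero =>
    intro u v h
    have : u = v := Fin.ext (Wdd_eq_zero h)
    subst this
    exact ⟨.nil, le_rfl⟩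
  | succ k ih =>
    intro u v h
    by_cases huv : u = v
    · subst huv; exact ⟨.nil, by simp⟩
    · obtain ⟨w, hwN, hwne, hrel, heq⟩ := step_nat a c j u.val v.val u.isLt v.isLt
        (fun hh => huv (Fin.ext hh))
      have hadj : (G4Graph a c j).Adj u ⟨w, hwN⟩ := by
        rw [G4_adj_iff]
        exact ⟨fun hh => hwne (congrArg Fin.val hh).symm, hrel⟩
      obtain ⟨p, hp⟩ := ih ⟨w, hwN⟩ v (by show Wdd a j w v.val = k; omega)
      exact ⟨.cons hadj p, by simpa [SimpleGraph.Walk.length_cons] using Nat.succ_le_succ hp⟩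

lemma walk_ge (a c j : ℕ) {u v : Fin (a+c+j+4)} (p : (G4Graph a c j).Walk u v) :
    Wdd a j u.val v.val ≤ p.length := by
  induction p with
  | nil => rw [Wdd_self]; exact Nat.zero_le _
  | @cons x y z hadj q ih =>
    have := lip_nat a j x.val z.val y.val ((G4_adj_iff a c j x y).mp hadj).2
    rw [SimpleGraph.Walk.length_cons]
    omega

lemma G4_dist_eq (a c j : ℕ) (u v : Fin (a+c+j+4)) :
    (G4Graph a c j).dist u v = Wdd a j u.val v.val := by
  obtain ⟨p, hp⟩ := exists_walk a c j _ u v rfl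
  refine le_antisymm (le_trans (SimpleGraph.dist_le p) hp) ?_
  have hr : (G4Graph a c j).Reachable u v := ⟨p⟩
  obtain ⟨q, hq⟩ := hr.exists_walk_length_eq_dist
  rw [← hq]
  exact walk_ge a c j q



lemma Wdd_SS {a j x y : ℕ} (hx : x ≤ j+3) (hy : y ≤ j+3) : Wdd a j x y = WDsp x y := by
  by_cases h : x = y
  · subst h; rw [Wdd_self, WDsp_self]
  · rw [Wdd_of_ne h, WEps_spine hx, WEps_spine hy, WBse_spine hx, WBse_spine hy]
    omega

lemma Wdd_SA {a j x y : ℕ} (hx : x ≤ j+3) (hy1 : j+3 < y) (hy2 : y < j+4+a) :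
    Wdd a j x y = 1 + WDsp x (j+3) := by
  rw [Wdd_of_ne (by omega), WEps_spine hx, WEps_leaf (by omega), WBse_spine hx,
    WBse_A (by omega) hy2]

lemma Wdd_SC {a j x y : ℕ} (hx : x ≤ j+3) (hy : j+4+a ≤ y) :
    Wdd a j x y = 1 + WDsp x 1 := by
  rw [Wdd_of_ne (by omega), WEps_spine hx, WEps_leaf (by omega), WBse_spine hx, WBse_C hy]

lemma Wdd_AA {a j x y : ℕ} (hx1 : j+3 < x) (hx2 : x < j+4+a) (hy1 : j+3 < y) (hy2 : y < j+4+a) :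
    Wdd a j x y = if x = y then 0 else 2 := by
  by_cases h : x = y
  · rw [if_pos h, h, Wdd_self]
  · rw [if_neg h, Wdd_of_ne h, WEps_leaf (by omega), WEps_leaf (by omega),
      WBse_A (by omega) hx2, WBse_A (by omega) hy2, WDsp_self]

lemma Wdd_AC {a j x y : ℕ} (hx1 : j+3 < x) (hx2 : x < j+4+a) (hy : j+4+a ≤ y) :
    Wdd a j x y = j+4 := by
  rw [Wdd_of_ne (by omega), WEps_leaf (by omega), WEps_leaf (by omega),
    WBse_A (by omega) hx2, WBse_C hy]
  have h : WDsp (j+3) 1 = j+2 := by unfold WDsp; split_ifs <;> omega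
  omega

lemma Wdd_CC {a j x y : ℕ} (hx : j+4+a ≤ x) (hy : j+4+a ≤ y) :
    Wdd a j x y = if x = y then 0 else 2 := by
  by_cases h : x = y
  · rw [if_pos h, h, Wdd_self]
  · rw [if_neg h, Wdd_of_ne h, WEps_leaf (by omega), WEps_leaf (by omega),
      WBse_C hx, WBse_C hy, WDsp_self]

/-! ### Gauss-type sums in ℚ -/

lemma sum_range_cast (n : ℕ) : ∑ i ∈ range n, (i:ℚ) = n*((n:ℚ)-1)/2 := by
  induction n with
  | zero => simp
  | succ n ih => rw [Finset.sum_range_succ, ih]; push_cast; ring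

lemma sum_lin (n : ℕ) (A B : ℚ) : ∑ i ∈ range n, (A + B*i) = n*A + B*(n*((n:ℚ)-1)/2) := by
  induction n with
  | zero => simp
  | succ n ih => rw [Finset.sum_range_succ, ih]; push_cast; ring

lemma sum_quad (n : ℕ) (A B C : ℚ) : ∑ i ∈ range n, (A + B*i + C*(i:ℚ)^2)
    = n*A + B*(n*((n:ℚ)-1)/2) + C*((n:ℚ)*((n:ℚ)-1)*(2*(n:ℚ)-1)/6) := by
  induction n with
  | zero => simp
  | succ n ih => rw [Finset.sum_range_succ, ih]; push_cast; ring

lemma sum_ite3 (n : ℕ) (hn : 3 ≤ n) :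
    ∑ y ∈ range n, (if 3 ≤ y then (2:ℚ) else 0) = 2*n - 6 := by
  induction n with
  | zero => omega
  | succ n ih =>
    rw [Finset.sum_range_succ]
    by_cases h3 : 3 ≤ n
    · rw [ih h3, if_pos (by omega)]; push_cast; ring
    · have hn2 : n = 2 := by omega
      subst hn2
      norm_num [Finset.sum_range_succ]

/-! ### row sums of WDsp -/

lemma rowP (j : ℕ) : ∑ x ∈ range (j+4), (WDsp x (j+3) : ℚ) = ((j:ℚ)^2 + 7*j + 8)/2 := by
  rw [show j+4 = j+3+1 from rfl, Finset.sum_range_succ']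
  have h0 : WDsp 0 (j+3) = j+1 := by unfold WDsp; split_ifs <;> omega
  have hterm : ∀ i ∈ range (j+3), (WDsp (i+1) (j+3) : ℚ) = ((j:ℚ)+2) + (-1)*i := by
    intro i hi
    simp only [Finset.mem_range] at hi
    have h : WDsp (i+1) (j+3) = j+2-i := by unfold WDsp; split_ifs <;> omega
    rw [h, Nat.cast_sub (by omega)]
    push_cast; ring
  rw [Finset.sum_congr rfl hterm, sum_lin, h0]
  push_cast; ring

lemma rowQ (j : ℕ) : ∑ x ∈ range (j+4), (WDsp x 1 : ℚ) = ((j:ℚ)^2 + 5*j + 8)/2 := by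
  rw [show j+4 = j+2+1+1 from rfl, Finset.sum_range_succ', Finset.sum_range_succ']
  have h0 : WDsp 0 1 = 1 := by unfold WDsp; split_ifs <;> omega
  have h1 : WDsp (0+1) 1 = 0 := by unfold WDsp; split_ifs <;> omega
  have hterm : ∀ i ∈ range (j+2), (WDsp (i+1+1) 1 : ℚ) = 1 + 1*i := by
    intro i hi
    have h : WDsp (i+1+1) 1 = i+1 := by unfold WDsp; split_ifs <;> omega
    rw [h]; push_cast; ring
  rw [Finset.sum_congr rfl hterm, sum_lin, h0, h1]
  push_cast; ring

lemma rowR (j x : ℕ) (hx : x ≤ j+3) : ∑ y ∈ range (j+4), (WDsp x y : ℚ)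
    = ((x:ℚ)*((x:ℚ)+1) + ((j:ℚ)+3-(x:ℚ))*((j:ℚ)+4-(x:ℚ)))/2
      - (if x = 0 then 2*((j:ℚ)+1) else 0) - (if 3 ≤ x then (2:ℚ) else 0) := by
  by_cases hx0 : x = 0
  · subst hx0
    rw [if_pos rfl, if_neg (by omega)]
    have hterm : ∀ y ∈ range (j+4), (WDsp 0 y : ℚ) = (y:ℚ) - (if 3 ≤ y then (2:ℚ) else 0) := by
      intro y hy
      by_cases h3 : 3 ≤ y
      · have h : WDsp 0 y = y - 2 := by unfold WDsp; split_ifs <;> omega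
        rw [h, if_pos h3, Nat.cast_sub (by omega)]
        push_cast; ring
      · have h : WDsp 0 y = y := by unfold WDsp; split_ifs <;> omega
        rw [h, if_neg h3]
        push_cast; ring
    rw [Finset.sum_congr rfl hterm, Finset.sum_sub_distrib, sum_range_cast,
      sum_ite3 (j+4) (by omega)]
    push_cast; ring
  · -- 1 ≤ x
    have hx1 : 1 ≤ x := by omega
    rw [Finset.range_eq_Ico,
      ← Finset.sum_Ico_consecutive _ (show 0 ≤ x+1 by omega) (show x+1 ≤ j+4 by omega),
      ← Finset.range_eq_Ico]
    have hp1 : ∑ y ∈ range (x+1), (WDsp x y : ℚ)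
        = (∑ y ∈ range x, (((x:ℚ)-1) + (-1)*(y:ℚ))) + (x:ℚ)
          - (if 3 ≤ x then (2:ℚ) else 0) := by
      rw [Finset.sum_range_succ']
      have h0 : (WDsp x 0 : ℚ) = (x:ℚ) - (if 3 ≤ x then (2:ℚ) else 0) := by
        by_cases h3 : 3 ≤ x
        · have h : WDsp x 0 = x - 2 := by unfold WDsp; split_ifs <;> omega
          rw [h, if_pos h3, Nat.cast_sub (by omega)]; push_cast; ring
        · have h : WDsp x 0 = x := by unfold WDsp; split_ifs <;> omega
          rw [h, if_neg h3]; ring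
      have hterm : ∀ i ∈ range x, (WDsp x (i+1) : ℚ) = ((x:ℚ)-1) + (-1)*(i:ℚ) := by
        intro i hi
        simp only [Finset.mem_range] at hi
        have h : WDsp x (i+1) = x - (i+1) := by unfold WDsp; split_ifs <;> omega
        rw [h, Nat.cast_sub (by omega)]; push_cast; ring
      rw [Finset.sum_congr rfl hterm, h0]
      ring
    have hp2 : ∑ y ∈ Ico (x+1) (j+4), (WDsp x y : ℚ)
        = ∑ i ∈ range (j+4-(x+1)), (1 + 1*(i:ℚ)) := by
      rw [Finset.sum_Ico_eq_sum_range]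
      refine Finset.sum_congr rfl ?_
      intro i hi
      simp only [Finset.mem_range] at hi
      have h : WDsp x (x+1+i) = i+1 := by unfold WDsp; split_ifs <;> omega
      rw [h]; push_cast; ring
    rw [hp1, hp2, sum_lin, sum_lin, if_neg hx0]
    have hc : ((j+4-(x+1) : ℕ) : ℚ) = (j:ℚ)+3-(x:ℚ) := by
      rw [Nat.cast_sub (by omega)]; push_cast; ring
    rw [hc]
    push_cast; ring

lemma rowR_sum (j : ℕ) : ∑ x ∈ range (j+4), ∑ y ∈ range (j+4), (WDsp x y : ℚ)
    = ((j:ℚ)+3)*((j:ℚ)+4)*((j:ℚ)+5)/3 - 4*((j:ℚ)+1) := by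
  have hterm : ∀ x ∈ range (j+4), (∑ y ∈ range (j+4), (WDsp x y : ℚ))
      = ((((j:ℚ)+3)*((j:ℚ)+4)/2) + (-(((j:ℚ)+3))+(-1)* -1 * 0)*x + 1*(x:ℚ)^2)
        - ((if x = 0 then 2*((j:ℚ)+1) else 0) + (if 3 ≤ x then (2:ℚ) else 0)) := by
    intro x hx
    simp only [Finset.mem_range] at hx
    rw [rowR j x (by omega)]
    ring
  rw [Finset.sum_congr rfl hterm, Finset.sum_sub_distrib, sum_quad,
    Finset.sum_add_distrib, sum_ite3 (j+4) (by omega)]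
  have h0 : ∑ x ∈ range (j+4), (if x = 0 then 2*((j:ℚ)+1) else 0) = 2*((j:ℚ)+1) := by
    rw [Finset.sum_ite_eq' (range (j+4)) 0 (fun _ => 2*((j:ℚ)+1))]
    rw [if_pos (by simp)]
  rw [h0]
  push_cast; ring

/-! ### assembling the double sum -/

lemma split3_s11 (a c j : ℕ) (f : ℕ → ℚ) :
    ∑ x ∈ range (a+c+j+4), f x
      = ∑ x ∈ range (j+4), f x + ∑ x ∈ Ico (j+4) (j+4+a), f x
        + ∑ x ∈ Ico (j+4+a) (a+c+j+4), f x := by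
  rw [Finset.range_eq_Ico,
    ← Finset.sum_Ico_consecutive f (show 0 ≤ j+4 by omega) (show j+4 ≤ a+c+j+4 by omega),
    ← Finset.sum_Ico_consecutive f (show j+4 ≤ j+4+a by omega)
      (show j+4+a ≤ a+c+j+4 by omega),
    ← Finset.range_eq_Ico]
  ring

lemma card_IcoA (a c j : ℕ) : (Ico (j+4) (j+4+a)).card = a := by
  rw [Nat.card_Ico]; omega
lemma card_IcoC (a c j : ℕ) : (Ico (j+4+a) (a+c+j+4)).card = c := by
  rw [Nat.card_Ico]; omega

lemma innerA (a c j x : ℕ) (hx : x ≤ j+3) :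
    ∑ y ∈ Ico (j+4) (j+4+a), (Wdd a j x y : ℚ) = (a:ℚ)*(1 + (WDsp x (j+3) : ℚ)) := by
  have h : ∀ y ∈ Ico (j+4) (j+4+a), (Wdd a j x y : ℚ) = 1 + (WDsp x (j+3):ℚ) := by
    intro y hy; simp only [Finset.mem_Ico] at hy
    rw [Wdd_SA hx (by omega) (by omega)]; push_cast; ring
  rw [Finset.sum_congr rfl h, Finset.sum_const, card_IcoA a c j, nsmul_eq_mul]

lemma innerC (a c j x : ℕ) (hx : x ≤ j+3) :
    ∑ y ∈ Ico (j+4+a) (a+c+j+4), (Wdd a j x y : ℚ) = (c:ℚ)*(1 + (WDsp x 1 : ℚ)) := by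
  have h : ∀ y ∈ Ico (j+4+a) (a+c+j+4), (Wdd a j x y : ℚ) = 1 + (WDsp x 1:ℚ) := by
    intro y hy; simp only [Finset.mem_Ico] at hy
    rw [Wdd_SC hx (by omega)]; push_cast; ring
  rw [Finset.sum_congr rfl h, Finset.sum_const, card_IcoC a c j, nsmul_eq_mul]

lemma innerS_fromA (a c j x : ℕ) (hx1 : j+3 < x) (hx2 : x < j+4+a) :
    ∑ y ∈ range (j+4), (Wdd a j x y : ℚ) = ((j:ℚ)+4) + ((j:ℚ)^2+7*(j:ℚ)+8)/2 := by
  have h : ∀ y ∈ range (j+4), (Wdd a j x y:ℚ) = 1 + (WDsp y (j+3):ℚ) := by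
    intro y hy; simp only [Finset.mem_range] at hy
    rw [Wdd_symm, Wdd_SA (by omega) hx1 hx2]; push_cast; ring
  rw [Finset.sum_congr rfl h, Finset.sum_add_distrib, Finset.sum_const, rowP, card_range,
    nsmul_eq_mul]
  push_cast; ring

lemma innerS_fromC (a c j x : ℕ) (hx : j+4+a ≤ x) :
    ∑ y ∈ range (j+4), (Wdd a j x y : ℚ) = ((j:ℚ)+4) + ((j:ℚ)^2+5*(j:ℚ)+8)/2 := by
  have h : ∀ y ∈ range (j+4), (Wdd a j x y:ℚ) = 1 + (WDsp y 1:ℚ) := by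
    intro y hy; simp only [Finset.mem_range] at hy
    rw [Wdd_symm, Wdd_SC (by omega) hx]; push_cast; ring
  rw [Finset.sum_congr rfl h, Finset.sum_add_distrib, Finset.sum_const, rowQ, card_range,
    nsmul_eq_mul]
  push_cast; ring

lemma innerAA (a c j x : ℕ) (hx1 : j+3 < x) (hx2 : x < j+4+a) :
    ∑ y ∈ Ico (j+4) (j+4+a), (Wdd a j x y : ℚ) = 2*(a:ℚ) - 2 := by
  have h : ∀ y ∈ Ico (j+4) (j+4+a), (Wdd a j x y : ℚ)
      = 2 - (if x = y then (2:ℚ) else 0) := by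
    intro y hy; simp only [Finset.mem_Ico] at hy
    rw [Wdd_AA hx1 hx2 (by omega) (by omega)]
    by_cases hxy : x = y
    · rw [if_pos hxy, if_pos hxy]; norm_num
    · rw [if_neg hxy, if_neg hxy]; norm_num
  rw [Finset.sum_congr rfl h, Finset.sum_sub_distrib, Finset.sum_const, card_IcoA a c j,
    Finset.sum_ite_eq (Ico (j+4) (j+4+a)) x (fun _ => (2:ℚ)),
    if_pos (by simp only [Finset.mem_Ico]; omega), nsmul_eq_mul]
  ring

lemma innerCC (a c j x : ℕ) (hx : j+4+a ≤ x) (hx2 : x < a+c+j+4) :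
    ∑ y ∈ Ico (j+4+a) (a+c+j+4), (Wdd a j x y : ℚ) = 2*(c:ℚ) - 2 := by
  have h : ∀ y ∈ Ico (j+4+a) (a+c+j+4), (Wdd a j x y : ℚ)
      = 2 - (if x = y then (2:ℚ) else 0) := by
    intro y hy; simp only [Finset.mem_Ico] at hy
    rw [Wdd_CC hx (by omega)]
    by_cases hxy : x = y
    · rw [if_pos hxy, if_pos hxy]; norm_num
    · rw [if_neg hxy, if_neg hxy]; norm_num
  rw [Finset.sum_congr rfl h, Finset.sum_sub_distrib, Finset.sum_const, card_IcoC a c j,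
    Finset.sum_ite_eq (Ico (j+4+a) (a+c+j+4)) x (fun _ => (2:ℚ)),
    if_pos (by simp only [Finset.mem_Ico]; omega), nsmul_eq_mul]
  ring

lemma innerAC (a c j x : ℕ) (hx1 : j+3 < x) (hx2 : x < j+4+a) :
    ∑ y ∈ Ico (j+4+a) (a+c+j+4), (Wdd a j x y : ℚ) = (c:ℚ)*((j:ℚ)+4) := by
  have h : ∀ y ∈ Ico (j+4+a) (a+c+j+4), (Wdd a j x y : ℚ) = (j:ℚ)+4 := by
    intro y hy; simp only [Finset.mem_Ico] at hy
    rw [Wdd_AC hx1 hx2 (by omega)]; push_cast; ring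
  rw [Finset.sum_congr rfl h, Finset.sum_const, card_IcoC a c j, nsmul_eq_mul]

lemma innerCA (a c j x : ℕ) (hx : j+4+a ≤ x) :
    ∑ y ∈ Ico (j+4) (j+4+a), (Wdd a j x y : ℚ) = (a:ℚ)*((j:ℚ)+4) := by
  have h : ∀ y ∈ Ico (j+4) (j+4+a), (Wdd a j x y : ℚ) = (j:ℚ)+4 := by
    intro y hy; simp only [Finset.mem_Ico] at hy
    rw [Wdd_symm, Wdd_AC (by omega) (by omega) hx]; push_cast; ring
  rw [Finset.sum_congr rfl h, Finset.sum_const, card_IcoA a c j, nsmul_eq_mul]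

lemma sum_Wdd (a c j : ℕ) :
    ∑ x ∈ range (a+c+j+4), ∑ y ∈ range (a+c+j+4), (Wdd a j x y : ℚ)
    = ((j:ℚ)+3)*((j:ℚ)+4)*((j:ℚ)+5)/3 - 4*((j:ℚ)+1)
      + 2*(a:ℚ)*(((j:ℚ)^2+9*(j:ℚ)+16)/2) + 2*(c:ℚ)*(((j:ℚ)^2+7*(j:ℚ)+16)/2)
      + 2*(a:ℚ)^2 - 2*(a:ℚ) + 2*(c:ℚ)^2 - 2*(c:ℚ) + 2*(a:ℚ)*(c:ℚ)*((j:ℚ)+4) := by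
  rw [split3_s11 a c j]
  have P1 : ∑ x ∈ range (j+4), ∑ y ∈ range (a+c+j+4), (Wdd a j x y:ℚ)
      = (((j:ℚ)+3)*((j:ℚ)+4)*((j:ℚ)+5)/3 - 4*((j:ℚ)+1))
        + ((a:ℚ)*(((j:ℚ)+4) + ((j:ℚ)^2+7*(j:ℚ)+8)/2)
        + (c:ℚ)*(((j:ℚ)+4) + ((j:ℚ)^2+5*(j:ℚ)+8)/2)) := by
    have h : ∀ x ∈ range (j+4), ∑ y ∈ range (a+c+j+4), (Wdd a j x y:ℚ)
        = (∑ y ∈ range (j+4), (WDsp x y:ℚ))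
          + ((a:ℚ)*(1 + (WDsp x (j+3):ℚ)) + (c:ℚ)*(1 + (WDsp x 1:ℚ))) := by
      intro x hx; simp only [Finset.mem_range] at hx
      rw [split3_s11 a c j, innerA a c j x (by omega), innerC a c j x (by omega),
        Finset.sum_congr rfl (fun y hy => by
          simp only [Finset.mem_range] at hy
          rw [Wdd_SS (show x ≤ j+3 by omega) (show y ≤ j+3 by omega)])]
      ring
    rw [Finset.sum_congr rfl h, Finset.sum_add_distrib, rowR_sum]
    have h2 : ∑ x ∈ range (j+4),
        ((a:ℚ)*(1 + (WDsp x (j+3):ℚ)) + (c:ℚ)*(1 + (WDsp x 1:ℚ)))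
        = (a:ℚ)*(((j:ℚ)+4) + ((j:ℚ)^2+7*(j:ℚ)+8)/2)
          + (c:ℚ)*(((j:ℚ)+4) + ((j:ℚ)^2+5*(j:ℚ)+8)/2) := by
      rw [Finset.sum_add_distrib, ← Finset.mul_sum, ← Finset.mul_sum,
        Finset.sum_add_distrib, Finset.sum_add_distrib, Finset.sum_const, rowP, rowQ,
        card_range, nsmul_eq_mul]
      push_cast; ring
    rw [h2]
  have P2 : ∑ x ∈ Ico (j+4) (j+4+a), ∑ y ∈ range (a+c+j+4), (Wdd a j x y:ℚ)
      = (a:ℚ)*((((j:ℚ)+4) + ((j:ℚ)^2+7*(j:ℚ)+8)/2) + (2*(a:ℚ) - 2) + (c:ℚ)*((j:ℚ)+4)) := by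
    have h : ∀ x ∈ Ico (j+4) (j+4+a), ∑ y ∈ range (a+c+j+4), (Wdd a j x y:ℚ)
        = (((j:ℚ)+4) + ((j:ℚ)^2+7*(j:ℚ)+8)/2) + (2*(a:ℚ) - 2) + (c:ℚ)*((j:ℚ)+4) := by
      intro x hx; simp only [Finset.mem_Ico] at hx
      rw [split3_s11 a c j, innerS_fromA a c j x (by omega) (by omega),
        innerAA a c j x (by omega) (by omega), innerAC a c j x (by omega) (by omega)]
    rw [Finset.sum_congr rfl h, Finset.sum_const, card_IcoA a c j, nsmul_eq_mul]
  have P3 : ∑ x ∈ Ico (j+4+a) (a+c+j+4), ∑ y ∈ range (a+c+j+4), (Wdd a j x y:ℚ)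
      = (c:ℚ)*((((j:ℚ)+4) + ((j:ℚ)^2+5*(j:ℚ)+8)/2) + (a:ℚ)*((j:ℚ)+4) + (2*(c:ℚ) - 2)) := by
    have h : ∀ x ∈ Ico (j+4+a) (a+c+j+4), ∑ y ∈ range (a+c+j+4), (Wdd a j x y:ℚ)
        = (((j:ℚ)+4) + ((j:ℚ)^2+5*(j:ℚ)+8)/2) + (a:ℚ)*((j:ℚ)+4) + (2*(c:ℚ) - 2) := by
      intro x hx; simp only [Finset.mem_Ico] at hx
      rw [split3_s11 a c j, innerS_fromC a c j x (by omega),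
        innerCA a c j x (by omega), innerCC a c j x (by omega) (by omega)]
    rw [Finset.sum_congr rfl h, Finset.sum_const, card_IcoC a c j, nsmul_eq_mul]
  rw [P1, P2, P3]
  ring

lemma even_symm_sum (f : ℕ → ℕ → ℕ) (hs : ∀ x y, f x y = f y x) (hd : ∀ x, f x x = 0) :
    ∀ n, Even (∑ x ∈ range n, ∑ y ∈ range n, f x y) := by
  intro n
  induction n with
  | zero => simp
  | succ n ih =>
    rw [Finset.sum_range_succ]
    have hinner : ∀ x, ∑ y ∈ range (n+1), f x y = ∑ y ∈ range n, f x y + f x n :=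
      fun x => Finset.sum_range_succ _ n
    rw [Finset.sum_congr rfl (fun x _ => hinner x), Finset.sum_add_distrib, hinner n, hd n]
    have hBC : ∑ x ∈ range n, f x n = ∑ y ∈ range n, f n y :=
      Finset.sum_congr rfl (fun x _ => hs x n)
    obtain ⟨t, ht⟩ := ih
    exact ⟨t + ∑ x ∈ range n, f x n, by omega⟩

lemma wiener_val (a c j : ℕ) : (wienerIndex (G4Graph a c j) : ℚ)
    = (((j:ℚ)+3)*((j:ℚ)+4)*((j:ℚ)+5)/3 - 4*((j:ℚ)+1)
      + 2*(a:ℚ)*(((j:ℚ)^2+9*(j:ℚ)+16)/2) + 2*(c:ℚ)*(((j:ℚ)^2+7*(j:ℚ)+16)/2)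
      + 2*(a:ℚ)^2 - 2*(a:ℚ) + 2*(c:ℚ)^2 - 2*(c:ℚ) + 2*(a:ℚ)*(c:ℚ)*((j:ℚ)+4)) / 2 := by
  have hS : (∑ u : Fin (a+c+j+4), ∑ v : Fin (a+c+j+4), (G4Graph a c j).dist u v)
      = ∑ x ∈ range (a+c+j+4), ∑ y ∈ range (a+c+j+4), Wdd a j x y := by
    have h1 : (∑ u : Fin (a+c+j+4), ∑ v : Fin (a+c+j+4), (G4Graph a c j).dist u v)
        = ∑ u : Fin (a+c+j+4), ∑ v : Fin (a+c+j+4), Wdd a j u.val v.val :=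
      Finset.sum_congr rfl fun u _ => Finset.sum_congr rfl fun v _ => G4_dist_eq a c j u v
    rw [h1]
    have h2 : ∀ x : ℕ, ∑ v : Fin (a+c+j+4), Wdd a j x v.val
        = ∑ y ∈ range (a+c+j+4), Wdd a j x y :=
      fun x => Fin.sum_univ_eq_sum_range (fun y => Wdd a j x y) (a+c+j+4)
    rw [Finset.sum_congr rfl (fun u _ => h2 u.val)]
    exact Fin.sum_univ_eq_sum_range (fun x => ∑ y ∈ range (a+c+j+4), Wdd a j x y) (a+c+j+4)
  obtain ⟨t, ht⟩ := even_symm_sum (Wdd a j) (Wdd_symm a j) (Wdd_self a j) (a+c+j+4)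
  have hw : wienerIndex (G4Graph a c j) = t := by
    unfold wienerIndex; rw [hS, ht]; omega
  have hcast : ((∑ x ∈ range (a+c+j+4), ∑ y ∈ range (a+c+j+4), Wdd a j x y : ℕ) : ℚ)
      = ∑ x ∈ range (a+c+j+4), ∑ y ∈ range (a+c+j+4), (Wdd a j x y : ℚ) := by
    push_cast; rfl
  have ht' : (t:ℚ) = (∑ x ∈ range (a+c+j+4), ∑ y ∈ range (a+c+j+4), (Wdd a j x y : ℚ))/2 := by
    rw [← hcast, ht]; push_cast; ring
  rw [hw, ht', sum_Wdd]

theorem stmt11 (n m : ℕ) (hm : 3 ≤ m) (hn : 2 * m + 3 ≤ n) (hodd : Odd n)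
    (D : ℚ)
    (hD : D = (wienerIndex (G4Graph ((n+1)/2 - m) ((n-1)/2 - m) (2*m - 4)) : ℚ)
        - (wienerIndex (G4Graph ((n+1)/2 - m) ((n+1)/2 - m) (2*m - 5)) : ℚ)) :
    D = (1/4) * ((n:ℚ) - 2*(m:ℚ)) * ((n:ℚ) + 2*(m:ℚ) - 4) + (m:ℚ) - 13/4 ∧ 0 < D := by
  obtain ⟨k, hk⟩ := hodd
  have e1 : (n+1)/2 - m = k+1-m := by omega
  have e2 : (n-1)/2 - m = k-m := by omega
  rw [e1, e2, wiener_val, wiener_val] at hD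
  have c1 : ((k+1-m : ℕ):ℚ) = (k:ℚ)+1-(m:ℚ) := by
    rw [Nat.cast_sub (by omega)]; push_cast; ring
  have c2 : ((k-m : ℕ):ℚ) = (k:ℚ)-(m:ℚ) := by
    rw [Nat.cast_sub (by omega)]
  have c3 : ((2*m-4 : ℕ):ℚ) = 2*(m:ℚ)-4 := by
    rw [Nat.cast_sub (by omega)]; push_cast; ring
  have c4 : ((2*m-5 : ℕ):ℚ) = 2*(m:ℚ)-5 := by
    rw [Nat.cast_sub (by omega)]; push_cast; ring
  rw [c1, c2, c3, c4] at hD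
  have hnq : (n:ℚ) = 2*(k:ℚ)+1 := by rw [hk]; push_cast; ring
  have hval : D = (1/4) * ((n:ℚ) - 2*(m:ℚ)) * ((n:ℚ) + 2*(m:ℚ) - 4) + (m:ℚ) - 13/4 := by
    rw [hD, hnq]; ring
  refine ⟨hval, ?_⟩
  rw [hval]
  have hm' : (3:ℚ) ≤ (m:ℚ) := by exact_mod_cast hm
  have hn' : 2*(m:ℚ)+3 ≤ (n:ℚ) := by exact_mod_cast hn
  nlinarith [hm', hn']
end

section
/- Let m ≥ 2 and let n ≥ 2m+1 be odd. Then W(G^4_{(n−2m+1)/2, (n−2m−1)/2, 2m−4}) − W(G^3_{n−2m, 2m−3}) = n + 2m³ + nm + (1/2)mn² − (1/2)n² − (7/2)m − 2nm² + 5/2; equivalently, writing n = 2m+k with k ≥ 1 odd, this difference equals 1 + (1/2)(k−3)(k+1)(m−1). In particular the difference is strictly positive for k ≥ 3 and strictly negative for k = 1. -/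
open SimpleGraph Finset

namespace WAux

lemma chain_reach_dist {V : Type*} {G : SimpleGraph V} (f : ℕ → V) (n : ℕ)
    (h : ∀ k, k < n → G.Adj (f k) (f (k+1))) :
    G.Reachable (f 0) (f n) ∧ G.dist (f 0) (f n) ≤ n := by
  induction n with
  | zero => exact ⟨Reachable.refl _, by simp⟩
  | succ n ih =>
    obtain ⟨hr, hd⟩ := ih (fun k hk => h k (by omega))
    have hadj := h n (by omega)
    refine ⟨hr.trans hadj.reachable, ?_⟩
    obtain ⟨p, hp⟩ := hr.exists_walk_length_eq_dist
    have h2 := SimpleGraph.dist_le (p.append (hadj.toWalk))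
    rw [SimpleGraph.Walk.length_append] at h2
    simp only [SimpleGraph.Adj.toWalk, SimpleGraph.Walk.length_cons,
      SimpleGraph.Walk.length_nil] at h2
    omega

lemma chain' {V : Type*} {G : SimpleGraph V} (f : ℕ → V) (n : ℕ) {u v : V}
    (h : ∀ k, k < n → G.Adj (f k) (f (k+1))) (h0 : f 0 = u) (hn : f n = v) :
    G.Reachable u v ∧ G.dist u v ≤ n := h0 ▸ hn ▸ chain_reach_dist f n h

lemma potential_le_dist {V : Type*} {G : SimpleGraph V} (φ : V → ℕ)
    (hL : ∀ u v, G.Adj u v → φ v ≤ φ u + 1 ∧ φ u ≤ φ v + 1)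
    {u v : V} (h : G.Reachable u v) :
    max (φ u) (φ v) - min (φ u) (φ v) ≤ G.dist u v := by
  obtain ⟨p, hp⟩ := h.exists_walk_length_eq_dist
  rw [← hp]; clear hp h
  induction p with
  | nil => simp
  | cons ha q ih =>
    have := hL _ _ ha
    rw [SimpleGraph.Walk.length_cons]
    omega

lemma two_le_dist {V : Type*} {G : SimpleGraph V} {u v : V}
    (h : G.Reachable u v) (hne : u ≠ v) (hna : ¬ G.Adj u v) : 2 ≤ G.dist u v := by
  have h0 : G.dist u v ≠ 0 := by
    rw [SimpleGraph.dist_ne_zero_iff_ne_and_reachable]; exact ⟨hne, h⟩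
  have h1 : G.dist u v ≠ 1 := by
    simpa [SimpleGraph.dist_eq_one_iff_adj] using hna
  omega

def q3 (j x : ℕ) : ℕ := max 1 (min x (j+3))

def d3 (j u v : ℕ) : ℕ :=
  (max (q3 j u) (q3 j v) - min (q3 j u) (q3 j v))
  + (if u ≠ v ∧ u ≤ 1 ∧ v ≤ 1 then 1 else 0)
  + (if u ≠ v ∧ j+3 ≤ u ∧ j+3 ≤ v then 2 else 0)

lemma d3_comm (j u v : ℕ) : d3 j u v = d3 j v u := by
  simp only [d3, q3, ne_eq]; split_ifs <;> omega

lemma d3_self (j u : ℕ) : d3 j u u = 0 := by simp [d3]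

lemma adj3_iff (a j : ℕ) (u v : Fin (a+j+3)) :
    (G3Graph a j).Adj u v ↔ (u.val ≠ v.val ∧
      (((u.val = 0 ∧ v.val = 1) ∨ (u.val = 0 ∧ v.val = 2) ∨ (u.val = 1 ∧ v.val = 2) ∨
       (2 ≤ u.val ∧ u.val ≤ j + 1 ∧ v.val = u.val + 1) ∨ (u.val = j + 2 ∧ j + 3 ≤ v.val)) ∨
       ((v.val = 0 ∧ u.val = 1) ∨ (v.val = 0 ∧ u.val = 2) ∨ (v.val = 1 ∧ u.val = 2) ∨
       (2 ≤ v.val ∧ v.val ≤ j + 1 ∧ u.val = v.val + 1) ∨ (v.val = j + 2 ∧ j + 3 ≤ u.val)))) := by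
  unfold G3Graph
  rw [SimpleGraph.fromRel_adj, ne_eq, Fin.ext_iff]

lemma adj3_of (a j : ℕ) (x y : ℕ) (hx : x < a+j+3) (hy : y < a+j+3)
    (h : x ≠ y ∧
      (((x = 0 ∧ y = 1) ∨ (x = 0 ∧ y = 2) ∨ (x = 1 ∧ y = 2) ∨
       (2 ≤ x ∧ x ≤ j + 1 ∧ y = x + 1) ∨ (x = j + 2 ∧ j + 3 ≤ y)) ∨
       ((y = 0 ∧ x = 1) ∨ (y = 0 ∧ x = 2) ∨ (y = 1 ∧ x = 2) ∨
       (2 ≤ y ∧ y ≤ j + 1 ∧ x = y + 1) ∨ (y = j + 2 ∧ j + 3 ≤ x)))) :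
    (G3Graph a j).Adj ⟨x, hx⟩ ⟨y, hy⟩ := by
  rw [adj3_iff]; exact h

lemma q3_dist_lb (a j : ℕ) {u v : Fin (a+j+3)} (h : (G3Graph a j).Reachable u v) :
    max (q3 j u.val) (q3 j v.val) - min (q3 j u.val) (q3 j v.val) ≤ (G3Graph a j).dist u v := by
  apply potential_le_dist (fun w => q3 j w.val) ?_ h
  intro x y hxy
  rw [adj3_iff] at hxy
  simp only [q3]
  obtain ⟨hne, h|h⟩ := hxy <;> rcases h with h|h|h|h|h <;> omega

def v3 (a j x : ℕ) : Fin (a+j+3) := ⟨x % (a+j+3), Nat.mod_lt _ (by omega)⟩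

lemma v3_val (a j x : ℕ) : (v3 a j x).val = x % (a+j+3) := rfl

lemma adj3_of' (a j x y : ℕ) (hx : x < a+j+3) (hy : y < a+j+3)
    (h : x ≠ y ∧
      (((x = 0 ∧ y = 1) ∨ (x = 0 ∧ y = 2) ∨ (x = 1 ∧ y = 2) ∨
       (2 ≤ x ∧ x ≤ j + 1 ∧ y = x + 1) ∨ (x = j + 2 ∧ j + 3 ≤ y)) ∨
       ((y = 0 ∧ x = 1) ∨ (y = 0 ∧ x = 2) ∨ (y = 1 ∧ x = 2) ∨
       (2 ≤ y ∧ y ≤ j + 1 ∧ x = y + 1) ∨ (y = j + 2 ∧ j + 3 ≤ x)))) :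
    (G3Graph a j).Adj (v3 a j x) (v3 a j y) := by
  rw [adj3_iff, v3_val, v3_val, Nat.mod_eq_of_lt hx, Nat.mod_eq_of_lt hy]
  exact h

lemma v3_eq (a j x : ℕ) {u : Fin (a+j+3)} (h : x = u.val) : v3 a j x = u := by
  apply Fin.ext
  rw [v3_val, h, Nat.mod_eq_of_lt u.isLt]


lemma adj3_mk (a j : ℕ) {x y : ℕ} (hx : x < a+j+3) (hy : y < a+j+3) (hne : x ≠ y)
    (h : (x = 0 ∧ y = 1) ∨ (x = 0 ∧ y = 2) ∨ (x = 1 ∧ y = 2) ∨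
      (2 ≤ x ∧ x ≤ j + 1 ∧ y = x + 1) ∨ (x = j + 2 ∧ j + 3 ≤ y)) :
    (G3Graph a j).Adj (v3 a j x) (v3 a j y) := by
  rw [adj3_iff, v3_val, v3_val, Nat.mod_eq_of_lt hx, Nat.mod_eq_of_lt hy]
  exact ⟨hne, Or.inl h⟩

lemma adj3_top (a j x : ℕ) (hx : x ≤ 1) : (G3Graph a j).Adj (v3 a j x) (v3 a j 2) := by
  apply adj3_mk a j (by omega) (by omega) (by omega)
  rcases Nat.lt_or_ge x 1 with h | h
  · exact Or.inr (Or.inl ⟨by omega, rfl⟩)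
  · exact Or.inr (Or.inr (Or.inl ⟨by omega, rfl⟩))

lemma adj3_path (a j x : ℕ) (h2 : 2 ≤ x) (hxj : x ≤ j+1) :
    (G3Graph a j).Adj (v3 a j x) (v3 a j (x+1)) := by
  apply adj3_mk a j (by omega) (by omega) (by omega)
  exact Or.inr (Or.inr (Or.inr (Or.inl ⟨h2, hxj, rfl⟩)))

lemma adj3_leaf (a j y : ℕ) (hy : j+3 ≤ y) (hyN : y < a+j+3) :
    (G3Graph a j).Adj (v3 a j (j+2)) (v3 a j y) := by
  apply adj3_mk a j (by omega) (by omega) (by omega)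
  exact Or.inr (Or.inr (Or.inr (Or.inr ⟨rfl, hy⟩)))

theorem dist3 (a j : ℕ) (u v : Fin (a+j+3)) :
    (G3Graph a j).dist u v = d3 j u.val v.val := by
  suffices key : ∀ u v : Fin (a+j+3), u.val < v.val →
      (G3Graph a j).dist u v = d3 j u.val v.val by
    rcases lt_trichotomy u.val v.val with h|h|h
    · exact key u v h
    · have : u = v := Fin.ext h
      subst this; simp [SimpleGraph.dist_self, d3_self]
    · rw [SimpleGraph.dist_comm, d3_comm]; exact key v u h
  clear u v
  intro u v huv
  have hvN : v.val < a + j + 3 := v.isLt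
  have huN : u.val < a + j + 3 := u.isLt
  by_cases hv1 : v.val ≤ 1
  · -- C1 : u = 0, v = 1
    have hd3 : d3 j u.val v.val = 1 := by
      simp only [d3, q3, ne_eq]; split_ifs <;> omega
    rw [hd3, SimpleGraph.dist_eq_one_iff_adj, adj3_iff]
    exact ⟨by omega, Or.inl (Or.inl ⟨by omega, by omega⟩)⟩
  by_cases hvp : v.val ≤ j + 2
  · by_cases hu1 : u.val ≤ 1
    · -- C2 : u ≤ 1, 2 ≤ v ≤ j+2
      have hch : (G3Graph a j).Reachable u v ∧ (G3Graph a j).dist u v ≤ v.val - 1 := by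
        apply chain' (fun k => v3 a j (if k = 0 then u.val else min (k+1) v.val)) (v.val - 1)
        · intro k hk
          rcases Nat.eq_zero_or_pos k with rfl | hkpos
          · show (G3Graph a j).Adj (v3 a j u.val) (v3 a j (min (0+1+1) v.val))
            rw [show min (0+1+1) v.val = 2 by omega]
            exact adj3_top a j u.val hu1
          · show (G3Graph a j).Adj (v3 a j (if k = 0 then u.val else min (k+1) v.val))
              (v3 a j (if k+1 = 0 then u.val else min (k+1+1) v.val))
            rw [if_neg (by omega : ¬ (k = 0)), if_neg (by omega : ¬ (k+1 = 0)),
              show min (k+1) v.val = k+1 by omega, show min (k+1+1) v.val = (k+1)+1 by omega]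
            exact adj3_path a j (k+1) (by omega) (by omega)
        · show v3 a j (if 0 = 0 then u.val else min (0+1) v.val) = u
          exact v3_eq _ _ _ rfl
        · show v3 a j (if v.val - 1 = 0 then u.val else min (v.val-1+1) v.val) = v
          rw [if_neg (by omega : ¬ (v.val - 1 = 0))]
          exact v3_eq _ _ _ (by omega)
      obtain ⟨hr, hub⟩ := hch
      have hlb := q3_dist_lb a j hr
      simp only [q3] at hlb
      have hd3 : d3 j u.val v.val = v.val - 1 := by
        simp only [d3, q3, ne_eq]; split_ifs <;> omega
      omega
    · -- C4 : 2 ≤ u < v ≤ j+2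
      push_neg at hu1
      have hch : (G3Graph a j).Reachable u v ∧
          (G3Graph a j).dist u v ≤ v.val - u.val := by
        apply chain' (fun k => v3 a j (min (u.val + k) v.val)) (v.val - u.val)
        · intro k hk
          show (G3Graph a j).Adj (v3 a j (min (u.val + k) v.val))
            (v3 a j (min (u.val + (k+1)) v.val))
          rw [show min (u.val + k) v.val = u.val + k by omega,
            show min (u.val + (k+1)) v.val = (u.val + k) + 1 by omega]
          exact adj3_path a j (u.val + k) (by omega) (by omega)
        · exact v3_eq _ _ _ (by omega)
        · exact v3_eq _ _ _ (by omega)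
      obtain ⟨hr, hub⟩ := hch
      have hlb := q3_dist_lb a j hr
      simp only [q3] at hlb
      have hd3 : d3 j u.val v.val = v.val - u.val := by
        simp only [d3, q3, ne_eq]; split_ifs <;> omega
      omega
  · -- v is a leaf : j+3 ≤ v
    push_neg at hvp
    by_cases hu1 : u.val ≤ 1
    · -- C3 : u ≤ 1, leaf v
      have hch : (G3Graph a j).Reachable u v ∧ (G3Graph a j).dist u v ≤ j + 2 := by
        apply chain' (fun k => v3 a j (if k = 0 then u.val else if k ≤ j+1 then k+1 else v.val))
          (j+2)
        · intro k hk
          rcases Nat.eq_zero_or_pos k with rfl | hkpos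
          · show (G3Graph a j).Adj (v3 a j u.val)
              (v3 a j (if 0+1 = 0 then u.val else if 0+1 ≤ j+1 then 0+1+1 else v.val))
            rw [if_neg (by omega : ¬ (0+1 = 0)), if_pos (by omega : 0+1 ≤ j+1),
              show 0+1+1 = 2 by omega]
            exact adj3_top a j u.val hu1
          · show (G3Graph a j).Adj
              (v3 a j (if k = 0 then u.val else if k ≤ j+1 then k+1 else v.val))
              (v3 a j (if k+1 = 0 then u.val else if k+1 ≤ j+1 then k+1+1 else v.val))
            rw [if_neg (by omega : ¬ (k = 0)), if_neg (by omega : ¬ (k+1 = 0)),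
              if_pos (by omega : k ≤ j+1)]
            by_cases hkj : k + 1 ≤ j + 1
            · rw [if_pos hkj]
              exact adj3_path a j (k+1) (by omega) (by omega)
            · rw [if_neg hkj, show k+1 = j+2 by omega]
              exact adj3_leaf a j v.val (by omega) (by omega)
        · show v3 a j (if 0 = 0 then u.val else if 0 ≤ j+1 then 0+1 else v.val) = u
          exact v3_eq _ _ _ rfl
        · show v3 a j (if j+2 = 0 then u.val else if j+2 ≤ j+1 then j+2+1 else v.val) = v
          rw [if_neg (by omega : ¬ (j+2 = 0)), if_neg (by omega : ¬ (j+2 ≤ j+1))]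
          exact v3_eq _ _ _ rfl
      obtain ⟨hr, hub⟩ := hch
      have hlb := q3_dist_lb a j hr
      simp only [q3] at hlb
      have hd3 : d3 j u.val v.val = j + 2 := by
        simp only [d3, q3, ne_eq]; split_ifs <;> omega
      omega
    · push_neg at hu1
      by_cases hup : u.val ≤ j + 2
      · -- C5 : path u, leaf v
        have hch : (G3Graph a j).Reachable u v ∧
            (G3Graph a j).dist u v ≤ j + 3 - u.val := by
          apply chain'
            (fun k => v3 a j (if k ≤ j+2-u.val then min (u.val+k) (j+2) else v.val))
            (j+3-u.val)
          · intro k hk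
            show (G3Graph a j).Adj
              (v3 a j (if k ≤ j+2-u.val then min (u.val+k) (j+2) else v.val))
              (v3 a j (if k+1 ≤ j+2-u.val then min (u.val+(k+1)) (j+2) else v.val))
            rw [if_pos (by omega : k ≤ j+2-u.val)]
            by_cases hkj : k + 1 ≤ j + 2 - u.val
            · rw [if_pos hkj, show min (u.val+k) (j+2) = u.val + k by omega,
                show min (u.val+(k+1)) (j+2) = (u.val+k)+1 by omega]
              exact adj3_path a j (u.val+k) (by omega) (by omega)
            · rw [if_neg hkj, show min (u.val+k) (j+2) = j+2 by omega]
              exact adj3_leaf a j v.val (by omega) (by omega)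
          · show v3 a j (if 0 ≤ j+2-u.val then min (u.val+0) (j+2) else v.val) = u
            rw [if_pos (by omega : 0 ≤ j+2-u.val)]
            exact v3_eq _ _ _ (by omega)
          · show v3 a j (if j+3-u.val ≤ j+2-u.val then min (u.val+(j+3-u.val)) (j+2)
              else v.val) = v
            rw [if_neg (by omega : ¬ (j+3-u.val ≤ j+2-u.val))]
            exact v3_eq _ _ _ rfl
        obtain ⟨hr, hub⟩ := hch
        have hlb := q3_dist_lb a j hr
        simp only [q3] at hlb
        have hd3 : d3 j u.val v.val = j + 3 - u.val := by
          simp only [d3, q3, ne_eq]; split_ifs <;> omega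
        omega
      · -- C6 : leaf u, leaf v
        push_neg at hup
        have hch : (G3Graph a j).Reachable u v ∧ (G3Graph a j).dist u v ≤ 2 := by
          apply chain'
            (fun k => v3 a j (if k = 0 then u.val else if k = 1 then j+2 else v.val)) 2
          · intro k hk
            interval_cases k
            · show (G3Graph a j).Adj (v3 a j u.val) (v3 a j (j+2))
              exact (adj3_leaf a j u.val (by omega) (by omega)).symm
            · show (G3Graph a j).Adj (v3 a j (j+2)) (v3 a j v.val)
              exact adj3_leaf a j v.val (by omega) (by omega)
          · show v3 a j u.val = u
            exact v3_eq _ _ _ rfl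
          · show v3 a j v.val = v
            exact v3_eq _ _ _ rfl
        obtain ⟨hr, hub⟩ := hch
        have hlb := two_le_dist hr (by
          intro hEq; rw [Fin.ext_iff] at hEq; omega) (by
          rw [adj3_iff]
          rintro ⟨hne, h|h⟩ <;> rcases h with h|h|h|h|h <;> omega)
        have hd3 : d3 j u.val v.val = 2 := by
          simp only [d3, q3, ne_eq]; split_ifs <;> omega
        omega


def q4 (j a x : ℕ) : ℕ := if j+4+a ≤ x then 0 else if x = 0 then 2 else min x (j+4)

def d4 (j a u v : ℕ) : ℕ :=
  (max (q4 j a u) (q4 j a v) - min (q4 j a u) (q4 j a v))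
  + (if (u = 0 ∧ v = 2) ∨ (u = 2 ∧ v = 0) then 2 else 0)
  + (if u ≠ v ∧ j+4 ≤ u ∧ u < j+4+a ∧ j+4 ≤ v ∧ v < j+4+a then 2 else 0)
  + (if u ≠ v ∧ j+4+a ≤ u ∧ j+4+a ≤ v then 2 else 0)

lemma d4_self (j a u : ℕ) : d4 j a u u = 0 := by
  have h1 : ¬ ((u ≠ u ∧ j+4 ≤ u ∧ u < j+4+a ∧ j+4 ≤ u ∧ u < j+4+a)) := by omega
  have h2 : ¬ (u ≠ u ∧ j+4+a ≤ u ∧ j+4+a ≤ u) := by omega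
  have h3 : ¬ ((u = 0 ∧ u = 2) ∨ (u = 2 ∧ u = 0)) := by omega
  rw [d4, if_neg h1, if_neg h2, if_neg h3]
  omega

lemma d4_comm (j a u v : ℕ) : d4 j a u v = d4 j a v u := by
  rw [d4, d4, max_comm, min_comm]
  have e1 : ((u = 0 ∧ v = 2) ∨ (u = 2 ∧ v = 0)) ↔ ((v = 0 ∧ u = 2) ∨ (v = 2 ∧ u = 0)) := by
    omega
  have e2 : (u ≠ v ∧ j+4 ≤ u ∧ u < j+4+a ∧ j+4 ≤ v ∧ v < j+4+a) ↔
      (v ≠ u ∧ j+4 ≤ v ∧ v < j+4+a ∧ j+4 ≤ u ∧ u < j+4+a) := by omega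
  have e3 : (u ≠ v ∧ j+4+a ≤ u ∧ j+4+a ≤ v) ↔ (v ≠ u ∧ j+4+a ≤ v ∧ j+4+a ≤ u) := by omega
  rw [if_congr e1 rfl rfl, if_congr e2 rfl rfl, if_congr e3 rfl rfl]

lemma adj4_iff (a c j : ℕ) (u v : Fin (a+c+j+4)) :
    (G4Graph a c j).Adj u v ↔ (u.val ≠ v.val ∧
      (((u.val = 0 ∧ v.val = 1) ∨ (u.val = 1 ∧ v.val = 2) ∨ (u.val = 2 ∧ v.val = 3) ∨
       (u.val = 0 ∧ v.val = 3) ∨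
       (3 ≤ u.val ∧ u.val ≤ j + 2 ∧ v.val = u.val + 1) ∨
       (u.val = j + 3 ∧ j + 4 ≤ v.val ∧ v.val < j + 4 + a) ∨
       (u.val = 1 ∧ j + 4 + a ≤ v.val)) ∨
       ((v.val = 0 ∧ u.val = 1) ∨ (v.val = 1 ∧ u.val = 2) ∨ (v.val = 2 ∧ u.val = 3) ∨
       (v.val = 0 ∧ u.val = 3) ∨
       (3 ≤ v.val ∧ v.val ≤ j + 2 ∧ u.val = v.val + 1) ∨
       (v.val = j + 3 ∧ j + 4 ≤ u.val ∧ u.val < j + 4 + a) ∨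
       (v.val = 1 ∧ j + 4 + a ≤ u.val)))) := by
  unfold G4Graph
  rw [SimpleGraph.fromRel_adj, ne_eq, Fin.ext_iff]

def v4 (a c j x : ℕ) : Fin (a+c+j+4) := ⟨x % (a+c+j+4), Nat.mod_lt _ (by omega)⟩

lemma v4_val (a c j x : ℕ) : (v4 a c j x).val = x % (a+c+j+4) := rfl

lemma v4_eq (a c j x : ℕ) {u : Fin (a+c+j+4)} (h : x = u.val) : v4 a c j x = u := by
  apply Fin.ext
  rw [v4_val, h, Nat.mod_eq_of_lt u.isLt]

lemma adj4_mk (a c j : ℕ) {x y : ℕ} (hx : x < a+c+j+4) (hy : y < a+c+j+4) (hne : x ≠ y)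
    (h : (x = 0 ∧ y = 1) ∨ (x = 1 ∧ y = 2) ∨ (x = 2 ∧ y = 3) ∨ (x = 0 ∧ y = 3) ∨
      (3 ≤ x ∧ x ≤ j + 2 ∧ y = x + 1) ∨
      (x = j + 3 ∧ j + 4 ≤ y ∧ y < j + 4 + a) ∨
      (x = 1 ∧ j + 4 + a ≤ y)) :
    (G4Graph a c j).Adj (v4 a c j x) (v4 a c j y) := by
  rw [adj4_iff, v4_val, v4_val, Nat.mod_eq_of_lt hx, Nat.mod_eq_of_lt hy]
  exact ⟨hne, Or.inl h⟩

lemma adj4_01 (a c j : ℕ) : (G4Graph a c j).Adj (v4 a c j 0) (v4 a c j 1) :=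
  adj4_mk a c j (by omega) (by omega) (by omega) (Or.inl ⟨rfl, rfl⟩)

lemma adj4_12 (a c j : ℕ) : (G4Graph a c j).Adj (v4 a c j 1) (v4 a c j 2) :=
  adj4_mk a c j (by omega) (by omega) (by omega) (Or.inr (Or.inl ⟨rfl, rfl⟩))

lemma adj4_23 (a c j : ℕ) : (G4Graph a c j).Adj (v4 a c j 2) (v4 a c j 3) :=
  adj4_mk a c j (by omega) (by omega) (by omega) (Or.inr (Or.inr (Or.inl ⟨rfl, rfl⟩)))

lemma adj4_03 (a c j : ℕ) : (G4Graph a c j).Adj (v4 a c j 0) (v4 a c j 3) :=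
  adj4_mk a c j (by omega) (by omega) (by omega)
    (Or.inr (Or.inr (Or.inr (Or.inl ⟨rfl, rfl⟩))))

lemma adj4_path (a c j x : ℕ) (h3 : 3 ≤ x) (hxj : x ≤ j+2) :
    (G4Graph a c j).Adj (v4 a c j x) (v4 a c j (x+1)) :=
  adj4_mk a c j (by omega) (by omega) (by omega)
    (Or.inr (Or.inr (Or.inr (Or.inr (Or.inl ⟨h3, hxj, rfl⟩)))))

lemma adj4_aleaf (a c j y : ℕ) (hy : j+4 ≤ y) (hy2 : y < j+4+a) :
    (G4Graph a c j).Adj (v4 a c j (j+3)) (v4 a c j y) :=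
  adj4_mk a c j (by omega) (by omega) (by omega)
    (Or.inr (Or.inr (Or.inr (Or.inr (Or.inr (Or.inl ⟨rfl, hy, hy2⟩))))))

lemma adj4_cleaf (a c j y : ℕ) (hy : j+4+a ≤ y) (hyN : y < a+c+j+4) :
    (G4Graph a c j).Adj (v4 a c j 1) (v4 a c j y) :=
  adj4_mk a c j (by omega) (by omega) (by omega)
    (Or.inr (Or.inr (Or.inr (Or.inr (Or.inr (Or.inr ⟨rfl, hy⟩))))))

lemma q4_dist_lb (a c j : ℕ) {u v : Fin (a+c+j+4)} (h : (G4Graph a c j).Reachable u v) :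
    max (q4 j a u.val) (q4 j a v.val) - min (q4 j a u.val) (q4 j a v.val)
      ≤ (G4Graph a c j).dist u v := by
  apply potential_le_dist (fun w => q4 j a w.val) ?_ h
  intro x y hxy
  rw [adj4_iff] at hxy
  obtain ⟨hne, h|h⟩ := hxy <;> rcases h with h|h|h|h|h|h|h <;>
    (simp only [q4]; split_ifs <;> omega)


end WAux

namespace WAux4
open WAux

lemma q4_eval (j a x : ℕ) : (j+4+a ≤ x ∧ q4 j a x = 0) ∨ (x = 0 ∧ x < j+4+a ∧ q4 j a x = 2) ∨
    (0 < x ∧ x < j+4+a ∧ q4 j a x = min x (j+4)) := by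
  rw [q4]; split_ifs <;> omega

lemma d4_eval (j a u v : ℕ) (h02 : ¬((u = 0 ∧ v = 2) ∨ (u = 2 ∧ v = 0)))
    (hE : ¬(u ≠ v ∧ j+4 ≤ u ∧ u < j+4+a ∧ j+4 ≤ v ∧ v < j+4+a))
    (hF : ¬(u ≠ v ∧ j+4+a ≤ u ∧ j+4+a ≤ v)) :
    d4 j a u v = max (q4 j a u) (q4 j a v) - min (q4 j a u) (q4 j a v) := by
  rw [d4, if_neg h02, if_neg hE, if_neg hF]
  omega

lemma d4_eval' (j a u v : ℕ) (h : ((u = 0 ∧ v = 2) ∨ (u = 2 ∧ v = 0)) ∨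
      (u ≠ v ∧ j+4 ≤ u ∧ u < j+4+a ∧ j+4 ≤ v ∧ v < j+4+a) ∨
      (u ≠ v ∧ j+4+a ≤ u ∧ j+4+a ≤ v)) :
    d4 j a u v = 2 := by
  have hqu := q4_eval j a u
  have hqv := q4_eval j a v
  rcases h with h | h | h
  · rw [d4, if_pos h, if_neg (by omega), if_neg (by omega)]; omega
  · rw [d4, if_neg (by omega), if_pos h, if_neg (by omega)]; omega
  · rw [d4, if_neg (by omega), if_neg (by omega), if_pos h]; omega

theorem dist4 (a c j : ℕ) (u v : Fin (a+c+j+4)) :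
    (G4Graph a c j).dist u v = d4 j a u.val v.val := by
  suffices key : ∀ u v : Fin (a+c+j+4), u.val < v.val →
      (G4Graph a c j).dist u v = d4 j a u.val v.val by
    rcases lt_trichotomy u.val v.val with h|h|h
    · exact key u v h
    · have : u = v := Fin.ext h
      subst this; simp [SimpleGraph.dist_self, d4_self]
    · rw [SimpleGraph.dist_comm, d4_comm]; exact key v u h
  clear u v
  intro u v huv
  have hvN : v.val < a + c + j + 4 := v.isLt
  have huN : u.val < a + c + j + 4 := u.isLt
  have hqu := q4_eval j a u.val
  have hqv := q4_eval j a v.val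
  by_cases hv1 : v.val ≤ 1
  · -- u=0, v=1 : adjacent
    have hd4 : d4 j a u.val v.val = 1 := by
      rw [d4_eval j a _ _ (by omega) (by omega) (by omega)]; omega
    rw [hd4, SimpleGraph.dist_eq_one_iff_adj, adj4_iff]
    exact ⟨by omega, Or.inl (Or.inl ⟨by omega, by omega⟩)⟩
  by_cases hv2 : v.val = 2
  · by_cases hu1 : u.val = 1
    · -- (1,2) adjacent
      have hd4 : d4 j a u.val v.val = 1 := by
        rw [d4_eval j a _ _ (by omega) (by omega) (by omega)]; omega
      rw [hd4, SimpleGraph.dist_eq_one_iff_adj, adj4_iff]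
      exact ⟨by omega, Or.inl (Or.inr (Or.inl ⟨by omega, by omega⟩))⟩
    · -- (0,2) : distance 2
      have hu0 : u.val = 0 := by omega
      have hch : (G4Graph a c j).Reachable u v ∧ (G4Graph a c j).dist u v ≤ 2 := by
        apply chain' (fun k => v4 a c j (if k = 0 then u.val else if k = 1 then 1 else v.val)) 2
        · intro k hk
          interval_cases k
          · show (G4Graph a c j).Adj (v4 a c j u.val) (v4 a c j 1)
            rw [show u.val = 0 from hu0]; exact adj4_01 a c j
          · show (G4Graph a c j).Adj (v4 a c j 1) (v4 a c j v.val)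
            rw [show v.val = 2 from hv2]; exact adj4_12 a c j
        · show v4 a c j u.val = u
          exact v4_eq _ _ _ _ rfl
        · show v4 a c j v.val = v
          exact v4_eq _ _ _ _ rfl
      obtain ⟨hr, hub⟩ := hch
      have hlb := two_le_dist hr (by intro hEq; rw [Fin.ext_iff] at hEq; omega) (by
        rw [adj4_iff]
        rintro ⟨hne, h|h⟩ <;> rcases h with h|h|h|h|h|h|h <;> omega)
      have hd4 : d4 j a u.val v.val = 2 := d4_eval' j a _ _ (Or.inl (Or.inl ⟨hu0, hv2⟩))
      omega
  by_cases hvD : v.val ≤ j + 3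
  · -- v on the path, 3 ≤ v ≤ j+3
    have hv3 : 3 ≤ v.val := by omega
    have hd4 : d4 j a u.val v.val = v.val - q4 j a u.val := by
      rw [d4_eval j a _ _ (by omega) (by omega) (by omega)]; omega
    by_cases hu0 : u.val = 0
    · have hch : (G4Graph a c j).Reachable u v ∧ (G4Graph a c j).dist u v ≤ v.val - 2 := by
        apply chain' (fun k => v4 a c j (if k = 0 then u.val else min (k+2) v.val)) (v.val - 2)
        · intro k hk
          rcases Nat.eq_zero_or_pos k with rfl | hkpos
          · show (G4Graph a c j).Adj (v4 a c j u.val) (v4 a c j (min (0+1+2) v.val))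
            rw [show min (0+1+2) v.val = 3 by omega, show u.val = 0 from hu0]
            exact adj4_03 a c j
          · show (G4Graph a c j).Adj (v4 a c j (if k = 0 then u.val else min (k+2) v.val))
              (v4 a c j (if k+1 = 0 then u.val else min (k+1+2) v.val))
            rw [if_neg (by omega : ¬ (k = 0)), if_neg (by omega : ¬ (k+1 = 0)),
              show min (k+2) v.val = k+2 by omega, show min (k+1+2) v.val = (k+2)+1 by omega]
            exact adj4_path a c j (k+2) (by omega) (by omega)
        · show v4 a c j (if 0 = 0 then u.val else min (0+2) v.val) = u
          exact v4_eq _ _ _ _ rfl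
        · show v4 a c j (if v.val - 2 = 0 then u.val else min (v.val-2+2) v.val) = v
          rw [if_neg (by omega : ¬ (v.val - 2 = 0))]
          exact v4_eq _ _ _ _ (by omega)
      obtain ⟨hr, hub⟩ := hch
      have hlb := q4_dist_lb a c j hr
      omega
    by_cases hu1 : u.val = 1
    · have hch : (G4Graph a c j).Reachable u v ∧ (G4Graph a c j).dist u v ≤ v.val - 1 := by
        apply chain' (fun k => v4 a c j (if k = 0 then u.val else min (k+1) v.val)) (v.val - 1)
        · intro k hk
          rcases Nat.eq_zero_or_pos k with rfl | hkpos
          · show (G4Graph a c j).Adj (v4 a c j u.val) (v4 a c j (min (0+1+1) v.val))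
            rw [show min (0+1+1) v.val = 2 by omega, show u.val = 1 from hu1]
            exact adj4_12 a c j
          · show (G4Graph a c j).Adj (v4 a c j (if k = 0 then u.val else min (k+1) v.val))
              (v4 a c j (if k+1 = 0 then u.val else min (k+1+1) v.val))
            rw [if_neg (by omega : ¬ (k = 0)), if_neg (by omega : ¬ (k+1 = 0))]
            rcases Nat.eq_zero_or_pos (k-1) with hk1 | hk1pos
            · rw [show min (k+1) v.val = 2 by omega, show min (k+1+1) v.val = 3 by omega]
              exact adj4_23 a c j
            · rw [show min (k+1) v.val = k+1 by omega,
                show min (k+1+1) v.val = (k+1)+1 by omega]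
              exact adj4_path a c j (k+1) (by omega) (by omega)
        · show v4 a c j (if 0 = 0 then u.val else min (0+1) v.val) = u
          exact v4_eq _ _ _ _ rfl
        · show v4 a c j (if v.val - 1 = 0 then u.val else min (v.val-1+1) v.val) = v
          rw [if_neg (by omega : ¬ (v.val - 1 = 0))]
          exact v4_eq _ _ _ _ (by omega)
      obtain ⟨hr, hub⟩ := hch
      have hlb := q4_dist_lb a c j hr
      omega
    by_cases hu2 : u.val = 2
    · have hch : (G4Graph a c j).Reachable u v ∧ (G4Graph a c j).dist u v ≤ v.val - 2 := by
        apply chain' (fun k => v4 a c j (if k = 0 then u.val else min (k+2) v.val)) (v.val - 2)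
        · intro k hk
          rcases Nat.eq_zero_or_pos k with rfl | hkpos
          · show (G4Graph a c j).Adj (v4 a c j u.val) (v4 a c j (min (0+1+2) v.val))
            rw [show min (0+1+2) v.val = 3 by omega, show u.val = 2 from hu2]
            exact adj4_23 a c j
          · show (G4Graph a c j).Adj (v4 a c j (if k = 0 then u.val else min (k+2) v.val))
              (v4 a c j (if k+1 = 0 then u.val else min (k+1+2) v.val))
            rw [if_neg (by omega : ¬ (k = 0)), if_neg (by omega : ¬ (k+1 = 0)),
              show min (k+2) v.val = k+2 by omega, show min (k+1+2) v.val = (k+2)+1 by omega]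
            exact adj4_path a c j (k+2) (by omega) (by omega)
        · show v4 a c j (if 0 = 0 then u.val else min (0+2) v.val) = u
          exact v4_eq _ _ _ _ rfl
        · show v4 a c j (if v.val - 2 = 0 then u.val else min (v.val-2+2) v.val) = v
          rw [if_neg (by omega : ¬ (v.val - 2 = 0))]
          exact v4_eq _ _ _ _ (by omega)
      obtain ⟨hr, hub⟩ := hch
      have hlb := q4_dist_lb a c j hr
      omega
    · -- u on path
      have hu3 : 3 ≤ u.val := by omega
      have hch : (G4Graph a c j).Reachable u v ∧
          (G4Graph a c j).dist u v ≤ v.val - u.val := by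
        apply chain' (fun k => v4 a c j (min (u.val + k) v.val)) (v.val - u.val)
        · intro k hk
          show (G4Graph a c j).Adj (v4 a c j (min (u.val + k) v.val))
            (v4 a c j (min (u.val + (k+1)) v.val))
          rw [show min (u.val + k) v.val = u.val + k by omega,
            show min (u.val + (k+1)) v.val = (u.val + k) + 1 by omega]
          exact adj4_path a c j (u.val + k) (by omega) (by omega)
        · exact v4_eq _ _ _ _ (by omega)
        · exact v4_eq _ _ _ _ (by omega)
      obtain ⟨hr, hub⟩ := hch
      have hlb := q4_dist_lb a c j hr
      omega
  by_cases hvE : v.val < j + 4 + a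
  · -- v is an a-leaf : j+4 ≤ v < j+4+a
    have hv4 : j + 4 ≤ v.val := by omega
    by_cases hu0 : u.val = 0
    · have hd4 : d4 j a u.val v.val = j + 2 := by
        rw [d4_eval j a _ _ (by omega) (by omega) (by omega)]; omega
      have hch : (G4Graph a c j).Reachable u v ∧ (G4Graph a c j).dist u v ≤ j + 2 := by
        apply chain' (fun k => v4 a c j
          (if k = 0 then u.val else if k ≤ j+1 then k+2 else v.val)) (j+2)
        · intro k hk
          rcases Nat.eq_zero_or_pos k with rfl | hkpos
          · show (G4Graph a c j).Adj (v4 a c j u.val)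
              (v4 a c j (if 0+1 = 0 then u.val else if 0+1 ≤ j+1 then 0+1+2 else v.val))
            rw [if_neg (by omega : ¬ (0+1 = 0)), if_pos (by omega : 0+1 ≤ j+1),
              show 0+1+2 = 3 by omega, show u.val = 0 from hu0]
            exact adj4_03 a c j
          · show (G4Graph a c j).Adj
              (v4 a c j (if k = 0 then u.val else if k ≤ j+1 then k+2 else v.val))
              (v4 a c j (if k+1 = 0 then u.val else if k+1 ≤ j+1 then k+1+2 else v.val))
            rw [if_neg (by omega : ¬ (k = 0)), if_neg (by omega : ¬ (k+1 = 0)),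
              if_pos (by omega : k ≤ j+1)]
            by_cases hkj : k + 1 ≤ j + 1
            · rw [if_pos hkj, show k+1+2 = (k+2)+1 by omega]
              exact adj4_path a c j (k+2) (by omega) (by omega)
            · rw [if_neg hkj, show k+2 = j+3 by omega]
              exact adj4_aleaf a c j v.val (by omega) (by omega)
        · show v4 a c j (if 0 = 0 then u.val else if 0 ≤ j+1 then 0+2 else v.val) = u
          exact v4_eq _ _ _ _ rfl
        · show v4 a c j (if j+2 = 0 then u.val else if j+2 ≤ j+1 then j+2+2 else v.val) = v
          rw [if_neg (by omega : ¬ (j+2 = 0)), if_neg (by omega : ¬ (j+2 ≤ j+1))]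
          exact v4_eq _ _ _ _ rfl
      obtain ⟨hr, hub⟩ := hch
      have hlb := q4_dist_lb a c j hr
      omega
    by_cases hu1 : u.val = 1
    · have hd4 : d4 j a u.val v.val = j + 3 := by
        rw [d4_eval j a _ _ (by omega) (by omega) (by omega)]; omega
      have hch : (G4Graph a c j).Reachable u v ∧ (G4Graph a c j).dist u v ≤ j + 3 := by
        apply chain' (fun k => v4 a c j
          (if k = 0 then u.val else if k ≤ j+2 then k+1 else v.val)) (j+3)
        · intro k hk
          rcases Nat.eq_zero_or_pos k with rfl | hkpos
          · show (G4Graph a c j).Adj (v4 a c j u.val)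
              (v4 a c j (if 0+1 = 0 then u.val else if 0+1 ≤ j+2 then 0+1+1 else v.val))
            rw [if_neg (by omega : ¬ (0+1 = 0)), if_pos (by omega : 0+1 ≤ j+2),
              show 0+1+1 = 2 by omega, show u.val = 1 from hu1]
            exact adj4_12 a c j
          · show (G4Graph a c j).Adj
              (v4 a c j (if k = 0 then u.val else if k ≤ j+2 then k+1 else v.val))
              (v4 a c j (if k+1 = 0 then u.val else if k+1 ≤ j+2 then k+1+1 else v.val))
            rw [if_neg (by omega : ¬ (k = 0)), if_neg (by omega : ¬ (k+1 = 0)),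
              if_pos (by omega : k ≤ j+2)]
            by_cases hkj : k + 1 ≤ j + 2
            · rcases Nat.eq_zero_or_pos (k-1) with hk1 | hk1pos
              · rw [if_pos hkj, show k+1 = 2 by omega]
                exact adj4_23 a c j
              · rw [if_pos hkj, show k+1+1 = (k+1)+1 by omega]
                exact adj4_path a c j (k+1) (by omega) (by omega)
            · rw [if_neg hkj, show k+1 = j+3 by omega]
              exact adj4_aleaf a c j v.val (by omega) (by omega)
        · show v4 a c j (if 0 = 0 then u.val else if 0 ≤ j+2 then 0+1 else v.val) = u
          exact v4_eq _ _ _ _ rfl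
        · show v4 a c j (if j+3 = 0 then u.val else if j+3 ≤ j+2 then j+3+1 else v.val) = v
          rw [if_neg (by omega : ¬ (j+3 = 0)), if_neg (by omega : ¬ (j+3 ≤ j+2))]
          exact v4_eq _ _ _ _ rfl
      obtain ⟨hr, hub⟩ := hch
      have hlb := q4_dist_lb a c j hr
      omega
    by_cases hu2 : u.val = 2
    · have hd4 : d4 j a u.val v.val = j + 2 := by
        rw [d4_eval j a _ _ (by omega) (by omega) (by omega)]; omega
      have hch : (G4Graph a c j).Reachable u v ∧ (G4Graph a c j).dist u v ≤ j + 2 := by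
        apply chain' (fun k => v4 a c j
          (if k = 0 then u.val else if k ≤ j+1 then k+2 else v.val)) (j+2)
        · intro k hk
          rcases Nat.eq_zero_or_pos k with rfl | hkpos
          · show (G4Graph a c j).Adj (v4 a c j u.val)
              (v4 a c j (if 0+1 = 0 then u.val else if 0+1 ≤ j+1 then 0+1+2 else v.val))
            rw [if_neg (by omega : ¬ (0+1 = 0)), if_pos (by omega : 0+1 ≤ j+1),
              show 0+1+2 = 3 by omega, show u.val = 2 from hu2]
            exact adj4_23 a c j
          · show (G4Graph a c j).Adj
              (v4 a c j (if k = 0 then u.val else if k ≤ j+1 then k+2 else v.val))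
              (v4 a c j (if k+1 = 0 then u.val else if k+1 ≤ j+1 then k+1+2 else v.val))
            rw [if_neg (by omega : ¬ (k = 0)), if_neg (by omega : ¬ (k+1 = 0)),
              if_pos (by omega : k ≤ j+1)]
            by_cases hkj : k + 1 ≤ j + 1
            · rw [if_pos hkj, show k+1+2 = (k+2)+1 by omega]
              exact adj4_path a c j (k+2) (by omega) (by omega)
            · rw [if_neg hkj, show k+2 = j+3 by omega]
              exact adj4_aleaf a c j v.val (by omega) (by omega)
        · show v4 a c j (if 0 = 0 then u.val else if 0 ≤ j+1 then 0+2 else v.val) = u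
          exact v4_eq _ _ _ _ rfl
        · show v4 a c j (if j+2 = 0 then u.val else if j+2 ≤ j+1 then j+2+2 else v.val) = v
          rw [if_neg (by omega : ¬ (j+2 = 0)), if_neg (by omega : ¬ (j+2 ≤ j+1))]
          exact v4_eq _ _ _ _ rfl
      obtain ⟨hr, hub⟩ := hch
      have hlb := q4_dist_lb a c j hr
      omega
    by_cases huD : u.val ≤ j + 3
    · -- path u to a-leaf v
      have hu3 : 3 ≤ u.val := by omega
      have hd4 : d4 j a u.val v.val = j + 4 - u.val := by
        rw [d4_eval j a _ _ (by omega) (by omega) (by omega)]; omega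
      have hch : (G4Graph a c j).Reachable u v ∧
          (G4Graph a c j).dist u v ≤ j + 4 - u.val := by
        apply chain' (fun k => v4 a c j
          (if k ≤ j+3-u.val then min (u.val+k) (j+3) else v.val)) (j+4-u.val)
        · intro k hk
          show (G4Graph a c j).Adj
            (v4 a c j (if k ≤ j+3-u.val then min (u.val+k) (j+3) else v.val))
            (v4 a c j (if k+1 ≤ j+3-u.val then min (u.val+(k+1)) (j+3) else v.val))
          rw [if_pos (by omega : k ≤ j+3-u.val)]
          by_cases hkj : k + 1 ≤ j + 3 - u.val
          · rw [if_pos hkj, show min (u.val+k) (j+3) = u.val + k by omega,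
              show min (u.val+(k+1)) (j+3) = (u.val+k)+1 by omega]
            exact adj4_path a c j (u.val+k) (by omega) (by omega)
          · rw [if_neg hkj, show min (u.val+k) (j+3) = j+3 by omega]
            exact adj4_aleaf a c j v.val (by omega) (by omega)
        · show v4 a c j (if 0 ≤ j+3-u.val then min (u.val+0) (j+3) else v.val) = u
          rw [if_pos (by omega : 0 ≤ j+3-u.val)]
          exact v4_eq _ _ _ _ (by omega)
        · show v4 a c j (if j+4-u.val ≤ j+3-u.val then min (u.val+(j+4-u.val)) (j+3)
            else v.val) = v
          rw [if_neg (by omega : ¬ (j+4-u.val ≤ j+3-u.val))]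
          exact v4_eq _ _ _ _ rfl
      obtain ⟨hr, hub⟩ := hch
      have hlb := q4_dist_lb a c j hr
      omega
    · -- a-leaf u, a-leaf v
      have huE : j + 4 ≤ u.val := by omega
      have hch : (G4Graph a c j).Reachable u v ∧ (G4Graph a c j).dist u v ≤ 2 := by
        apply chain' (fun k => v4 a c j
          (if k = 0 then u.val else if k = 1 then j+3 else v.val)) 2
        · intro k hk
          interval_cases k
          · show (G4Graph a c j).Adj (v4 a c j u.val) (v4 a c j (j+3))
            exact (adj4_aleaf a c j u.val (by omega) (by omega)).symm
          · show (G4Graph a c j).Adj (v4 a c j (j+3)) (v4 a c j v.val)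
            exact adj4_aleaf a c j v.val (by omega) (by omega)
        · show v4 a c j u.val = u
          exact v4_eq _ _ _ _ rfl
        · show v4 a c j v.val = v
          exact v4_eq _ _ _ _ rfl
      obtain ⟨hr, hub⟩ := hch
      have hlb := two_le_dist hr (by intro hEq; rw [Fin.ext_iff] at hEq; omega) (by
        rw [adj4_iff]
        rintro ⟨hne, h|h⟩ <;> rcases h with h|h|h|h|h|h|h <;> omega)
      have hd4 : d4 j a u.val v.val = 2 := d4_eval' j a _ _ (Or.inr (Or.inl
        ⟨by omega, huE, by omega, hv4, hvE⟩))
      omega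
  · -- v is a c-leaf : j+4+a ≤ v
    push_neg at hvE
    by_cases hu0 : u.val = 0
    · have hd4 : d4 j a u.val v.val = 2 := by
        rw [d4_eval j a _ _ (by omega) (by omega) (by omega)]; omega
      have hch : (G4Graph a c j).Reachable u v ∧ (G4Graph a c j).dist u v ≤ 2 := by
        apply chain' (fun k => v4 a c j
          (if k = 0 then u.val else if k = 1 then 1 else v.val)) 2
        · intro k hk
          interval_cases k
          · show (G4Graph a c j).Adj (v4 a c j u.val) (v4 a c j 1)
            rw [show u.val = 0 from hu0]; exact adj4_01 a c j
          · show (G4Graph a c j).Adj (v4 a c j 1) (v4 a c j v.val)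
            exact adj4_cleaf a c j v.val hvE (by omega)
        · show v4 a c j u.val = u
          exact v4_eq _ _ _ _ rfl
        · show v4 a c j v.val = v
          exact v4_eq _ _ _ _ rfl
      obtain ⟨hr, hub⟩ := hch
      have hlb := q4_dist_lb a c j hr
      have hq2 : max (q4 j a u.val) (q4 j a v.val) - min (q4 j a u.val) (q4 j a v.val) = 2 := by
        omega
      omega
    by_cases hu1 : u.val = 1
    · have hd4 : d4 j a u.val v.val = 1 := by
        rw [d4_eval j a _ _ (by omega) (by omega) (by omega)]; omega
      rw [hd4, SimpleGraph.dist_eq_one_iff_adj, adj4_iff]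
      refine ⟨by omega, Or.inl ?_⟩
      exact Or.inr (Or.inr (Or.inr (Or.inr (Or.inr (Or.inr ⟨hu1, hvE⟩)))))
    by_cases hu2 : u.val = 2
    · have hd4 : d4 j a u.val v.val = 2 := by
        rw [d4_eval j a _ _ (by omega) (by omega) (by omega)]; omega
      have hch : (G4Graph a c j).Reachable u v ∧ (G4Graph a c j).dist u v ≤ 2 := by
        apply chain' (fun k => v4 a c j
          (if k = 0 then u.val else if k = 1 then 1 else v.val)) 2
        · intro k hk
          interval_cases k
          · show (G4Graph a c j).Adj (v4 a c j u.val) (v4 a c j 1)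
            rw [show u.val = 2 from hu2]
            exact (adj4_12 a c j).symm
          · show (G4Graph a c j).Adj (v4 a c j 1) (v4 a c j v.val)
            exact adj4_cleaf a c j v.val hvE (by omega)
        · show v4 a c j u.val = u
          exact v4_eq _ _ _ _ rfl
        · show v4 a c j v.val = v
          exact v4_eq _ _ _ _ rfl
      obtain ⟨hr, hub⟩ := hch
      have hlb := q4_dist_lb a c j hr
      omega
    by_cases huD : u.val ≤ j + 3
    · -- path u to c-leaf v : distance u.val
      have hu3 : 3 ≤ u.val := by omega
      have hd4 : d4 j a u.val v.val = u.val := by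
        rw [d4_eval j a _ _ (by omega) (by omega) (by omega)]; omega
      have hch : (G4Graph a c j).Reachable u v ∧ (G4Graph a c j).dist u v ≤ u.val := by
        apply chain' (fun k => v4 a c j
          (if k ≤ u.val - 3 then u.val - k else if k = u.val - 2 then 0
           else if k = u.val - 1 then 1 else v.val)) u.val
        · intro k hk
          show (G4Graph a c j).Adj
            (v4 a c j (if k ≤ u.val - 3 then u.val - k else if k = u.val - 2 then 0
              else if k = u.val - 1 then 1 else v.val))
            (v4 a c j (if k+1 ≤ u.val - 3 then u.val - (k+1) else if k+1 = u.val - 2 then 0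
              else if k+1 = u.val - 1 then 1 else v.val))
          by_cases h1 : k + 1 ≤ u.val - 3
          · rw [if_pos (by omega : k ≤ u.val - 3), if_pos h1,
              show u.val - k = (u.val - (k+1)) + 1 by omega]
            exact (adj4_path a c j (u.val - (k+1)) (by omega) (by omega)).symm
          by_cases h2 : k + 1 = u.val - 2
          · rw [if_pos (by omega : k ≤ u.val - 3), if_neg h1, if_pos h2,
              show u.val - k = 3 by omega]
            exact (adj4_03 a c j).symm
          by_cases h3 : k + 1 = u.val - 1
          · rw [if_neg (by omega : ¬ (k ≤ u.val - 3)), if_pos (by omega : k = u.val - 2),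
              if_neg h1, if_neg h2, if_pos h3]
            exact adj4_01 a c j
          · rw [if_neg (by omega : ¬ (k ≤ u.val - 3)), if_neg (by omega : ¬ (k = u.val - 2)),
              if_pos (by omega : k = u.val - 1), if_neg h1, if_neg h2, if_neg h3]
            exact adj4_cleaf a c j v.val hvE (by omega)
        · show v4 a c j (if 0 ≤ u.val - 3 then u.val - 0 else if 0 = u.val - 2 then 0
            else if 0 = u.val - 1 then 1 else v.val) = u
          rw [if_pos (by omega : 0 ≤ u.val - 3)]
          exact v4_eq _ _ _ _ (by omega)
        · show v4 a c j (if u.val ≤ u.val - 3 then u.val - u.val else if u.val = u.val - 2 then 0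
            else if u.val = u.val - 1 then 1 else v.val) = v
          rw [if_neg (by omega : ¬ (u.val ≤ u.val - 3)), if_neg (by omega : ¬ (u.val = u.val - 2)),
            if_neg (by omega : ¬ (u.val = u.val - 1))]
          exact v4_eq _ _ _ _ rfl
      obtain ⟨hr, hub⟩ := hch
      have hlb := q4_dist_lb a c j hr
      omega
    by_cases huE : u.val < j + 4 + a
    · -- a-leaf u to c-leaf v : distance j+4
      have hu4 : j + 4 ≤ u.val := by omega
      have hd4 : d4 j a u.val v.val = j + 4 := by
        rw [d4_eval j a _ _ (by omega) (by omega) (by omega)]; omega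
      have hch : (G4Graph a c j).Reachable u v ∧ (G4Graph a c j).dist u v ≤ j + 4 := by
        apply chain' (fun k => v4 a c j
          (if k = 0 then u.val else if k ≤ j+1 then j+4-k else if k = j+2 then 0
           else if k = j+3 then 1 else v.val)) (j+4)
        · intro k hk
          rcases Nat.eq_zero_or_pos k with rfl | hkpos
          · show (G4Graph a c j).Adj (v4 a c j u.val)
              (v4 a c j (if 0+1 = 0 then u.val else if 0+1 ≤ j+1 then j+4-(0+1)
                else if 0+1 = j+2 then 0 else if 0+1 = j+3 then 1 else v.val))
            rw [if_neg (by omega : ¬ (0+1 = 0)), if_pos (by omega : 0+1 ≤ j+1),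
              show j+4-(0+1) = j+3 by omega]
            exact (adj4_aleaf a c j u.val (by omega) (by omega)).symm
          · show (G4Graph a c j).Adj
              (v4 a c j (if k = 0 then u.val else if k ≤ j+1 then j+4-k else if k = j+2 then 0
                else if k = j+3 then 1 else v.val))
              (v4 a c j (if k+1 = 0 then u.val else if k+1 ≤ j+1 then j+4-(k+1)
                else if k+1 = j+2 then 0 else if k+1 = j+3 then 1 else v.val))
            rw [if_neg (by omega : ¬ (k = 0)), if_neg (by omega : ¬ (k+1 = 0))]
            by_cases h1 : k + 1 ≤ j + 1
            · rw [if_pos (by omega : k ≤ j+1), if_pos h1,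
                show j+4-k = (j+4-(k+1))+1 by omega]
              exact (adj4_path a c j (j+4-(k+1)) (by omega) (by omega)).symm
            by_cases h2 : k + 1 = j + 2
            · rw [if_pos (by omega : k ≤ j+1), if_neg h1, if_pos h2,
                show j+4-k = 3 by omega]
              exact (adj4_03 a c j).symm
            by_cases h3 : k + 1 = j + 3
            · rw [if_neg (by omega : ¬ (k ≤ j+1)), if_pos (by omega : k = j+2),
                if_neg h1, if_neg h2, if_pos h3]
              exact adj4_01 a c j
            · rw [if_neg (by omega : ¬ (k ≤ j+1)), if_neg (by omega : ¬ (k = j+2)),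
                if_pos (by omega : k = j+3), if_neg h1, if_neg h2, if_neg h3]
              exact adj4_cleaf a c j v.val hvE (by omega)
        · show v4 a c j (if 0 = 0 then u.val else if 0 ≤ j+1 then j+4-0 else if 0 = j+2 then 0
            else if 0 = j+3 then 1 else v.val) = u
          exact v4_eq _ _ _ _ rfl
        · show v4 a c j (if j+4 = 0 then u.val else if j+4 ≤ j+1 then j+4-(j+4)
            else if j+4 = j+2 then 0 else if j+4 = j+3 then 1 else v.val) = v
          rw [if_neg (by omega : ¬ (j+4 = 0)), if_neg (by omega : ¬ (j+4 ≤ j+1)),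
            if_neg (by omega : ¬ (j+4 = j+2)), if_neg (by omega : ¬ (j+4 = j+3))]
          exact v4_eq _ _ _ _ rfl
      obtain ⟨hr, hub⟩ := hch
      have hlb := q4_dist_lb a c j hr
      omega
    · -- c-leaf u, c-leaf v
      push_neg at huE
      have hch : (G4Graph a c j).Reachable u v ∧ (G4Graph a c j).dist u v ≤ 2 := by
        apply chain' (fun k => v4 a c j
          (if k = 0 then u.val else if k = 1 then 1 else v.val)) 2
        · intro k hk
          interval_cases k
          · show (G4Graph a c j).Adj (v4 a c j u.val) (v4 a c j 1)
            exact (adj4_cleaf a c j u.val huE (by omega)).symm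
          · show (G4Graph a c j).Adj (v4 a c j 1) (v4 a c j v.val)
            exact adj4_cleaf a c j v.val hvE (by omega)
        · show v4 a c j u.val = u
          exact v4_eq _ _ _ _ rfl
        · show v4 a c j v.val = v
          exact v4_eq _ _ _ _ rfl
      obtain ⟨hr, hub⟩ := hch
      have hlb := two_le_dist hr (by intro hEq; rw [Fin.ext_iff] at hEq; omega) (by
        rw [adj4_iff]
        rintro ⟨hne, h|h⟩ <;> rcases h with h|h|h|h|h|h|h <;> omega)
      have hd4 : d4 j a u.val v.val = 2 := d4_eval' j a _ _ (Or.inr (Or.inr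
        ⟨by omega, huE, hvE⟩))
      omega

end WAux4


namespace WSum
open WAux WAux4

lemma sum_range_add' (f : ℕ → ℕ) (m n : ℕ) :
    ∑ i ∈ range (m+n), f i = (∑ i ∈ range m, f i) + ∑ i ∈ range n, f (m+i) := by
  induction n with
  | zero => simp
  | succ n ih =>
    have h : m + (n+1) = (m+n)+1 := by omega
    rw [h, Finset.sum_range_succ, ih, Finset.sum_range_succ]
    omega

lemma sum_desc (n : ℕ) : 2 * (∑ i ∈ range n, (n - i)) = n * (n+1) := by
  induction n with
  | zero => simp
  | succ n ih =>
    have h : ∑ i ∈ range (n+1), (n+1-i) = (∑ i ∈ range n, (n-i)) + (n+1) := by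
      rw [Finset.sum_range_succ]
      have hc : ∀ i ∈ range n, n+1-i = (n-i)+1 := by
        intro i hi; rw [Finset.mem_range] at hi; omega
      rw [Finset.sum_congr rfl hc, Finset.sum_add_distrib, Finset.sum_const, card_range,
        smul_eq_mul, mul_one]
      omega
    rw [h, Nat.mul_add, ih]
    ring

lemma sum_asc (s n : ℕ) : 2 * (∑ i ∈ range n, (s + i)) + n = 2*s*n + n*n := by
  induction n with
  | zero => simp
  | succ n ih =>
    rw [Finset.sum_range_succ, Nat.mul_add]
    have : 2*(s+n) = 2*s + 2*n := by ring
    rw [this]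
    nlinarith [ih]

lemma grid_succ (F : ℕ → ℕ → ℕ) (M : ℕ) (hsym : ∀ u v, F u v = F v u) (hdiag : F M M = 0) :
    ∑ u ∈ range (M+1), ∑ v ∈ range (M+1), F u v
      = (∑ u ∈ range M, ∑ v ∈ range M, F u v) + 2 * ∑ v ∈ range M, F M v := by
  rw [Finset.sum_range_succ]
  have h1 : ∑ u ∈ range M, ∑ v ∈ range (M+1), F u v
      = (∑ u ∈ range M, ∑ v ∈ range M, F u v) + ∑ u ∈ range M, F u M := by
    rw [← Finset.sum_add_distrib]
    apply Finset.sum_congr rfl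
    intro u hu
    rw [Finset.sum_range_succ]
  have h2 : ∑ u ∈ range M, F u M = ∑ v ∈ range M, F M v :=
    Finset.sum_congr rfl (fun u _ => hsym u M)
  have h3 : ∑ v ∈ range (M+1), F M v = (∑ v ∈ range M, F M v) + F M M :=
    Finset.sum_range_succ _ _
  rw [h1, h2, h3, hdiag]
  omega

lemma grid_even (F : ℕ → ℕ → ℕ) (hsym : ∀ u v, F u v = F v u) (hdiag : ∀ u, F u u = 0)
    (n : ℕ) : 2 ∣ ∑ u ∈ range n, ∑ v ∈ range n, F u v := by
  induction n with
  | zero => simp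
  | succ n ih =>
    rw [grid_succ F n hsym (hdiag n)]
    omega


end WSum


namespace WSum
open WAux WAux4

lemma d3_freeze (j u v : ℕ) (hu : u ≤ j+2) (hv : v ≤ j+2) : d3 (j+1) u v = d3 j u v := by
  simp only [d3, q3]; split_ifs <;> omega

lemma row3 (a j : ℕ) : 2 * ∑ v ∈ range (a+j+3), d3 j (a+j+3) v = j*j + 7*j + 10 + 4*a := by
  have hsplit : a+j+3 = 2 + ((j+1) + a) := by omega
  rw [hsplit, sum_range_add', sum_range_add']
  have h01 : ∑ i ∈ range 2, d3 j (2+((j+1)+a)) i = 2*(j+2) := by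
    rw [Finset.sum_range_succ, Finset.sum_range_succ, Finset.sum_range_zero]
    have e0 : d3 j (2+((j+1)+a)) 0 = j+2 := by simp only [d3, q3]; split_ifs <;> omega
    have e1 : d3 j (2+((j+1)+a)) 1 = j+2 := by simp only [d3, q3]; split_ifs <;> omega
    omega
  have hP : ∑ i ∈ range (j+1), d3 j (2+((j+1)+a)) (2+i)
      = ∑ i ∈ range (j+1), ((j+1) - i) := by
    apply Finset.sum_congr rfl
    intro i hi; rw [Finset.mem_range] at hi
    simp only [d3, q3]; split_ifs <;> omega
  have hL : ∑ i ∈ range a, d3 j (2+((j+1)+a)) (2+((j+1)+i)) = 2*a := by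
    have hc : ∀ i ∈ range a, d3 j (2+((j+1)+a)) (2+((j+1)+i)) = 2 := by
      intro i hi; rw [Finset.mem_range] at hi
      simp only [d3, q3]; split_ifs <;> omega
    rw [Finset.sum_congr rfl hc, Finset.sum_const, card_range, smul_eq_mul]
    omega
  rw [h01, hP, hL]
  have hd := sum_desc (j+1)
  have hexp : (j+1) * ((j+1)+1) = j*j + 3*j + 2 := by ring
  omega

lemma row3' (j : ℕ) : 2 * ∑ v ∈ range (j+3), d3 (j+1) (j+3) v = j*j + 7*j + 10 := by
  have hsplit : j+3 = 2 + (j+1) := by omega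
  rw [hsplit, sum_range_add']
  have h01 : ∑ i ∈ range 2, d3 (j+1) (2+(j+1)) i = 2*(j+2) := by
    rw [Finset.sum_range_succ, Finset.sum_range_succ, Finset.sum_range_zero]
    have e0 : d3 (j+1) (2+(j+1)) 0 = j+2 := by simp only [d3, q3]; split_ifs <;> omega
    have e1 : d3 (j+1) (2+(j+1)) 1 = j+2 := by simp only [d3, q3]; split_ifs <;> omega
    omega
  have hP : ∑ i ∈ range (j+1), d3 (j+1) (2+(j+1)) (2+i)
      = ∑ i ∈ range (j+1), ((j+1) - i) := by
    apply Finset.sum_congr rfl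
    intro i hi; rw [Finset.mem_range] at hi
    simp only [d3, q3]; split_ifs <;> omega
  rw [h01, hP]
  have hd := sum_desc (j+1)
  have hexp : (j+1) * ((j+1)+1) = j*j + 3*j + 2 := by ring
  omega

lemma S3_0 (j : ℕ) : 3 * (∑ u ∈ range (j+3), ∑ v ∈ range (j+3), d3 j u v)
    = j^3 + 9*j^2 + 20*j + 18 := by
  induction j with
  | zero => decide
  | succ j ih =>
    have hstep := grid_succ (d3 (j+1)) (j+3) (d3_comm (j+1)) (d3_self (j+1) (j+3))
    rw [show j+1+3 = (j+3)+1 by omega, hstep]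
    have hfreeze : ∑ u ∈ range (j+3), ∑ v ∈ range (j+3), d3 (j+1) u v
        = ∑ u ∈ range (j+3), ∑ v ∈ range (j+3), d3 j u v := by
      apply Finset.sum_congr rfl; intro u hu
      apply Finset.sum_congr rfl; intro v hv
      rw [Finset.mem_range] at hu hv
      exact d3_freeze j u v (by omega) (by omega)
    rw [hfreeze]
    have hrow := row3' j
    calc 3 * ((∑ u ∈ range (j+3), ∑ v ∈ range (j+3), d3 j u v)
          + 2 * ∑ v ∈ range (j+3), d3 (j+1) (j+3) v)
        = 3 * (∑ u ∈ range (j+3), ∑ v ∈ range (j+3), d3 j u v)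
          + 3 * (2 * ∑ v ∈ range (j+3), d3 (j+1) (j+3) v) := by ring
      _ = (j^3 + 9*j^2 + 20*j + 18) + 3 * (j*j + 7*j + 10) := by rw [ih, hrow]
      _ = (j+1)^3 + 9*(j+1)^2 + 20*(j+1) + 18 := by ring

lemma S3_poly (a j : ℕ) : 3 * (∑ u ∈ range (a+j+3), ∑ v ∈ range (a+j+3), d3 j u v)
    = j^3 + 9*j^2 + 20*j + 18 + 24*a + 21*a*j + 3*a*j^2 + 6*a^2 := by
  induction a with
  | zero => simpa using S3_0 j
  | succ a ih =>
    have hstep := grid_succ (d3 j) (a+j+3) (d3_comm j) (d3_self j _)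
    rw [show a+1+j+3 = (a+j+3)+1 by omega, hstep]
    have hrow := row3 a j
    calc 3 * ((∑ u ∈ range (a+j+3), ∑ v ∈ range (a+j+3), d3 j u v)
          + 2 * ∑ v ∈ range (a+j+3), d3 j (a+j+3) v)
        = 3 * (∑ u ∈ range (a+j+3), ∑ v ∈ range (a+j+3), d3 j u v)
          + 3 * (2 * ∑ v ∈ range (a+j+3), d3 j (a+j+3) v) := by ring
      _ = (j^3 + 9*j^2 + 20*j + 18 + 24*a + 21*a*j + 3*a*j^2 + 6*a^2)
          + 3 * (j*j + 7*j + 10 + 4*a) := by rw [ih, hrow]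
      _ = j^3 + 9*j^2 + 20*j + 18 + 24*(a+1) + 21*(a+1)*j + 3*(a+1)*j^2 + 6*(a+1)^2 := by
          ring

lemma sum_dist3 (a j : ℕ) :
    (∑ u : Fin (a+j+3), ∑ v : Fin (a+j+3), (G3Graph a j).dist u v)
      = ∑ u ∈ range (a+j+3), ∑ v ∈ range (a+j+3), d3 j u v := by
  calc (∑ u : Fin (a+j+3), ∑ v : Fin (a+j+3), (G3Graph a j).dist u v)
      = ∑ u : Fin (a+j+3), ∑ v : Fin (a+j+3), d3 j u.val v.val := by
        apply Finset.sum_congr rfl; intro u _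
        apply Finset.sum_congr rfl; intro v _
        exact dist3 a j u v
    _ = ∑ u : Fin (a+j+3), ∑ v ∈ range (a+j+3), d3 j u.val v := by
        apply Finset.sum_congr rfl; intro u _
        exact Fin.sum_univ_eq_sum_range (fun t => d3 j u.val t) (a+j+3)
    _ = ∑ u ∈ range (a+j+3), ∑ v ∈ range (a+j+3), d3 j u v :=
        Fin.sum_univ_eq_sum_range (fun t => ∑ v ∈ range (a+j+3), d3 j t v) (a+j+3)

lemma wiener3 (a j : ℕ) : 6 * wienerIndex (G3Graph a j)
    = j^3 + 9*j^2 + 20*j + 18 + 24*a + 21*a*j + 3*a*j^2 + 6*a^2 := by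
  obtain ⟨t, ht⟩ := grid_even (d3 j) (d3_comm j) (d3_self j) (a+j+3)
  have hpoly := S3_poly a j
  rw [ht] at hpoly
  simp only [wienerIndex]
  rw [sum_dist3, ht, Nat.mul_div_cancel_left t (by norm_num : 0 < 2)]
  have h6 : 6 * t = 3 * (2 * t) := by ring
  rw [h6, hpoly]

end WSum
namespace WSum
open WAux WAux4

lemma q4_cleaf (j a x : ℕ) (h1 : j+4+a ≤ x) : q4 j a x = 0 := by
  rw [q4, if_pos h1]

lemma q4_zero (j a : ℕ) (h1 : ¬ (j+4+a ≤ 0)) : q4 j a 0 = 2 := by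
  rw [q4, if_neg h1, if_pos rfl]

lemma q4_val (j a x : ℕ) (h1 : ¬ (j+4+a ≤ x)) (h2 : ¬ (x = 0)) : q4 j a x = min x (j+4) := by
  rw [q4, if_neg h1, if_neg h2]

lemma q4_freezeA (j a x : ℕ) (hx : x < j+4+a) : q4 j (a+1) x = q4 j a x := by
  rw [q4, q4, if_neg (show ¬ (j+4+(a+1) ≤ x) by omega), if_neg (show ¬ (j+4+a ≤ x) by omega)]

lemma d4_freezeA (j a u v : ℕ) (hu : u < j+4+a) (hv : v < j+4+a) :
    d4 j (a+1) u v = d4 j a u v := by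
  rw [d4, d4, q4_freezeA j a u hu, q4_freezeA j a v hv]
  have e2 : (u ≠ v ∧ j+4 ≤ u ∧ u < j+4+(a+1) ∧ j+4 ≤ v ∧ v < j+4+(a+1)) ↔
      (u ≠ v ∧ j+4 ≤ u ∧ u < j+4+a ∧ j+4 ≤ v ∧ v < j+4+a) := by omega
  have e3 : (u ≠ v ∧ j+4+(a+1) ≤ u ∧ j+4+(a+1) ≤ v) ↔
      (u ≠ v ∧ j+4+a ≤ u ∧ j+4+a ≤ v) := by omega
  rw [if_congr e2 rfl rfl, if_congr e3 rfl rfl]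

lemma q4_freezeJ (j x : ℕ) (hx : x ≤ j+3) : q4 (j+1) 0 x = q4 j 0 x := by
  rw [q4, q4, if_neg (show ¬ (j+1+4+0 ≤ x) by omega), if_neg (show ¬ (j+4+0 ≤ x) by omega)]
  by_cases h0 : x = 0
  · rw [if_pos h0, if_pos h0]
  · rw [if_neg h0, if_neg h0]; omega

lemma d4_freezeJ (j u v : ℕ) (hu : u ≤ j+3) (hv : v ≤ j+3) :
    d4 (j+1) 0 u v = d4 j 0 u v := by
  rw [d4, d4, q4_freezeJ j u hu, q4_freezeJ j v hv]
  have e2 : (u ≠ v ∧ j+1+4 ≤ u ∧ u < j+1+4+0 ∧ j+1+4 ≤ v ∧ v < j+1+4+0) ↔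
      (u ≠ v ∧ j+4 ≤ u ∧ u < j+4+0 ∧ j+4 ≤ v ∧ v < j+4+0) := by omega
  have e3 : (u ≠ v ∧ j+1+4+0 ≤ u ∧ j+1+4+0 ≤ v) ↔
      (u ≠ v ∧ j+4+0 ≤ u ∧ j+4+0 ≤ v) := by omega
  rw [if_congr e2 rfl rfl, if_congr e3 rfl rfl]

lemma row4c (a c j : ℕ) : 2 * ∑ v ∈ range (a+c+j+4), d4 j a (a+c+j+4) v
    = j*j + 7*j + 16 + 2*a*j + 8*a + 4*c := by
  have hsplit : a+c+j+4 = 3 + ((j+1) + (a + c)) := by omega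
  rw [hsplit, sum_range_add', sum_range_add']
  have h012 : ∑ i ∈ range 3, d4 j a (3+((j+1)+(a+c))) i = 5 := by
    rw [Finset.sum_range_succ, Finset.sum_range_succ, Finset.sum_range_succ,
      Finset.sum_range_zero]
    have hqM : q4 j a (3+((j+1)+(a+c))) = 0 := q4_cleaf j a _ (by omega)
    have e0 : d4 j a (3+((j+1)+(a+c))) 0 = 2 := by
      rw [d4_eval j a _ _ (by omega) (by omega) (by omega), hqM, q4_zero j a (by omega)]
      omega
    have e1 : d4 j a (3+((j+1)+(a+c))) 1 = 1 := by
      rw [d4_eval j a _ _ (by omega) (by omega) (by omega), hqM,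
        q4_val j a 1 (by omega) (by omega)]
      omega
    have e2 : d4 j a (3+((j+1)+(a+c))) 2 = 2 := by
      rw [d4_eval j a _ _ (by omega) (by omega) (by omega), hqM,
        q4_val j a 2 (by omega) (by omega)]
      omega
    omega
  have hP : ∑ i ∈ range (j+1), d4 j a (3+((j+1)+(a+c))) (3+i)
      = ∑ i ∈ range (j+1), (3 + i) := by
    apply Finset.sum_congr rfl
    intro i hi; rw [Finset.mem_range] at hi
    rw [d4_eval j a _ _ (by omega) (by omega) (by omega), q4_cleaf j a _ (by omega),
      q4_val j a (3+i) (by omega) (by omega)]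
    omega
  have hAC : ∑ i ∈ range (a+c), d4 j a (3+((j+1)+(a+c))) (3+((j+1)+i))
      = (∑ i ∈ range a, d4 j a (3+((j+1)+(a+c))) (3+((j+1)+i)))
        + ∑ i ∈ range c, d4 j a (3+((j+1)+(a+c))) (3+((j+1)+(a+i))) :=
    sum_range_add' (fun i => d4 j a (3+((j+1)+(a+c))) (3+((j+1)+i))) a c
  have hA : ∑ i ∈ range a, d4 j a (3+((j+1)+(a+c))) (3+((j+1)+i)) = a * (j+4) := by
    have hc : ∀ i ∈ range a, d4 j a (3+((j+1)+(a+c))) (3+((j+1)+i)) = j+4 := by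
      intro i hi; rw [Finset.mem_range] at hi
      rw [d4_eval j a _ _ (by omega) (by omega) (by omega), q4_cleaf j a _ (by omega),
        q4_val j a _ (by omega) (by omega)]
      omega
    rw [Finset.sum_congr rfl hc, Finset.sum_const, card_range, smul_eq_mul]
  have hC : ∑ i ∈ range c, d4 j a (3+((j+1)+(a+c))) (3+((j+1)+(a+i))) = 2*c := by
    have hc : ∀ i ∈ range c, d4 j a (3+((j+1)+(a+c))) (3+((j+1)+(a+i))) = 2 := by
      intro i hi; rw [Finset.mem_range] at hi
      exact d4_eval' j a _ _ (Or.inr (Or.inr ⟨by omega, by omega, by omega⟩))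
    rw [Finset.sum_congr rfl hc, Finset.sum_const, card_range, smul_eq_mul]
    omega
  rw [h012, hP, hAC, hA, hC]
  have hasc := sum_asc 3 (j+1)
  have hexp : (j+1) * (j+1) = j*j + 2*j + 1 := by ring
  have hexp2 : 2*(a*(j+4)) = 2*a*j + 8*a := by ring
  omega

lemma row4a (a j : ℕ) : 2 * ∑ v ∈ range (a+j+4), d4 j (a+1) (a+j+4) v
    = j*j + 9*j + 16 + 4*a := by
  have hsplit : a+j+4 = 3 + ((j+1) + a) := by omega
  rw [hsplit, sum_range_add', sum_range_add']
  have h012 : ∑ i ∈ range 3, d4 j (a+1) (3+((j+1)+a)) i = 3*j+7 := by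
    rw [Finset.sum_range_succ, Finset.sum_range_succ, Finset.sum_range_succ,
      Finset.sum_range_zero]
    have hqM : q4 j (a+1) (3+((j+1)+a)) = min (3+((j+1)+a)) (j+4) :=
      q4_val j (a+1) _ (by omega) (by omega)
    have e0 : d4 j (a+1) (3+((j+1)+a)) 0 = j+2 := by
      rw [d4_eval j (a+1) _ _ (by omega) (by omega) (by omega), hqM,
        q4_zero j (a+1) (by omega)]
      omega
    have e1 : d4 j (a+1) (3+((j+1)+a)) 1 = j+3 := by
      rw [d4_eval j (a+1) _ _ (by omega) (by omega) (by omega), hqM,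
        q4_val j (a+1) 1 (by omega) (by omega)]
      omega
    have e2 : d4 j (a+1) (3+((j+1)+a)) 2 = j+2 := by
      rw [d4_eval j (a+1) _ _ (by omega) (by omega) (by omega), hqM,
        q4_val j (a+1) 2 (by omega) (by omega)]
      omega
    omega
  have hP : ∑ i ∈ range (j+1), d4 j (a+1) (3+((j+1)+a)) (3+i)
      = ∑ i ∈ range (j+1), ((j+1) - i) := by
    apply Finset.sum_congr rfl
    intro i hi; rw [Finset.mem_range] at hi
    rw [d4_eval j (a+1) _ _ (by omega) (by omega) (by omega),
      q4_val j (a+1) _ (by omega) (by omega), q4_val j (a+1) (3+i) (by omega) (by omega)]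
    omega
  have hA : ∑ i ∈ range a, d4 j (a+1) (3+((j+1)+a)) (3+((j+1)+i)) = 2*a := by
    have hc : ∀ i ∈ range a, d4 j (a+1) (3+((j+1)+a)) (3+((j+1)+i)) = 2 := by
      intro i hi; rw [Finset.mem_range] at hi
      exact d4_eval' j (a+1) _ _ (Or.inr (Or.inl
        ⟨by omega, by omega, by omega, by omega, by omega⟩))
    rw [Finset.sum_congr rfl hc, Finset.sum_const, card_range, smul_eq_mul]
    omega
  rw [h012, hP, hA]
  have hd := sum_desc (j+1)
  have hexp : (j+1) * ((j+1)+1) = j*j + 3*j + 2 := by ring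
  omega

lemma row4j (j : ℕ) : 2 * ∑ v ∈ range (j+4), d4 (j+1) 0 (j+4) v = j*j + 9*j + 16 := by
  have hsplit : j+4 = 3 + (j+1) := by omega
  rw [hsplit, sum_range_add']
  have h012 : ∑ i ∈ range 3, d4 (j+1) 0 (3+(j+1)) i = 3*j+7 := by
    rw [Finset.sum_range_succ, Finset.sum_range_succ, Finset.sum_range_succ,
      Finset.sum_range_zero]
    have hqM : q4 (j+1) 0 (3+(j+1)) = min (3+(j+1)) (j+1+4) :=
      q4_val (j+1) 0 _ (by omega) (by omega)
    have e0 : d4 (j+1) 0 (3+(j+1)) 0 = j+2 := by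
      rw [d4_eval (j+1) 0 _ _ (by omega) (by omega) (by omega), hqM,
        q4_zero (j+1) 0 (by omega)]
      omega
    have e1 : d4 (j+1) 0 (3+(j+1)) 1 = j+3 := by
      rw [d4_eval (j+1) 0 _ _ (by omega) (by omega) (by omega), hqM,
        q4_val (j+1) 0 1 (by omega) (by omega)]
      omega
    have e2 : d4 (j+1) 0 (3+(j+1)) 2 = j+2 := by
      rw [d4_eval (j+1) 0 _ _ (by omega) (by omega) (by omega), hqM,
        q4_val (j+1) 0 2 (by omega) (by omega)]
      omega
    omega
  have hP : ∑ i ∈ range (j+1), d4 (j+1) 0 (3+(j+1)) (3+i)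
      = ∑ i ∈ range (j+1), ((j+1) - i) := by
    apply Finset.sum_congr rfl
    intro i hi; rw [Finset.mem_range] at hi
    rw [d4_eval (j+1) 0 _ _ (by omega) (by omega) (by omega),
      q4_val (j+1) 0 _ (by omega) (by omega), q4_val (j+1) 0 (3+i) (by omega) (by omega)]
    omega
  rw [h012, hP]
  have hd := sum_desc (j+1)
  have hexp : (j+1) * ((j+1)+1) = j*j + 3*j + 2 := by ring
  omega

lemma S4_j (j : ℕ) : 3 * (∑ u ∈ range (j+4), ∑ v ∈ range (j+4), d4 j 0 u v)
    = j^3 + 12*j^2 + 35*j + 48 := by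
  induction j with
  | zero => decide
  | succ j ih =>
    have hstep := grid_succ (d4 (j+1) 0) (j+4) (d4_comm (j+1) 0) (d4_self (j+1) 0 (j+4))
    rw [show j+1+4 = (j+4)+1 by omega, hstep]
    have hfreeze : ∑ u ∈ range (j+4), ∑ v ∈ range (j+4), d4 (j+1) 0 u v
        = ∑ u ∈ range (j+4), ∑ v ∈ range (j+4), d4 j 0 u v := by
      apply Finset.sum_congr rfl; intro u hu
      apply Finset.sum_congr rfl; intro v hv
      rw [Finset.mem_range] at hu hv
      exact d4_freezeJ j u v (by omega) (by omega)
    rw [hfreeze]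
    have hrow := row4j j
    calc 3 * ((∑ u ∈ range (j+4), ∑ v ∈ range (j+4), d4 j 0 u v)
          + 2 * ∑ v ∈ range (j+4), d4 (j+1) 0 (j+4) v)
        = 3 * (∑ u ∈ range (j+4), ∑ v ∈ range (j+4), d4 j 0 u v)
          + 3 * (2 * ∑ v ∈ range (j+4), d4 (j+1) 0 (j+4) v) := by ring
      _ = (j^3 + 12*j^2 + 35*j + 48) + 3 * (j*j + 9*j + 16) := by rw [ih, hrow]
      _ = (j+1)^3 + 12*(j+1)^2 + 35*(j+1) + 48 := by ring

lemma S4_a (a j : ℕ) : 3 * (∑ u ∈ range (a+j+4), ∑ v ∈ range (a+j+4), d4 j a u v)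
    = j^3 + 12*j^2 + 35*j + 48 + 42*a + 27*a*j + 3*a*j^2 + 6*a^2 := by
  induction a with
  | zero => simpa using S4_j j
  | succ a ih =>
    have hstep := grid_succ (d4 j (a+1)) (a+j+4) (d4_comm j (a+1)) (d4_self j (a+1) _)
    rw [show a+1+j+4 = (a+j+4)+1 by omega, hstep]
    have hfreeze : ∑ u ∈ range (a+j+4), ∑ v ∈ range (a+j+4), d4 j (a+1) u v
        = ∑ u ∈ range (a+j+4), ∑ v ∈ range (a+j+4), d4 j a u v := by
      apply Finset.sum_congr rfl; intro u hu
      apply Finset.sum_congr rfl; intro v hv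
      rw [Finset.mem_range] at hu hv
      exact d4_freezeA j a u v (by omega) (by omega)
    rw [hfreeze]
    have hrow := row4a a j
    calc 3 * ((∑ u ∈ range (a+j+4), ∑ v ∈ range (a+j+4), d4 j a u v)
          + 2 * ∑ v ∈ range (a+j+4), d4 j (a+1) (a+j+4) v)
        = 3 * (∑ u ∈ range (a+j+4), ∑ v ∈ range (a+j+4), d4 j a u v)
          + 3 * (2 * ∑ v ∈ range (a+j+4), d4 j (a+1) (a+j+4) v) := by ring
      _ = (j^3 + 12*j^2 + 35*j + 48 + 42*a + 27*a*j + 3*a*j^2 + 6*a^2)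
          + 3 * (j*j + 9*j + 16 + 4*a) := by rw [ih, hrow]
      _ = j^3 + 12*j^2 + 35*j + 48 + 42*(a+1) + 27*(a+1)*j + 3*(a+1)*j^2 + 6*(a+1)^2 := by
          ring

lemma S4_poly (a c j : ℕ) :
    3 * (∑ u ∈ range (a+c+j+4), ∑ v ∈ range (a+c+j+4), d4 j a u v)
    = j^3 + 12*j^2 + 35*j + 48 + 42*a + 27*a*j + 3*a*j^2 + 6*a^2
      + 42*c + 21*c*j + 3*c*j^2 + 6*c^2 + 24*a*c + 6*a*c*j := by
  induction c with
  | zero => simpa using S4_a a j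
  | succ c ih =>
    have hstep := grid_succ (d4 j a) (a+c+j+4) (d4_comm j a) (d4_self j a _)
    rw [show a+(c+1)+j+4 = (a+c+j+4)+1 by omega, hstep]
    have hrow := row4c a c j
    calc 3 * ((∑ u ∈ range (a+c+j+4), ∑ v ∈ range (a+c+j+4), d4 j a u v)
          + 2 * ∑ v ∈ range (a+c+j+4), d4 j a (a+c+j+4) v)
        = 3 * (∑ u ∈ range (a+c+j+4), ∑ v ∈ range (a+c+j+4), d4 j a u v)
          + 3 * (2 * ∑ v ∈ range (a+c+j+4), d4 j a (a+c+j+4) v) := by ring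
      _ = (j^3 + 12*j^2 + 35*j + 48 + 42*a + 27*a*j + 3*a*j^2 + 6*a^2
          + 42*c + 21*c*j + 3*c*j^2 + 6*c^2 + 24*a*c + 6*a*c*j)
          + 3 * (j*j + 7*j + 16 + 2*a*j + 8*a + 4*c) := by rw [ih, hrow]
      _ = j^3 + 12*j^2 + 35*j + 48 + 42*a + 27*a*j + 3*a*j^2 + 6*a^2
          + 42*(c+1) + 21*(c+1)*j + 3*(c+1)*j^2 + 6*(c+1)^2 + 24*a*(c+1) + 6*a*(c+1)*j := by
          ring

lemma sum_dist4 (a c j : ℕ) :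
    (∑ u : Fin (a+c+j+4), ∑ v : Fin (a+c+j+4), (G4Graph a c j).dist u v)
      = ∑ u ∈ range (a+c+j+4), ∑ v ∈ range (a+c+j+4), d4 j a u v := by
  calc (∑ u : Fin (a+c+j+4), ∑ v : Fin (a+c+j+4), (G4Graph a c j).dist u v)
      = ∑ u : Fin (a+c+j+4), ∑ v : Fin (a+c+j+4), d4 j a u.val v.val := by
        apply Finset.sum_congr rfl; intro u _
        apply Finset.sum_congr rfl; intro v _
        exact dist4 a c j u v
    _ = ∑ u : Fin (a+c+j+4), ∑ v ∈ range (a+c+j+4), d4 j a u.val v := by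
        apply Finset.sum_congr rfl; intro u _
        exact Fin.sum_univ_eq_sum_range (fun t => d4 j a u.val t) (a+c+j+4)
    _ = ∑ u ∈ range (a+c+j+4), ∑ v ∈ range (a+c+j+4), d4 j a u v :=
        Fin.sum_univ_eq_sum_range (fun t => ∑ v ∈ range (a+c+j+4), d4 j a t v) (a+c+j+4)

lemma wiener4 (a c j : ℕ) : 6 * wienerIndex (G4Graph a c j)
    = j^3 + 12*j^2 + 35*j + 48 + 42*a + 27*a*j + 3*a*j^2 + 6*a^2
      + 42*c + 21*c*j + 3*c*j^2 + 6*c^2 + 24*a*c + 6*a*c*j := by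
  obtain ⟨t, ht⟩ := grid_even (d4 j a) (d4_comm j a) (d4_self j a) (a+c+j+4)
  have hpoly := S4_poly a c j
  rw [ht] at hpoly
  simp only [wienerIndex]
  rw [sum_dist4, ht, Nat.mul_div_cancel_left t (by norm_num : 0 < 2)]
  have h6 : 6 * t = 3 * (2 * t) := by ring
  rw [h6, hpoly]

end WSum


theorem stmt12 (n m : ℕ) (hm : 2 ≤ m) (hn : 2 * m + 1 ≤ n) (hodd : Odd n)
    (D : ℚ)
    (hD : D = (wienerIndex (G4Graph ((n - 2*m + 1)/2) ((n - 2*m - 1)/2) (2*m - 4)) : ℚ)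
        - (wienerIndex (G3Graph (n - 2*m) (2*m - 3)) : ℚ)) :
    D = (n:ℚ) + 2*(m:ℚ)^3 + (n:ℚ)*(m:ℚ) + (1/2)*(m:ℚ)*(n:ℚ)^2 - (1/2)*(n:ℚ)^2
        - (7/2)*(m:ℚ) - 2*(n:ℚ)*(m:ℚ)^2 + 5/2 ∧
    (∀ k : ℕ, n = 2*m + k →
      D = 1 + (1/2) * ((k:ℚ) - 3) * ((k:ℚ) + 1) * ((m:ℚ) - 1)) ∧
    (3 ≤ n - 2*m → 0 < D) ∧
    (n - 2*m = 1 → D < 0) := by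
  obtain ⟨t, ht⟩ : ∃ t, n - 2*m = 2*t + 1 := by
    obtain ⟨s, hs⟩ := hodd
    exact ⟨s - m, by omega⟩
  set p := m - 2 with hp
  have hm2 : m = p + 2 := by omega
  have hn2 : n = 2*p + 2*t + 5 := by omega
  rw [show (n - 2*m + 1)/2 = t+1 by omega, show (n - 2*m - 1)/2 = t by omega,
    show 2*m - 4 = 2*p by omega, show n - 2*m = 2*t+1 by omega,
    show 2*m - 3 = 2*p+1 by omega] at hD
  have h4 := WSum.wiener4 (t+1) t (2*p)
  have h3 := WSum.wiener3 (2*t+1) (2*p+1)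
  have h4q : (6:ℚ) * (wienerIndex (G4Graph (t+1) t (2*p)) : ℚ)
      = (2*(p:ℚ))^3 + 12*(2*(p:ℚ))^2 + 35*(2*(p:ℚ)) + 48
        + 42*((t:ℚ)+1) + 27*((t:ℚ)+1)*(2*(p:ℚ)) + 3*((t:ℚ)+1)*(2*(p:ℚ))^2 + 6*((t:ℚ)+1)^2
        + 42*(t:ℚ) + 21*(t:ℚ)*(2*(p:ℚ)) + 3*(t:ℚ)*(2*(p:ℚ))^2 + 6*(t:ℚ)^2
        + 24*((t:ℚ)+1)*(t:ℚ) + 6*((t:ℚ)+1)*(t:ℚ)*(2*(p:ℚ)) := by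
    exact_mod_cast congrArg (fun x : ℕ => (x:ℚ)) h4
  have h3q : (6:ℚ) * (wienerIndex (G3Graph (2*t+1) (2*p+1)) : ℚ)
      = (2*(p:ℚ)+1)^3 + 9*(2*(p:ℚ)+1)^2 + 20*(2*(p:ℚ)+1) + 18
        + 24*(2*(t:ℚ)+1) + 21*(2*(t:ℚ)+1)*(2*(p:ℚ)+1) + 3*(2*(t:ℚ)+1)*(2*(p:ℚ)+1)^2
        + 6*(2*(t:ℚ)+1)^2 := by
    exact_mod_cast congrArg (fun x : ℕ => (x:ℚ)) h3
  have hDform : D = 1 + 2*((t:ℚ)-1)*((t:ℚ)+1)*((p:ℚ)+1) := by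
    rw [hD]; linarith [h4q, h3q]
  have hnq : (n:ℚ) = 2*(p:ℚ) + 2*(t:ℚ) + 5 := by exact_mod_cast congrArg (fun x : ℕ => (x:ℚ)) hn2
  have hmq : (m:ℚ) = (p:ℚ) + 2 := by exact_mod_cast congrArg (fun x : ℕ => (x:ℚ)) hm2
  refine ⟨?_, ?_, ?_, ?_⟩
  · rw [hDform, hnq, hmq]; ring
  · intro k hk
    have hkt : k = 2*t + 1 := by omega
    have hkq : (k:ℚ) = 2*(t:ℚ) + 1 := by exact_mod_cast congrArg (fun x : ℕ => (x:ℚ)) hkt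
    rw [hDform, hkq, hmq]; ring
  · intro h3le
    have ht1 : 1 ≤ t := by omega
    have htq : (1:ℚ) ≤ (t:ℚ) := by exact_mod_cast ht1
    have hpq : (0:ℚ) ≤ (p:ℚ) := by positivity
    have hnn : (0:ℚ) ≤ 2*((t:ℚ)-1)*((t:ℚ)+1)*((p:ℚ)+1) := by
      have := mul_nonneg (mul_nonneg (by linarith : (0:ℚ) ≤ (t:ℚ)-1)
        (by linarith : (0:ℚ) ≤ (t:ℚ)+1)) (by linarith : (0:ℚ) ≤ (p:ℚ)+1)
      linarith
    rw [hDform]; linarith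
  · intro h1eq
    have ht0 : t = 0 := by omega
    subst ht0
    have hpq : (0:ℚ) ≤ (p:ℚ) := by positivity
    rw [hDform]
    push_cast
    linarith
end

section
/- Let m ≥ 2 and let n ≥ 2m be even. Then W(G^4_{(n−2m)/2, (n−2m)/2, 2m−4}) − W(G^3_{n−2m, 2m−3}) = 4 + n + 2m³ + nm + (1/2)mn² − (1/2)n² − 4m − 2nm²; equivalently, writing n = 2m+k with k ≥ 0 even, this difference equals 2 + (1/2)(k²−2k−4)(m−1). In particular the difference is ≤ 0 for k ∈ {0,2} (with equality if and only if m = 2) and strictly positive for k ≥ 4. -/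
open SimpleGraph Finset

namespace SimpleGraph

variable {V : Type*} (G : SimpleGraph V)

theorem dist_eq_of_descent (d : V → V → ℕ) (hd_self : ∀ u, d u u = 0)
    (hd_adj : ∀ u x v, G.Adj u x → d u v ≤ d x v + 1)
    (hd_desc : ∀ u v, u ≠ v → ∃ x, G.Adj u x ∧ d x v < d u v) (u v : V) :
    G.dist u v = d u v := by
  have le_length : ∀ {u} (p : G.Walk u v), d u v ≤ p.length := by
    intro u p
    induction p with
    | nil => simp [hd_self]
    | cons hadj _ ih => simpa using (hd_adj _ _ _ hadj).trans (by omega)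
  have reach : ∀ n u, d u v = n → G.Reachable u v ∧ G.dist u v ≤ n := by
    intro n
    induction n using Nat.strong_induction_on with
    | _ n ih =>
      intro u hu
      by_cases huv : u = v
      · subst huv; simp
      obtain ⟨x, hux, hx⟩ := hd_desc u v huv
      obtain ⟨hr, hle⟩ := ih _ (hu ▸ hx) x rfl
      have := hux.reachable.dist_triangle_left v
      rw [dist_eq_one_iff_adj.mpr hux] at this
      exact ⟨hux.reachable.trans hr, by omega⟩
  obtain ⟨hr, hle⟩ := reach _ u rfl
  obtain ⟨p, hp⟩ := hr.exists_walk_length_eq_dist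
  have := le_length p
  omega

open Classical in
noncomputable def layerDist (h : V → ℕ) (u v : V) : ℕ :=
  if u = v then 0 else if h u = h v then (if G.Adj u v then 1 else 2) else Nat.dist (h u) (h v)

theorem layerDist_le_of_adj {h : V → ℕ} (h_adj : ∀ u v, G.Adj u v → h u ≤ h v + 1) {u x : V}
    (hux : G.Adj u x) (v : V) : G.layerDist h u v ≤ G.layerDist h x v + 1 := by
  have := h_adj u x hux
  have := h_adj x u hux.symm
  unfold layerDist
  by_cases hxv : x = v
  · subst hxv
    simp only [hux, if_true, Nat.dist]
    split_ifs <;> omega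
  simp only [Nat.dist]
  split_ifs <;> omega

theorem exists_adj_dist_add_one_eq {h : V → ℕ} (adj_of_succ : ∀ u v, h v = h u + 1 → G.Adj u v)
    (h_ordConnected : (Set.range h).OrdConnected) {u : V} {t : ℕ} (ht : t ∈ Set.range h)
    (hne : t ≠ h u) : ∃ w, G.Adj u w ∧ Nat.dist (h w) t + 1 = Nat.dist (h u) t := by
  obtain ⟨y, rfl⟩ := ht
  rcases Nat.lt_or_gt_of_ne hne with hlt | hlt
  · obtain ⟨w, hw⟩ := h_ordConnected.out ⟨y, rfl⟩ ⟨u, rfl⟩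
      (show h u - 1 ∈ Set.Icc (h y) (h u) from ⟨by omega, by omega⟩)
    exact ⟨w, (adj_of_succ w u (by omega)).symm, by simp only [Nat.dist]; omega⟩
  · obtain ⟨w, hw⟩ := h_ordConnected.out ⟨u, rfl⟩ ⟨y, rfl⟩
      (show h u + 1 ∈ Set.Icc (h u) (h y) from ⟨by omega, by omega⟩)
    exact ⟨w, adj_of_succ u w hw, by simp only [Nat.dist]; omega⟩

theorem exists_adj_layerDist_lt {h : V → ℕ} (h_adj : ∀ u v, G.Adj u v → h u ≤ h v + 1)
    (adj_of_succ : ∀ u v, h v = h u + 1 → G.Adj u v)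
    (h_ordConnected : (Set.range h).OrdConnected) (h_nontrivial : (Set.range h).Nontrivial)
    {u v : V} (huv : u ≠ v) : ∃ x, G.Adj u x ∧ G.layerDist h x v < G.layerDist h u v := by
  have adj_of_dist_eq_one : ∀ {x y}, Nat.dist (h x) (h y) = 1 → G.Adj x y := fun {x y} hxy => by
    simp only [Nat.dist] at hxy
    rcases Nat.lt_or_gt_of_ne (show h x ≠ h y by omega) with hlt | hlt
    · exact adj_of_succ x y (by omega)
    · exact (adj_of_succ y x (by omega)).symm
  unfold layerDist
  simp only [if_neg huv]
  by_cases hadj : G.Adj u v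
  · refine ⟨v, hadj, ?_⟩
    simp only [if_true, hadj, Nat.dist]
    split_ifs <;> omega
  by_cases hsame : h u = h v
  · obtain ⟨t, ht, hne⟩ := h_nontrivial.exists_ne (h u)
    obtain ⟨w, huw, hw⟩ := G.exists_adj_dist_add_one_eq adj_of_succ h_ordConnected ht hne
    have := h_adj u w huw
    have := h_adj w u huw.symm
    have hwv : G.Adj w v := adj_of_dist_eq_one (by simp only [Nat.dist] at hw ⊢; omega)
    refine ⟨w, huw, ?_⟩
    simp only [hwv, hadj, if_true, if_false, Nat.dist]
    split_ifs <;> omega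
  obtain ⟨w, huw, hw⟩ :=
    G.exists_adj_dist_add_one_eq adj_of_succ h_ordConnected ⟨v, rfl⟩ (Ne.symm hsame)
  have hdist : Nat.dist (h u) (h v) ≠ 1 := fun h1 => hadj (adj_of_dist_eq_one h1)
  refine ⟨w, huw, ?_⟩
  simp only [hsame, if_false, Nat.dist] at hw hdist ⊢
  split_ifs <;> omega

theorem dist_eq_layerDist {h : V → ℕ} (h_adj : ∀ u v, G.Adj u v → h u ≤ h v + 1)
    (adj_of_succ : ∀ u v, h v = h u + 1 → G.Adj u v)
    (h_ordConnected : (Set.range h).OrdConnected) (h_nontrivial : (Set.range h).Nontrivial)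
    (u v : V) : G.dist u v = G.layerDist h u v :=
  G.dist_eq_of_descent (G.layerDist h) (fun _ => if_pos rfl)
    (fun _ _ _ hux => G.layerDist_le_of_adj h_adj hux _)
    (fun _ _ huv => G.exists_adj_layerDist_lt h_adj adj_of_succ h_ordConnected h_nontrivial huv) u v

end SimpleGraph

def pairSum (f : ℕ → ℕ → ℕ) (N : ℕ) : ℕ := ∑ u ∈ range N, ∑ v ∈ range u, f u v

theorem pairSum_succ (f : ℕ → ℕ → ℕ) (N : ℕ) :
    pairSum f (N + 1) = pairSum f N + ∑ v ∈ range N, f N v :=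
  sum_range_succ _ _

theorem pairSum_congr {f g : ℕ → ℕ → ℕ} {N : ℕ} (h : ∀ u < N, ∀ v < u, f u v = g u v) :
    pairSum f N = pairSum g N :=
  sum_congr rfl fun u hu => sum_congr rfl fun v hv => h u (mem_range.1 hu) v (mem_range.1 hv)

theorem sum_range_sum_range_eq_two_mul_pairSum {f : ℕ → ℕ → ℕ} (hf_symm : ∀ u v, f u v = f v u)
    (hf_self : ∀ u, f u u = 0) (N : ℕ) :
    ∑ u ∈ range N, ∑ v ∈ range N, f u v = 2 * pairSum f N := by
  induction N with
  | zero => simp [pairSum]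
  | succ N ih =>
    simp only [pairSum, sum_range_succ, sum_add_distrib, hf_self, add_zero, hf_symm N] at ih ⊢
    omega

theorem wienerIndex_eq_pairSum {N : ℕ} (G : SimpleGraph (Fin N)) {f : ℕ → ℕ → ℕ}
    (hf : ∀ u v : Fin N, G.dist u v = f u v) (hf_symm : ∀ u v, f u v = f v u)
    (hf_self : ∀ u, f u u = 0) :
    wienerIndex G = pairSum f N := by
  have hsum : ∑ u : Fin N, ∑ v : Fin N, G.dist u v = ∑ u ∈ range N, ∑ v ∈ range N, f u v := by
    simp only [hf, Fin.sum_univ_eq_sum_range (fun u => ∑ v ∈ range N, f u v),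
      Fin.sum_univ_eq_sum_range (f _)]
  rw [wienerIndex, hsum, sum_range_sum_range_eq_two_mul_pairSum hf_symm hf_self,
    Nat.mul_div_cancel_left _ two_pos]

def height3 (j u : ℕ) : ℕ := if u ≤ 1 then 1 else if u ≤ j + 2 then u else j + 3

-- The triangle edge `01` is the only edge inside a layer.
def dist3 (j u v : ℕ) : ℕ :=
  if u = v then 0
  else if height3 j u = height3 j v then (if height3 j u = 1 then 1 else 2)
  else Nat.dist (height3 j u) (height3 j v)

theorem dist3_comm (j u v : ℕ) : dist3 j u v = dist3 j v u := by
  simp only [dist3, eq_comm (a := u), eq_comm (a := height3 j u), Nat.dist_comm (height3 j u)]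
  split_ifs <;> simp_all

namespace G3Graph

variable {a j : ℕ}

theorem height_le_of_adj {u v : Fin (a + j + 3)} (h : (G3Graph a j).Adj u v) :
    height3 j u ≤ height3 j v + 1 := by
  simp only [G3Graph, fromRel_adj, height3] at h ⊢
  split_ifs <;> omega

theorem adj_of_height_eq_succ {u v : Fin (a + j + 3)} (h : height3 j v = height3 j u + 1) :
    (G3Graph a j).Adj u v := by
  rw [G3Graph, fromRel_adj]
  refine ⟨fun e => by simp [e] at h, Or.inl ?_⟩
  simp only [height3] at h
  split_ifs at h <;> omega

theorem adj_iff_of_height_eq {u v : Fin (a + j + 3)} (hne : u ≠ v)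
    (h : height3 j u = height3 j v) : (G3Graph a j).Adj u v ↔ height3 j u = 1 := by
  simp only [height3] at h ⊢
  rw [G3Graph, fromRel_adj]
  refine ⟨fun ⟨_, h'⟩ => by split_ifs at h ⊢ <;> omega, fun h1 => ⟨hne, ?_⟩⟩
  rw [Fin.ext_iff.ne] at hne
  rcases (show (u.val = 0 ∧ v.val = 1) ∨ (v.val = 0 ∧ u.val = 1) by
    split_ifs at h h1 <;> omega) with h01 | h01
  · exact Or.inl (Or.inl h01)
  · exact Or.inr (Or.inl h01)

theorem dist_eq (u v : Fin (a + j + 3)) : (G3Graph a j).dist u v = dist3 j u v := by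
  have h_ordConnected : (Set.range fun u : Fin (a + j + 3) => height3 j u).OrdConnected := by
    refine Set.ordConnected_of_Ioo ?_
    rintro _ ⟨u, rfl⟩ _ ⟨v, rfl⟩ - t ⟨hut, htv⟩
    simp only [height3] at hut htv
    refine ⟨⟨t, ?_⟩, ?_⟩
    · split_ifs at htv <;> omega
    · simp only [height3]
      split_ifs at hut htv ⊢ <;> omega
  have h_nontrivial : (Set.range fun u : Fin (a + j + 3) => height3 j u).Nontrivial :=
    ⟨_, ⟨⟨0, by omega⟩, rfl⟩, _, ⟨⟨2, by omega⟩, rfl⟩, by simp [height3]⟩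
  rw [(G3Graph a j).dist_eq_layerDist (fun _ _ => height_le_of_adj)
    (fun _ _ => adj_of_height_eq_succ) h_ordConnected h_nontrivial, layerDist, dist3]
  by_cases huv : u = v
  · simp [huv]
  by_cases hh : height3 j u = height3 j v
  · simp only [adj_iff_of_height_eq huv hh]
    simp only [huv, Fin.ext_iff.not.mp huv, hh, if_false, if_true]
  · simp only [huv, Fin.ext_iff.not.mp huv, hh, if_false]

end G3Graph

theorem height3_succ {j u : ℕ} (hu : u ≤ j + 3) : height3 (j + 1) u = height3 j u := by
  simp only [height3]
  split_ifs <;> omega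

theorem two_mul_sum_dist3_first_pendant (j : ℕ) :
    2 * ∑ v ∈ range (j + 3), dist3 j (j + 3) v = j ^ 2 + 7 * j + 10 := by
  induction j with
  | zero => decide
  | succ j ih =>
    have hrow : ∀ v ∈ range (j + 3), dist3 (j + 1) (j + 4) v = dist3 j (j + 3) v + 1 := by
      intro v hv
      rw [mem_range] at hv
      simp only [dist3, height3, Nat.dist]
      split_ifs <;> omega
    have hlast : dist3 (j + 1) (j + 4) (j + 3) = 1 := by
      simp only [dist3, height3, Nat.dist]
      split_ifs <;> omega
    rw [show j + 1 + 3 = j + 3 + 1 by ring, sum_range_succ, sum_congr rfl hrow, sum_add_distrib,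
      sum_const, card_range, smul_eq_mul, hlast]
    linarith

theorem two_mul_sum_dist3_pendant (j i : ℕ) :
    2 * ∑ v ∈ range (j + 3 + i), dist3 j (j + 3 + i) v = j ^ 2 + 7 * j + 10 + 4 * i := by
  induction i with
  | zero => exact two_mul_sum_dist3_first_pendant j
  | succ i ih =>
    have hrow : ∀ v ∈ range (j + 3 + i), dist3 j (j + 3 + i + 1) v = dist3 j (j + 3 + i) v := by
      intro v hv
      rw [mem_range] at hv
      simp only [dist3, height3, Nat.dist]
      split_ifs <;> omega
    have hlast : dist3 j (j + 3 + i + 1) (j + 3 + i) = 2 := by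
      simp only [dist3, height3, Nat.dist]
      split_ifs <;> omega
    rw [← add_assoc, sum_range_succ, sum_congr rfl hrow, hlast]
    linarith

theorem six_mul_pairSum_dist3_path (j : ℕ) :
    6 * pairSum (dist3 j) (j + 3) = j ^ 3 + 9 * j ^ 2 + 20 * j + 18 := by
  induction j with
  | zero => decide
  | succ j ih =>
    have hpath : pairSum (dist3 (j + 1)) (j + 3 + 1) = pairSum (dist3 j) (j + 3 + 1) :=
      pairSum_congr fun u hu v hv => by
        simp only [dist3, height3_succ (show u ≤ j + 3 by omega),
          height3_succ (show v ≤ j + 3 by omega)]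
    rw [show j + 1 + 3 = j + 3 + 1 by ring, hpath, pairSum_succ]
    have := two_mul_sum_dist3_first_pendant j
    linarith

theorem six_mul_pairSum_dist3 (j a : ℕ) :
    6 * pairSum (dist3 j) (j + 3 + a)
      = 18 + 20 * j + 9 * j ^ 2 + j ^ 3 + 24 * a + 21 * a * j + 3 * a * j ^ 2 + 6 * a ^ 2 := by
  induction a with
  | zero => have := six_mul_pairSum_dist3_path j; linarith
  | succ a ih =>
    rw [← add_assoc, pairSum_succ]
    have := two_mul_sum_dist3_pendant j a
    linarith

theorem wienerIndex_G3Graph (a j : ℕ) :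
    6 * wienerIndex (G3Graph a j)
      = 18 + 20 * j + 9 * j ^ 2 + j ^ 3 + 24 * a + 21 * a * j + 3 * a * j ^ 2 + 6 * a ^ 2 := by
  rw [wienerIndex_eq_pairSum _ G3Graph.dist_eq (dist3_comm j) (fun _ => if_pos rfl),
    show a + j + 3 = j + 3 + a by ring, six_mul_pairSum_dist3]

def height4 (j a u : ℕ) : ℕ :=
  if u = 0 then 2 else if u ≤ j + 3 then u else if u < j + 4 + a then j + 4 else 0

def dist4 (j a u v : ℕ) : ℕ :=
  if u = v then 0
  else if height4 j a u = height4 j a v then 2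
  else Nat.dist (height4 j a u) (height4 j a v)

theorem dist4_comm (j a u v : ℕ) : dist4 j a u v = dist4 j a v u := by
  simp only [dist4, eq_comm (a := u), eq_comm (a := height4 j a u), Nat.dist_comm (height4 j a u)]

namespace G4Graph

variable {a c j : ℕ}

theorem height_le_of_adj {u v : Fin (a + c + j + 4)} (h : (G4Graph a c j).Adj u v) :
    height4 j a u ≤ height4 j a v + 1 := by
  simp only [G4Graph, fromRel_adj, height4] at h ⊢
  split_ifs <;> omega

theorem adj_of_height_eq_succ {u v : Fin (a + c + j + 4)}
    (h : height4 j a v = height4 j a u + 1) : (G4Graph a c j).Adj u v := by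
  rw [G4Graph, fromRel_adj]
  refine ⟨fun e => by simp [e] at h, ?_⟩
  simp only [height4] at h
  by_cases hdown : j + 4 + a ≤ u.val ∨ (u.val = 1 ∧ v.val = 0)
  · right
    split_ifs at h <;> omega
  · left
    split_ifs at h <;> omega

theorem not_adj_of_height_eq {u v : Fin (a + c + j + 4)} (h : height4 j a u = height4 j a v) :
    ¬(G4Graph a c j).Adj u v := by
  simp only [G4Graph, fromRel_adj, height4] at h ⊢
  split_ifs at h <;> omega

theorem dist_eq (u v : Fin (a + c + j + 4)) : (G4Graph a c j).dist u v = dist4 j a u v := by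
  have h_ordConnected : (Set.range fun u : Fin (a + c + j + 4) => height4 j a u).OrdConnected := by
    refine Set.ordConnected_of_Ioo ?_
    rintro _ ⟨u, rfl⟩ _ ⟨v, rfl⟩ - t ⟨hut, htv⟩
    simp only [height4] at hut htv
    refine ⟨⟨t, ?_⟩, ?_⟩
    · split_ifs at htv <;> omega
    · simp only [height4]
      split_ifs at hut htv ⊢ <;> omega
  have h_nontrivial : (Set.range fun u : Fin (a + c + j + 4) => height4 j a u).Nontrivial :=
    ⟨_, ⟨⟨0, by omega⟩, rfl⟩, _, ⟨⟨1, by omega⟩, rfl⟩, by simp [height4]⟩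
  rw [(G4Graph a c j).dist_eq_layerDist (fun _ _ => height_le_of_adj)
    (fun _ _ => adj_of_height_eq_succ) h_ordConnected h_nontrivial, layerDist, dist4]
  by_cases huv : u = v
  · simp [huv]
  by_cases hh : height4 j a u = height4 j a v
  · simp only [huv, Fin.ext_iff.not.mp huv, hh, not_adj_of_height_eq hh, if_false, if_true]
  · simp only [huv, Fin.ext_iff.not.mp huv, hh, if_false]

end G4Graph

theorem height4_path {j a u : ℕ} (h₁ : 1 ≤ u) (h₂ : u ≤ j + 3) : height4 j a u = u := by
  simp only [height4]
  split_ifs <;> omega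

theorem height4_pendant {j a u : ℕ} (h₁ : j + 4 ≤ u) (h₂ : u < j + 4 + a) :
    height4 j a u = j + 4 := by
  simp only [height4]
  split_ifs <;> omega

theorem height4_opposite_pendant {j a u : ℕ} (h : j + 4 + a ≤ u) : height4 j a u = 0 := by
  simp only [height4]
  split_ifs <;> omega

theorem height4_le_of_le {j a u : ℕ} (hu : u ≤ j + 3) : height4 j a u ≤ j + 3 := by
  simp only [height4]
  split_ifs <;> omega

theorem height4_succ_left {j a u : ℕ} (hu : u ≤ j + 3) : height4 (j + 1) a u = height4 j a u := by
  simp only [height4]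
  split_ifs <;> omega

theorem height4_succ_right {j a u : ℕ} (hu : u < j + 4 + a) :
    height4 j (a + 1) u = height4 j a u := by
  simp only [height4]
  split_ifs <;> omega

theorem height4_succ_path {j u : ℕ} (hu : u ≤ j + 4) : height4 (j + 1) 0 u = height4 j 1 u := by
  simp only [height4]
  split_ifs <;> omega

theorem dist4_of_lt {j a u v : ℕ} (h : v < u) :
    dist4 j a u v = if height4 j a u = height4 j a v then 2
      else Nat.dist (height4 j a u) (height4 j a v) :=
  if_neg h.ne'

theorem two_mul_sum_dist4_first_pendant (j : ℕ) :
    2 * ∑ v ∈ range (j + 4), dist4 j 1 (j + 4) v = j ^ 2 + 9 * j + 16 := by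
  induction j with
  | zero => decide
  | succ j ih =>
    have hrow : ∀ v ∈ range (j + 4), dist4 (j + 1) 1 (j + 5) v = dist4 j 1 (j + 4) v + 1 := by
      intro v hv
      rw [mem_range] at hv
      have := height4_le_of_le (a := 1) (show v ≤ j + 3 by omega)
      simp (disch := omega) only [dist4_of_lt, height4_pendant, height4_succ_left, Nat.dist]
      split_ifs <;> omega
    have hlast : dist4 (j + 1) 1 (j + 5) (j + 4) = 1 := by
      simp (disch := omega) only [dist4_of_lt, height4_pendant, height4_path, if_neg, Nat.dist]
      omega
    rw [show j + 1 + 4 = j + 4 + 1 by ring, sum_range_succ, sum_congr rfl hrow, sum_add_distrib,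
      sum_const, card_range, smul_eq_mul, hlast]
    linarith

theorem two_mul_sum_dist4_pendant (j i : ℕ) :
    2 * ∑ v ∈ range (j + 4 + i), dist4 j (i + 1) (j + 4 + i) v = j ^ 2 + 9 * j + 16 + 4 * i := by
  induction i with
  | zero => exact two_mul_sum_dist4_first_pendant j
  | succ i ih =>
    have hrow : ∀ v ∈ range (j + 4 + i),
        dist4 j (i + 1 + 1) (j + 4 + i + 1) v = dist4 j (i + 1) (j + 4 + i) v := by
      intro v hv
      rw [mem_range] at hv
      simp (disch := omega) only [dist4_of_lt, height4_pendant, height4_succ_right]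
    have hlast : dist4 j (i + 1 + 1) (j + 4 + i + 1) (j + 4 + i) = 2 := by
      simp (disch := omega) only [dist4_of_lt, height4_pendant, if_true]
    rw [← add_assoc, sum_range_succ, sum_congr rfl hrow, hlast]
    linarith

theorem two_mul_sum_dist4_first_opposite_pendant (j a : ℕ) :
    2 * ∑ v ∈ range (j + 4 + a), dist4 j a (j + 4 + a) v
      = j ^ 2 + 7 * j + 16 + 2 * a * j + 8 * a := by
  induction a with
  | zero =>
    induction j with
    | zero => decide
    | succ j ih =>
      have hrow : ∀ v ∈ range (j + 4), dist4 (j + 1) 0 (j + 5) v = dist4 j 0 (j + 4) v := by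
        intro v hv
        rw [mem_range] at hv
        simp (disch := omega) only [dist4_of_lt, height4_opposite_pendant, height4_succ_left]
      have hlast : dist4 (j + 1) 0 (j + 5) (j + 4) = j + 4 := by
        simp (disch := omega) only [dist4_of_lt, height4_opposite_pendant, height4_path, if_neg,
          Nat.dist]
        omega
      rw [show j + 1 + 4 + 0 = j + 4 + 1 by ring, sum_range_succ, sum_congr rfl hrow, hlast]
      simp only [add_zero] at ih
      linarith
  | succ a ih =>
    have hrow : ∀ v ∈ range (j + 4 + a),
        dist4 j (a + 1) (j + 4 + a + 1) v = dist4 j a (j + 4 + a) v := by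
      intro v hv
      rw [mem_range] at hv
      simp (disch := omega) only [dist4_of_lt, height4_opposite_pendant, height4_succ_right]
    have hlast : dist4 j (a + 1) (j + 4 + a + 1) (j + 4 + a) = j + 4 := by
      simp (disch := omega) only [dist4_of_lt, height4_opposite_pendant, height4_pendant, if_neg,
        Nat.dist]
      omega
    rw [← add_assoc, sum_range_succ, sum_congr rfl hrow, hlast]
    linarith

theorem two_mul_sum_dist4_opposite_pendant (j a i : ℕ) :
    2 * ∑ v ∈ range (j + 4 + a + i), dist4 j a (j + 4 + a + i) v
      = j ^ 2 + 7 * j + 16 + 2 * a * j + 8 * a + 4 * i := by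
  induction i with
  | zero => exact two_mul_sum_dist4_first_opposite_pendant j a
  | succ i ih =>
    have hrow : ∀ v ∈ range (j + 4 + a + i),
        dist4 j a (j + 4 + a + i + 1) v = dist4 j a (j + 4 + a + i) v := by
      intro v hv
      rw [mem_range] at hv
      simp (disch := omega) only [dist4_of_lt, height4_opposite_pendant]
    have hlast : dist4 j a (j + 4 + a + i + 1) (j + 4 + a + i) = 2 := by
      simp (disch := omega) only [dist4_of_lt, height4_opposite_pendant, if_true]
    rw [← add_assoc, sum_range_succ, sum_congr rfl hrow, hlast]
    linarith

theorem pairSum_dist4_succ_right (j a : ℕ) :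
    pairSum (dist4 j (a + 1)) (j + 4 + (a + 1))
      = pairSum (dist4 j a) (j + 4 + a)
        + ∑ v ∈ range (j + 4 + a), dist4 j (a + 1) (j + 4 + a) v := by
  rw [← add_assoc, pairSum_succ]
  congr 1
  refine pairSum_congr fun u hu v hv => ?_
  simp only [dist4, height4_succ_right hu, height4_succ_right (hv.trans hu)]

theorem six_mul_pairSum_dist4_path (j : ℕ) :
    6 * pairSum (dist4 j 0) (j + 4) = j ^ 3 + 12 * j ^ 2 + 35 * j + 48 := by
  induction j with
  | zero => decide
  | succ j ih =>
    have hpath : pairSum (dist4 (j + 1) 0) (j + 4 + (0 + 1))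
        = pairSum (dist4 j (0 + 1)) (j + 4 + (0 + 1)) :=
      pairSum_congr fun u hu v hv => by
        simp only [dist4, height4_succ_path (show u ≤ j + 4 by omega),
          height4_succ_path (show v ≤ j + 4 by omega)]
    rw [show j + 1 + 4 = j + 4 + (0 + 1) by ring, hpath, pairSum_dist4_succ_right]
    have := two_mul_sum_dist4_first_pendant j
    simp only [add_zero] at ih ⊢
    linarith

theorem six_mul_pairSum_dist4_pendant (j a : ℕ) :
    6 * pairSum (dist4 j a) (j + 4 + a)
      = 48 + 35 * j + 12 * j ^ 2 + j ^ 3 + 42 * a + 27 * a * j + 3 * a * j ^ 2 + 6 * a ^ 2 := by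
  induction a with
  | zero => have := six_mul_pairSum_dist4_path j; simp only [add_zero]; linarith
  | succ a ih =>
    rw [pairSum_dist4_succ_right]
    have := two_mul_sum_dist4_pendant j a
    linarith

theorem six_mul_pairSum_dist4 (j a c : ℕ) :
    6 * pairSum (dist4 j a) (j + 4 + a + c)
      = 48 + 35 * j + 12 * j ^ 2 + j ^ 3 + 42 * c + 21 * c * j + 3 * c * j ^ 2 + 6 * c ^ 2
        + 42 * a + 27 * a * j + 3 * a * j ^ 2 + 24 * a * c + 6 * a * c * j + 6 * a ^ 2 := by
  induction c with
  | zero => have := six_mul_pairSum_dist4_pendant j a; simp only [add_zero]; linarith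
  | succ c ih =>
    rw [← add_assoc, pairSum_succ]
    have := two_mul_sum_dist4_opposite_pendant j a c
    linarith

theorem wienerIndex_G4Graph (a c j : ℕ) :
    6 * wienerIndex (G4Graph a c j)
      = 48 + 35 * j + 12 * j ^ 2 + j ^ 3 + 42 * c + 21 * c * j + 3 * c * j ^ 2 + 6 * c ^ 2
        + 42 * a + 27 * a * j + 3 * a * j ^ 2 + 24 * a * c + 6 * a * c * j + 6 * a ^ 2 := by
  rw [wienerIndex_eq_pairSum _ G4Graph.dist_eq (dist4_comm j a) (fun _ => if_pos rfl),
    show a + c + j + 4 = j + 4 + a + c by ring, six_mul_pairSum_dist4]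

theorem wienerIndex_G4Graph_sub_G3Graph (t b : ℕ) :
    (wienerIndex (G4Graph t t (2 * b)) : ℚ) - wienerIndex (G3Graph (2 * t) (2 * b + 1))
      = 2 + (2 * t ^ 2 - 2 * t - 2) * (b + 1) := by
  have h3 := congrArg (Nat.cast : ℕ → ℚ) (wienerIndex_G3Graph (2 * t) (2 * b + 1))
  have h4 := congrArg (Nat.cast : ℕ → ℚ) (wienerIndex_G4Graph t t (2 * b))
  push_cast at h3 h4
  linarith

theorem stmt13 (n m : ℕ) (hm : 2 ≤ m) (hn : 2 * m ≤ n) (heven : Even n)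
    (D : ℚ)
    (hD : D = (wienerIndex (G4Graph ((n - 2*m)/2) ((n - 2*m)/2) (2*m - 4)) : ℚ)
        - (wienerIndex (G3Graph (n - 2*m) (2*m - 3)) : ℚ)) :
    D = 4 + (n:ℚ) + 2*(m:ℚ)^3 + (n:ℚ)*(m:ℚ) + (1/2)*(m:ℚ)*(n:ℚ)^2 - (1/2)*(n:ℚ)^2
        - 4*(m:ℚ) - 2*(n:ℚ)*(m:ℚ)^2 ∧
    (∀ k : ℕ, n = 2*m + k →
      D = 2 + (1/2) * ((k:ℚ)^2 - 2*(k:ℚ) - 4) * ((m:ℚ) - 1)) ∧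
    (n - 2*m = 0 ∨ n - 2*m = 2 → D ≤ 0 ∧ (D = 0 ↔ m = 2)) ∧
    (4 ≤ n - 2*m → 0 < D) := by
  obtain ⟨b, rfl⟩ : ∃ b, m = b + 2 := ⟨m - 2, by omega⟩
  obtain ⟨t, rfl⟩ : ∃ t, n = 2 * (b + 2) + 2 * t := by
    obtain ⟨r, hr⟩ := heven
    exact ⟨(n - 2 * (b + 2)) / 2, by omega⟩
  rw [show 2 * (b + 2) + 2 * t - 2 * (b + 2) = 2 * t by omega, Nat.mul_div_cancel_left _ two_pos,
    show 2 * (b + 2) - 4 = 2 * b by omega, show 2 * (b + 2) - 3 = 2 * b + 1 by omega,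
    wienerIndex_G4Graph_sub_G3Graph] at hD
  subst hD
  refine ⟨by push_cast; ring, fun k hk => ?_, fun ht => ?_, fun ht => ?_⟩
  · obtain rfl : k = 2 * t := by omega
    push_cast
    ring
  · have hval : (2 : ℚ) + (2 * t ^ 2 - 2 * t - 2) * (b + 1) = -2 * b := by
      obtain rfl | rfl : t = 0 ∨ t = 1 := by omega
      all_goals push_cast; ring
    rw [hval]
    exact ⟨by linarith [b.cast_nonneg (α := ℚ)], by simp⟩
  · have ht : (2 : ℚ) ≤ t := by exact_mod_cast (show 2 ≤ t by omega)
    have hcoeff : (0 : ℚ) ≤ 2 * t ^ 2 - 2 * t - 2 := by nlinarith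
    have := mul_nonneg hcoeff (by positivity : (0 : ℚ) ≤ b + 1)
    linarith
end
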